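/- arXiv:2505.03232 — 10 statements merged into one kernel-verified Lean document; each statement's English description precedes it below -/
import Mathlib

section
/- Let Ω be a set equipped with the σ-algebra of all subsets of Ω, let p_1, …, p_n (n ≥ 1) be countably additive, nonatomic probability measures on Ω, let X be a set, let f : Ω → X be a function with finite range, let x ∈ X, and let α ∈ (0,1). Then there exists a function g : Ω → X with finite range such that for every i ∈ {1,…,n}: p_i(g⁻¹(x)) = α · p_i(f⁻¹(x)) + (1 − α), and p_i(g⁻¹(y)) = α · p_i(f⁻¹(y)) for every y ∈ X with y ≠ x. -/
/-!
Splitting every fibre `f ⁻¹' {y}` in proportion `α` simultaneously for all `p i` yields a set `s`;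
the act that follows `f` on `s` and yields `x` off `s` is the pseudo-mixed act. The simultaneous
split is Lyapunov's convexity theorem, in Lindenstrauss' argument. With `μ = ∑ p i`,
the functionals `f ↦ ∫ h f` on `L¹(μ)` with `0 ≤ h ≤ 1` form a weak-* compact set, and the
constraints `∫ h dp i = α p i univ` cut out a nonempty compact subset, which has an extreme point
by Krein–Milman. That `h` is an indicator: otherwise `{0 < h < 1}` contains `n + 1` disjoint
pieces of positive measure, some nontrivial combination of which is invisible to the `n`
constraints, and perturbing `h` by it in both directions stays inside the set.
-/

open MeasureTheory Set Function
open scoped ENNReal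

namespace MeasureTheory.Measure

variable {Ω : Type*} [MeasurableSpace Ω]

def IsNonatomic (μ : Measure Ω) : Prop :=
  ∀ s, MeasurableSet s → 0 < μ s → ∃ t ⊆ s, MeasurableSet t ∧ 0 < μ t ∧ μ t < μ s

namespace IsNonatomic

variable {μ : Measure Ω}

lemma restrict (hμ : μ.IsNonatomic) {u : Set Ω} (hu : MeasurableSet u) :
    (μ.restrict u).IsNonatomic := by
  intro s hs hpos
  rw [restrict_apply hs] at hpos ⊢
  obtain ⟨t, hts, ht, ht0, hlt⟩ := hμ (s ∩ u) (hs.inter hu) hpos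
  have htu : t ∩ u = t := inter_eq_left.mpr (hts.trans inter_subset_right)
  exact ⟨t, hts.trans inter_subset_left, ht, by rwa [restrict_apply ht, htu],
    by rwa [restrict_apply ht, htu]⟩

lemma sum {ι : Type*} [Finite ι] {μ : ι → Measure Ω} [∀ i, IsFiniteMeasure (μ i)]
    (hμ : ∀ i, (μ i).IsNonatomic) : (Measure.sum μ).IsNonatomic := by
  intro s hs hpos
  obtain ⟨i, hi⟩ : ∃ i, 0 < μ i s := by
    simpa [Measure.sum_apply _ hs, pos_iff_ne_zero] using hpos
  obtain ⟨t, hts, ht, ht0, hlt⟩ := hμ i s hs hi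
  have hle := Measure.le_sum μ i
  refine ⟨t, hts, ht, ht0.trans_le (hle t), ?_⟩
  rw [← measure_sdiff_add_inter s ht, inter_eq_right.mpr hts, add_comm]
  exact ENNReal.lt_add_right (measure_ne_top _ t)
    ((tsub_pos_of_lt hlt).trans_le (le_measure_sdiff.trans (hle _))).ne'

lemma exists_pairwise_disjoint (hμ : μ.IsNonatomic) (m : ℕ) {s : Set Ω}
    (hs : MeasurableSet s) (hpos : 0 < μ s) :
    ∃ t : Fin m → Set Ω, (∀ j, t j ⊆ s ∧ MeasurableSet (t j) ∧ 0 < μ (t j)) ∧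
      Pairwise (Disjoint on t) := by
  induction m generalizing s with
  | zero => exact ⟨Fin.elim0, fun j => j.elim0, fun i => i.elim0⟩
  | succ m ih =>
    obtain ⟨b, hbs, hb, hb0, hlt⟩ := hμ s hs hpos
    obtain ⟨t, ht, hdisj⟩ := ih (hs.diff hb) ((tsub_pos_of_lt hlt).trans_le le_measure_sdiff)
    have hbt : ∀ j, Disjoint b (t j) := fun j => disjoint_sdiff_right.mono_right (ht j).1
    refine ⟨Fin.cons b t, fun j => ?_, fun i j hij => ?_⟩
    · induction j using Fin.cases
      · exact ⟨hbs, hb, hb0⟩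
      · exact ⟨(ht _).1.trans sdiff_subset, (ht _).2⟩
    · induction i using Fin.cases <;> induction j using Fin.cases
      · exact absurd rfl hij
      · exact hbt _
      · exact (hbt _).symm
      · exact hdisj (fun h => hij (congrArg _ h))

end IsNonatomic

end MeasureTheory.Measure

lemma exists_abs_le_one_sum_smul_eq_zero {ι κ : Type*} [Fintype ι] [Fintype κ]
    (h : Fintype.card ι < Fintype.card κ) (v : κ → ι → ℝ) :
    ∃ a : κ → ℝ, (∀ j, |a j| ≤ 1) ∧ ∑ j, a j • v j = 0 ∧ a ≠ 0 := by
  obtain ⟨a, hav, j, hj⟩ := Fintype.not_linearIndependent_iff.1 fun hli : LinearIndependent ℝ v =>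
    by simpa using h.trans_le hli.fintype_card_le_finrank
  have ha : a ≠ 0 := fun h0 => hj (by simp [h0])
  refine ⟨‖a‖⁻¹ • a, fun j => ?_, ?_, smul_ne_zero (inv_ne_zero (norm_ne_zero_iff.2 ha)) ha⟩
  · have hpos : 0 < ‖a‖ := norm_pos_iff.2 ha
    rw [Pi.smul_apply, smul_eq_mul, abs_mul, abs_of_pos (inv_pos.2 hpos), inv_mul_le_iff₀ hpos,
      mul_one, ← Real.norm_eq_abs]
    exact norm_le_pi_norm a j
  · simp only [Pi.smul_apply, smul_eq_mul, mul_smul, ← Finset.smul_sum, hav, smul_zero]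

lemma sum_mul_indicator_of_mem {κ Ω : Type*} [Fintype κ] {t : κ → Set Ω}
    (ht : Pairwise (Disjoint on t)) (a : κ → ℝ) (w : Ω → ℝ) {x : Ω} {j : κ} (hx : x ∈ t j) :
    ∑ j', a j' * (t j').indicator w x = a j * w x := by
  rw [Finset.sum_eq_single j (fun j' _ hj' => by
    rw [indicator_of_notMem ((ht hj').symm.notMem_of_mem_left hx), mul_zero]) (by simp),
    indicator_of_mem hx]

lemma abs_sum_mul_indicator_le {κ Ω : Type*} [Fintype κ] {t : κ → Set Ω}
    (ht : Pairwise (Disjoint on t)) {a : κ → ℝ} (ha : ∀ j, |a j| ≤ 1) (w : Ω → ℝ) (x : Ω) :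
    |∑ j, a j * (t j).indicator w x| ≤ |w x| := by
  by_cases hx : ∃ j, x ∈ t j
  · obtain ⟨j, hj⟩ := hx
    rw [sum_mul_indicator_of_mem ht a w hj, abs_mul]
    exact mul_le_of_le_one_left (abs_nonneg _) (ha j)
  · push Not at hx
    simp [indicator_of_notMem (hx _)]

namespace MeasureTheory

variable {Ω : Type*} [MeasurableSpace Ω] (μ : Measure Ω)

/-- The functionals `f ↦ ∫ h f` with `0 ≤ h ≤ 1`, described without reference to `L^∞` so
that weak-* closedness is evident. -/
def dualInterval : Set (WeakDual ℝ (Lp ℝ 1 μ)) :=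
  {φ | ∀ f : Lp ℝ 1 μ, 0 ≤ f → φ f ∈ Icc 0 (L1.integral f)}

noncomputable def l1Pairing : Lp ℝ ∞ μ →L[ℝ] StrongDual ℝ (Lp ℝ 1 μ) :=
  (ContinuousLinearMap.mul ℝ ℝ).lpPairing μ ∞ 1

variable {μ}

lemma l1Pairing_apply (g : Lp ℝ ∞ μ) (f : Lp ℝ 1 μ) :
    l1Pairing μ g f = ∫ x, g x * f x ∂μ :=
  ContinuousLinearMap.lpPairing_eq_integral _ g f

lemma L1.integral_eq_norm_of_nonneg {f : Lp ℝ 1 μ} (hf : 0 ≤ f) : L1.integral f = ‖f‖ := by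
  rw [L1.integral_eq_integral, L1.norm_eq_integral_norm]
  refine integral_congr_ae ?_
  filter_upwards [(Lp.coeFn_nonneg f).2 hf] with x hx
  exact (Real.norm_of_nonneg hx).symm

lemma norm_apply_le_of_mem_dualInterval {φ : WeakDual ℝ (Lp ℝ 1 μ)} (hφ : φ ∈ dualInterval μ)
    (f : Lp ℝ 1 μ) : ‖φ f‖ ≤ ‖f‖ := by
  obtain ⟨hp0, hp1⟩ := hφ f⁺ (posPart_nonneg f)
  obtain ⟨hn0, hn1⟩ := hφ f⁻ (negPart_nonneg f)
  have hsum : L1.integral f⁺ + L1.integral f⁻ = ‖f‖ := by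
    rw [← L1.integral_add, posPart_add_negPart, L1.integral_eq_norm_of_nonneg (abs_nonneg f),
      norm_abs_eq_norm]
  have hsplit : φ f = φ f⁺ - φ f⁻ := by rw [← map_sub, posPart_sub_negPart]
  rw [hsplit, Real.norm_eq_abs, abs_le]
  constructor <;> linarith

variable (μ)

lemma isClosed_dualInterval : IsClosed (dualInterval μ) := by
  simp only [dualInterval, ofPred_forall]
  exact isClosed_iInter fun f => isClosed_iInter fun _ =>
    isClosed_Icc.preimage (WeakDual.eval_continuous f)

lemma isCompact_dualInterval : IsCompact (dualInterval μ) := by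
  refine (WeakDual.isCompact_closedBall (0 : StrongDual ℝ (Lp ℝ 1 μ)) 1).of_isClosed_subset
    (isClosed_dualInterval μ) fun φ hφ => ?_
  rw [mem_preimage, mem_closedBall_zero_iff]
  exact ContinuousLinearMap.opNorm_le_bound _ zero_le_one fun f => by
    simpa using norm_apply_le_of_mem_dualInterval hφ f

variable {μ}

lemma l1Pairing_mem_dualInterval {g : Lp ℝ ∞ μ} (hg : ∀ᵐ x ∂μ, g x ∈ Icc 0 1) :
    StrongDual.toWeakDual (l1Pairing μ g) ∈ dualInterval μ := by
  intro f hf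
  have hf' := (Lp.coeFn_nonneg f).2 hf
  change l1Pairing μ g f ∈ _
  rw [l1Pairing_apply, L1.integral_eq_integral]
  have hprod : 0 ≤ᵐ[μ] fun x => g x * f x := by
    filter_upwards [hg, hf'] with x hgx hfx using mul_nonneg hgx.1 hfx
  refine ⟨integral_nonneg_of_ae hprod,
    integral_mono_of_nonneg hprod (L1.integrable_coeFn f) ?_⟩
  filter_upwards [hg, hf'] with x hgx hfx using mul_le_of_le_one_left hfx hgx.2

lemma l1Pairing_indicatorConstLp (g : Lp ℝ ∞ μ) {s : Set Ω} (hs : MeasurableSet s)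
    (hμs : μ s ≠ ∞) : l1Pairing μ g (indicatorConstLp 1 hs hμs 1) = ∫ x in s, g x ∂μ := by
  rw [l1Pairing_apply, ← integral_indicator hs]
  refine integral_congr_ae ?_
  filter_upwards [indicatorConstLp_coeFn (p := 1) (hs := hs) (hμs := hμs) (c := (1 : ℝ))]
    with x hx
  by_cases hxs : x ∈ s <;> simp [hx, hxs]

lemma coeFn_sum_smul_indicator_toLp {κ : Type*} [Fintype κ] {p : ℝ≥0∞} (w : Lp ℝ p μ)
    {t : κ → Set Ω} (ht : ∀ j, MeasurableSet (t j)) (a : κ → ℝ) :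
    ∀ᵐ x ∂μ, (∑ j, a j • ((Lp.memLp w).indicator (ht j)).toLp _ : Lp ℝ p μ) x =
      ∑ j, a j * (t j).indicator w x := by
  have hpiece : ∀ᵐ x ∂μ, ∀ j, ((Lp.memLp w).indicator (ht j)).toLp _ x = (t j).indicator w x :=
    ae_all_iff.2 fun j => MemLp.coeFn_toLp _
  have hsmul : ∀ᵐ x ∂μ, ∀ j, (a j • ((Lp.memLp w).indicator (ht j)).toLp _ : Lp ℝ p μ) x =
      a j * ((Lp.memLp w).indicator (ht j)).toLp _ x :=
    ae_all_iff.2 fun j => Lp.coeFn_smul _ _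
  filter_upwards [Lp.coeFn_finsetSum Finset.univ
    (fun j => a j • ((Lp.memLp w).indicator (ht j)).toLp _), hpiece, hsmul] with x hsum hp hs
  rw [hsum, Finset.sum_apply]
  exact Finset.sum_congr rfl fun j _ => by rw [hs, hp]

variable [IsFiniteMeasure μ]

lemma indicatorConstLp_one_nonneg {s : Set Ω} (hs : MeasurableSet s) :
    0 ≤ indicatorConstLp 1 hs (measure_ne_top μ s) (1 : ℝ) := by
  rw [← Lp.coeFn_nonneg]
  filter_upwards [indicatorConstLp_coeFn (p := 1) (hs := hs) (hμs := measure_ne_top μ s)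
    (c := (1 : ℝ))] with x hx
  rw [hx]
  exact indicator_nonneg (fun _ _ => zero_le_one) x

lemma exists_measure_of_mem_dualInterval {φ : WeakDual ℝ (Lp ℝ 1 μ)} (hφ : φ ∈ dualInterval μ) :
    ∃ ν : Measure Ω, ν ≤ μ ∧ ∀ s (hs : MeasurableSet s),
      φ (indicatorConstLp 1 hs (measure_ne_top μ s) 1) = ν.real s := by
  classical
  let m : Set Ω → ℝ := fun s =>
    if hs : MeasurableSet s then φ (indicatorConstLp 1 hs (measure_ne_top μ s) 1) else 0
  have hm : ∀ s (hs : MeasurableSet s), m s ∈ Icc 0 (μ.real s) := fun s hs => by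
    simpa [m, hs, L1.integral_eq_integral, integral_indicatorConstLp] using
      hφ _ (indicatorConstLp_one_nonneg hs)
  -- Being dominated by `μ`, the finitely additive `m` is countably additive.
  let V : VectorMeasure Ω ℝ := VectorMeasure.of_additive_of_le_measure (μ := μ) m
    (fun s => by
      by_cases hs : MeasurableSet s
      · rw [Real.enorm_of_nonneg (hm s hs).1, ← ofReal_measureReal]
        exact ENNReal.ofReal_le_ofReal (hm s hs).2
      · simp [m, hs])
    (fun s t hs ht hst => by
      simp only [m, dif_pos hs, dif_pos ht, dif_pos (hs.union ht)]
      rw [indicatorConstLp_disjoint_union hs ht _ _ hst, map_add])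
    (fun s hs => dif_neg hs)
  refine ⟨Measure.ofMeasurable (fun s _ => ENNReal.ofReal (m s)) (by simp [m]) fun f hf hd => ?_,
    ?_, fun s hs => ?_⟩
  · have hsum : HasSum (fun i => m (f i)) (m (⋃ i, f i)) := V.hasSum_of_disjoint_iUnion hf hd
    rw [← hsum.tsum_eq, ENNReal.ofReal_tsum_of_nonneg (fun i => (hm _ (hf i)).1) hsum.summable]
  · refine Measure.le_iff.2 fun s hs => ?_
    rw [Measure.ofMeasurable_apply s hs, ← ofReal_measureReal]
    exact ENNReal.ofReal_le_ofReal (hm s hs).2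
  · rw [measureReal_def, Measure.ofMeasurable_apply s hs, ENNReal.toReal_ofReal (hm s hs).1]
    simp [m, hs]

lemma exists_l1Pairing_eq_of_mem_dualInterval {φ : WeakDual ℝ (Lp ℝ 1 μ)}
    (hφ : φ ∈ dualInterval μ) :
    ∃ g : Lp ℝ ∞ μ, (∀ᵐ x ∂μ, g x ∈ Icc 0 1) ∧ StrongDual.toWeakDual (l1Pairing μ g) = φ := by
  obtain ⟨ν, hνμ, hφν⟩ := exists_measure_of_mem_dualInterval hφ
  have : IsFiniteMeasure ν := isFiniteMeasure_of_le μ hνμ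
  set H : Ω → ℝ := fun x => (ν.rnDeriv μ x).toReal
  have hH : ∀ᵐ x ∂μ, H x ∈ Icc 0 1 := by
    filter_upwards [Measure.rnDeriv_le_one_of_le hνμ] with x hx
    exact ⟨ENNReal.toReal_nonneg, ENNReal.toReal_le_of_le_ofReal zero_le_one (by simpa using hx)⟩
  have hHmem : MemLp H ∞ μ := memLp_top_of_bound
    (Measure.measurable_rnDeriv ν μ).ennreal_toReal.aestronglyMeasurable 1
    (by filter_upwards [hH] with x hx; rw [Real.norm_of_nonneg hx.1]; exact hx.2)
  refine ⟨hHmem.toLp H, by filter_upwards [hHmem.coeFn_toLp, hH] with x hx hHx; rwa [hx], ?_⟩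
  refine DFunLike.ext _ _ fun f => ?_
  refine Lp.induction ENNReal.one_ne_top (motive := fun f => l1Pairing μ (hHmem.toLp H) f = φ f)
    (fun c s hs hμs => ?_) (fun f g _ _ _ hf hg => by simp only [map_add, hf, hg])
    (isClosed_eq (l1Pairing μ _).continuous φ.continuous) f
  have hsmul :
      indicatorConstLp 1 hs hμs.ne c = c • indicatorConstLp 1 hs (measure_ne_top μ s) 1 := by
    refine Lp.ext ?_
    filter_upwards [indicatorConstLp_coeFn (p := 1) (hs := hs) (hμs := hμs.ne) (c := c),
      Lp.coeFn_smul c (indicatorConstLp 1 hs (measure_ne_top μ s) (1 : ℝ)),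
      indicatorConstLp_coeFn (p := 1) (hs := hs) (hμs := measure_ne_top μ s) (c := (1 : ℝ))]
      with x h1 h2 h3
    by_cases hx : x ∈ s <;> simp [h1, h2, h3, hx]
  simp only [Lp.simpleFunc.coe_indicatorConst, hsmul, map_smul, hφν s hs]
  rw [l1Pairing_indicatorConstLp,
    ← Measure.setIntegral_toReal_rnDeriv (Measure.absolutelyContinuous_of_le hνμ)]
  exact congrArg _ (integral_congr_ae (ae_restrict_of_ae hHmem.coeFn_toLp))

lemma Measure.IsNonatomic.exists_l1Pairing_ne_zero {ι : Type*} [Fintype ι] (hμ : μ.IsNonatomic)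
    (e : ι → Lp ℝ 1 μ) (w : Lp ℝ ∞ μ) (hw : 0 < μ {x | 0 < w x}) :
    ∃ k : Lp ℝ ∞ μ, l1Pairing μ k ≠ 0 ∧ (∀ i, l1Pairing μ k (e i) = 0) ∧
      ∀ᵐ x ∂μ, |k x| ≤ |w x| := by
  obtain ⟨t, ht, hdisj⟩ := hμ.exists_pairwise_disjoint (Fintype.card ι + 1)
    (measurableSet_lt measurable_const (Lp.stronglyMeasurable w).measurable) hw
  let piece : Fin (Fintype.card ι + 1) → Lp ℝ ∞ μ :=
    fun j => ((Lp.memLp w).indicator (ht j).2.1).toLp _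
  -- `card ι + 1` pieces against `card ι` constraints leave a nontrivial relation.
  obtain ⟨a, ha1, hav, ha0⟩ := exists_abs_le_one_sum_smul_eq_zero (by simp)
    fun j i => l1Pairing μ (piece j) (e i)
  obtain ⟨j₀, hj₀⟩ := Function.ne_iff.1 ha0
  have hk := coeFn_sum_smul_indicator_toLp w (fun j => (ht j).2.1) a
  refine ⟨∑ j, a j • piece j, fun h0 => ?_, fun i => ?_, ?_⟩
  · have hzero := congrArg (fun ψ : StrongDual ℝ (Lp ℝ 1 μ) =>
      ψ (indicatorConstLp 1 (ht j₀).2.1 (measure_ne_top μ _) (1 : ℝ))) h0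
    have heval : ∫ x in t j₀, (∑ j, a j • piece j : Lp ℝ ∞ μ) x ∂μ
        = a j₀ * ∫ x in t j₀, w x ∂μ := by
      rw [← integral_const_mul]
      refine setIntegral_congr_ae (ht j₀).2.1 ?_
      filter_upwards [hk] with x hkx hxt
      rw [hkx, sum_mul_indicator_of_mem hdisj a w hxt]
    have hpos : 0 < ∫ x in t j₀, w x ∂μ := by
      rw [setIntegral_pos_iff_support_of_nonneg_ae
        (ae_restrict_of_forall_mem (ht j₀).2.1 fun x hx => ((ht j₀).1 hx).le)
        ((Lp.memLp w).integrable le_top).integrableOn]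
      exact (ht j₀).2.2.trans_le (measure_mono fun x hx => ⟨((ht j₀).1 hx).ne', hx⟩)
    simp only [l1Pairing_indicatorConstLp, heval, zero_apply] at hzero
    exact hj₀ ((mul_eq_zero.1 hzero).resolve_right hpos.ne')
  · simpa [map_sum, map_smul] using congrFun hav i
  · filter_upwards [hk] with x hx
    rw [hx]
    exact abs_sum_mul_indicator_le hdisj ha1 _ x

lemma ae_eq_zero_or_one_of_mem_extremePoints {ι : Type*} [Fintype ι] (hμ : μ.IsNonatomic)
    (e : ι → Lp ℝ 1 μ) (c : ι → ℝ) {h : Lp ℝ ∞ μ} (hh : ∀ᵐ x ∂μ, h x ∈ Icc 0 1)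
    (hext : StrongDual.toWeakDual (l1Pairing μ h) ∈
      (dualInterval μ ∩ {φ | ∀ i, φ (e i) = c i}).extremePoints ℝ) :
    ∀ᵐ x ∂μ, h x = 0 ∨ h x = 1 := by
  by_contra hne
  have hW : MemLp (fun x => min (h x) (1 - h x)) ∞ μ :=
    memLp_top_of_bound ((Lp.stronglyMeasurable h).measurable.min
      (measurable_const.sub (Lp.stronglyMeasurable h).measurable)).aestronglyMeasurable 1
      (by
        filter_upwards [hh] with x hx
        rw [Real.norm_eq_abs, abs_le]
        exact ⟨le_min (by linarith [hx.1]) (by linarith [hx.2]), (min_le_left _ _).trans hx.2⟩)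
  have hw : 0 < μ {x | 0 < hW.toLp _ x} := by
    refine (pos_iff_ne_zero.2 (mt ae_iff.2 hne)).trans_le (measure_mono_ae ?_)
    filter_upwards [hh, hW.coeFn_toLp] with x hx hwx hnx
    change ¬(_ ∨ _) at hnx
    push Not at hnx
    change 0 < _
    rw [hwx]
    exact lt_min (lt_of_le_of_ne hx.1 (Ne.symm hnx.1)) (sub_pos.2 (lt_of_le_of_ne hx.2 hnx.2))
  obtain ⟨k, hk0, hke, hkw⟩ := hμ.exists_l1Pairing_ne_zero e _ hw
  have hmem : ∀ σ : ℝ, |σ| ≤ 1 → StrongDual.toWeakDual (l1Pairing μ (h + σ • k)) ∈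
      dualInterval μ ∩ {φ | ∀ i, φ (e i) = c i} := fun σ hσ => by
    refine ⟨l1Pairing_mem_dualInterval ?_, fun i => ?_⟩
    · filter_upwards [hh, hkw, hW.coeFn_toLp, Lp.coeFn_add h (σ • k), Lp.coeFn_smul σ k]
        with x hx hkx hwx hadd hsmul
      rw [hwx] at hkx
      rw [hadd, Pi.add_apply, hsmul, Pi.smul_apply, smul_eq_mul]
      have : |σ * k x| ≤ min (h x) (1 - h x) := by
        rw [abs_mul]
        refine (mul_le_of_le_one_left (abs_nonneg _) hσ).trans (hkx.trans_eq (abs_of_nonneg ?_))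
        exact le_min hx.1 (sub_nonneg.2 hx.2)
      obtain ⟨h1, h2⟩ := abs_le.1 (this.trans (min_le_left _ _))
      obtain ⟨h3, h4⟩ := abs_le.1 (this.trans (min_le_right _ _))
      exact ⟨by linarith, by linarith⟩
    · change l1Pairing μ (h + σ • k) (e i) = c i
      rw [map_add, map_smul, add_apply, smul_apply, hke i,
        smul_zero, add_zero]
      exact hext.1.2 i
  have hplus := hext.2 (hmem 1 (by norm_num)) (hmem (-1) (by norm_num))
    ⟨1 / 2, 1 / 2, by norm_num, by norm_num, by norm_num, by
      simp only [map_add, map_smul]; module⟩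
  exact hk0 (by simpa using hplus)

theorem exists_measurableSet_forall_measure_eq {ι : Type*} [Finite ι] (ν : ι → Measure Ω)
    [∀ i, IsFiniteMeasure (ν i)] (hν : ∀ i, (ν i).IsNonatomic) {α : ℝ} (hα : α ∈ Icc 0 1) :
    ∃ s, MeasurableSet s ∧ ∀ i, ν i s = ENNReal.ofReal α * ν i univ := by
  have : Fintype ι := Fintype.ofFinite ι
  set μ := Measure.sum ν
  -- Instance search does not see through the `WeakDual` synonym to `WeakBilin`.
  have : LocallyConvexSpace ℝ (WeakDual ℝ (Lp ℝ 1 μ)) := WeakBilin.locallyConvexSpace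
  let d : ι → Lp ℝ 1 μ := fun i => (Measure.integrable_toReal_rnDeriv (μ := ν i)).toL1 _
  have hd : ∀ i s, ∫ x in s, d i x ∂μ = (ν i).real s := fun i s => by
    rw [← Measure.setIntegral_toReal_rnDeriv
      (Measure.absolutelyContinuous_of_le (Measure.le_sum ν i)) s]
    exact integral_congr_ae (ae_restrict_of_ae (Integrable.coeFn_toL1 _))
  set C := dualInterval μ ∩ {φ | ∀ i, φ (d i) = α * L1.integral (d i)}
  have hC : IsCompact C := by
    refine (isCompact_dualInterval μ).inter_right ?_
    simp only [ofPred_forall]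
    exact isClosed_iInter fun i => isClosed_eq (WeakDual.eval_continuous _) continuous_const
  let φ₀ := StrongDual.toWeakDual (α • (L1.integralCLM : Lp ℝ 1 μ →L[ℝ] ℝ))
  have hC₀ : φ₀ ∈ C := by
    have happ : ∀ f, φ₀ f = α * L1.integral f :=
      fun f => by rw [L1.integral_eq]; rfl
    refine ⟨fun f hf => ?_, fun i => happ (d i)⟩
    rw [happ]
    have : 0 ≤ L1.integral f := (L1.integral_eq_norm_of_nonneg hf).trans_ge (norm_nonneg f)
    exact ⟨mul_nonneg hα.1 this, mul_le_of_le_one_left this hα.2⟩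
  obtain ⟨φ, hφ⟩ := hC.extremePoints_nonempty ⟨_, hC₀⟩
  obtain ⟨h, hh, rfl⟩ := exists_l1Pairing_eq_of_mem_dualInterval hφ.1.1
  have h01 := ae_eq_zero_or_one_of_mem_extremePoints (Measure.IsNonatomic.sum hν) d _ hh hφ
  have hs : MeasurableSet {x | h x = 1} :=
    measurableSet_eq_fun (Lp.stronglyMeasurable h).measurable measurable_const
  refine ⟨_, hs, fun i => ?_⟩
  have key : (ν i).real {x | h x = 1} = α * (ν i).real univ := by
    rw [← hd, ← hd, setIntegral_univ, ← L1.integral_eq_integral, ← hφ.1.2 i,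
      ← integral_indicator hs]
    change _ = l1Pairing μ h (d i)
    rw [l1Pairing_apply]
    refine integral_congr_ae ?_
    filter_upwards [h01] with x hx
    rcases hx with hx | hx <;> simp [hx, indicator]
  rw [← ofReal_measureReal, key, ENNReal.ofReal_mul hα.1, ofReal_measureReal]

theorem exists_measurableSet_forall_measure_inter_eq {ι κ : Type*} [Finite ι] [Finite κ]
    (ν : ι → Measure Ω) [∀ i, IsFiniteMeasure (ν i)] (hν : ∀ i, (ν i).IsNonatomic)
    {u : κ → Set Ω} (hu : ∀ k, MeasurableSet (u k)) {α : ℝ} (hα : α ∈ Icc 0 1) :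
    ∃ s, MeasurableSet s ∧ ∀ i k, ν i (s ∩ u k) = ENNReal.ofReal α * ν i (u k) := by
  obtain ⟨s, hs, hsν⟩ := exists_measurableSet_forall_measure_eq
    (fun ik : ι × κ => (ν ik.1).restrict (u ik.2)) (fun ik => (hν ik.1).restrict (hu ik.2)) hα
  exact ⟨s, hs, fun i k => by simpa [Measure.restrict_apply hs] using hsν (i, k)⟩

end MeasureTheory

lemma Set.piecewise_const_preimage_singleton_self {Ω X : Type*} (s : Set Ω)
    [DecidablePred (· ∈ s)] (f : Ω → X) (x : X) :
    s.piecewise f (fun _ => x) ⁻¹' {x} = s ∩ f ⁻¹' {x} ∪ sᶜ := by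
  ext ω
  by_cases hω : ω ∈ s <;> simp [hω]

lemma Set.piecewise_const_preimage_singleton_of_ne {Ω X : Type*} (s : Set Ω)
    [DecidablePred (· ∈ s)] (f : Ω → X) {x y : X} (hy : y ≠ x) :
    s.piecewise f (fun _ => x) ⁻¹' {y} = s ∩ f ⁻¹' {y} := by
  ext ω
  by_cases hω : ω ∈ s <;> simp [hω, Ne.symm hy]

open MeasureTheory Set

theorem stmt_2_general {Ω X : Type*} {n : ℕ}
    (p : Fin n → @Measure Ω ⊤)
    (hprob : ∀ i, @IsProbabilityMeasure Ω ⊤ (p i))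
    (hna : ∀ (i : Fin n) (A : Set Ω), 0 < p i A →
      ∃ B ⊆ A, 0 < p i B ∧ p i B < p i A)
    (f : Ω → X) (hf : (Set.range f).Finite) (x : X)
    (α : ℝ) (hα : α ∈ Set.Ioo (0 : ℝ) 1) :
    ∃ g : Ω → X, (Set.range g).Finite ∧
      (∀ i, p i (g ⁻¹' {x}) =
        ENNReal.ofReal α * p i (f ⁻¹' {x}) + ENNReal.ofReal (1 - α)) ∧
      (∀ i, ∀ y : X, y ≠ x →
        p i (g ⁻¹' {y}) = ENNReal.ofReal α * p i (f ⁻¹' {y})) := by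
  classical
  let : MeasurableSpace Ω := ⊤
  have hmeas (t : Set Ω) : MeasurableSet t := MeasurableSpace.measurableSet_top
  have : Finite (range f) := hf.to_subtype
  -- Index `none` stands for the whole space, so that also `p i s = α`.
  obtain ⟨s, -, hs⟩ := exists_measurableSet_forall_measure_inter_eq p
    (fun i t _ ht => (hna i t ht).imp fun _ ⟨hbt, hb⟩ => ⟨hbt, hmeas _, hb⟩)
    (u := fun y : Option (range f) => y.elim univ fun y => f ⁻¹' {y.1}) (fun _ => hmeas _)
    ⟨hα.1.le, hα.2.le⟩
  have hfiber : ∀ i y, p i (s ∩ f ⁻¹' {y}) = ENNReal.ofReal α * p i (f ⁻¹' {y}) := fun i y => by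
    by_cases hy : y ∈ range f
    · exact hs i (some ⟨y, hy⟩)
    · simp [preimage_singleton_eq_empty.2 hy]
  refine ⟨s.piecewise f (fun _ => x), (hf.insert x).subset ?_, fun i => ?_, fun i y hy => ?_⟩
  · rintro _ ⟨ω, rfl⟩
    by_cases hω : ω ∈ s <;> simp [hω]
  · have : IsProbabilityMeasure (p i) := hprob i
    have hmass : p i s = ENNReal.ofReal α := by simpa using hs i none
    rw [piecewise_const_preimage_singleton_self, measure_union
      (disjoint_compl_right.mono_left inter_subset_left) (hmeas _), hfiber,
      prob_compl_eq_one_sub (hmeas _), hmass, ENNReal.ofReal_sub _ hα.1.le, ENNReal.ofReal_one]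
  · rw [piecewise_const_preimage_singleton_of_ne s f hy, hfiber]

/-- Existence of pseudo-mixed acts (paper's Proposition 1): given countably
additive, nonatomic probability measures `p 1, …, p n` on `(Ω, 2^Ω)`, an act
`f : Ω → X` with finite range, an outcome `x` and `α ∈ (0,1)`, there is an act
`g` with finite range such that every `i` assigns `g⁻¹(x)` probability
`α * p i (f⁻¹(x)) + (1 - α)` and `g⁻¹(y)` probability `α * p i (f⁻¹(y))` for
`y ≠ x`. -/
theorem stmt_2 {Ω X : Type*} {n : ℕ} (hn : 1 ≤ n)
    (p : Fin n → @Measure Ω ⊤)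
    (hprob : ∀ i, @IsProbabilityMeasure Ω ⊤ (p i))
    (hna : ∀ (i : Fin n) (A : Set Ω), 0 < p i A →
      ∃ B ⊆ A, 0 < p i B ∧ p i B < p i A)
    (f : Ω → X) (hf : (Set.range f).Finite) (x : X)
    (α : ℝ) (hα : α ∈ Set.Ioo (0 : ℝ) 1) :
    ∃ g : Ω → X, (Set.range g).Finite ∧
      (∀ i, p i (g ⁻¹' {x}) =
        ENNReal.ofReal α * p i (f ⁻¹' {x}) + ENNReal.ofReal (1 - α)) ∧
      (∀ i, ∀ y : X, y ≠ x →
        p i (g ⁻¹' {y}) = ENNReal.ofReal α * p i (f ⁻¹' {y})) :=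
  stmt_2_general p hprob hna f hf x α hα
end

section
/- Let n ≥ 1 and let ψ : [0,1]^n → ℝ be continuous and monotonic. Suppose that for all u, v ∈ [0,1]^n with ψ(u) = ψ(v) one has ψ((u+v)/2) ≥ ψ(u). Then ψ is quasiconcave; equivalently, for every u ∈ [0,1]^n the upper contour set {v ∈ [0,1]^n : ψ(v) ≥ ψ(u)} is convex. -/
open Set Filter Topology

/-- A closed midpoint-closed subset of `[0,1]` containing `0` and `1` is all of `[0,1]`. -/
lemma aux_closed_midpoint_icc (A : Set ℝ) (hA : IsClosed A) (hsub : A ⊆ Set.Icc 0 1)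
    (h0 : (0:ℝ) ∈ A) (h1 : (1:ℝ) ∈ A)
    (hmid : ∀ a ∈ A, ∀ b ∈ A, (a+b)/2 ∈ A) : Set.Icc (0:ℝ) 1 ⊆ A := by
  intro t ht
  by_contra htA
  set S1 : Set ℝ := A ∩ Set.Icc 0 t with hS1
  set S2 : Set ℝ := A ∩ Set.Icc t 1 with hS2
  have hc1 : IsCompact S1 :=
    IsCompact.of_isClosed_subset isCompact_Icc (hA.inter isClosed_Icc) Set.inter_subset_right
  have hc2 : IsCompact S2 :=
    IsCompact.of_isClosed_subset isCompact_Icc (hA.inter isClosed_Icc) Set.inter_subset_right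
  have hne1 : S1.Nonempty := ⟨0, h0, le_refl 0, ht.1⟩
  have hne2 : S2.Nonempty := ⟨1, h1, ht.2, le_refl 1⟩
  have hsmem : sSup S1 ∈ S1 := hc1.sSup_mem hne1
  have himem : sInf S2 ∈ S2 := hc2.sInf_mem hne2
  set s := sSup S1
  set i := sInf S2
  have hst : s < t := lt_of_le_of_ne hsmem.2.2 (fun h => htA (h ▸ hsmem.1))
  have hti : t < i := lt_of_le_of_ne himem.2.1 (fun h => htA (by rw [h]; exact himem.1))
  have hm : (s + i)/2 ∈ A := hmid s hsmem.1 i himem.1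
  have hs0 : (0:ℝ) ≤ s := hsmem.2.1
  have hi1 : i ≤ 1 := himem.2.2
  rcases le_or_gt ((s+i)/2) t with hle | hlt
  · have hmem : (s+i)/2 ∈ S1 := ⟨hm, by constructor <;> linarith⟩
    have : (s+i)/2 ≤ s := le_csSup hc1.bddAbove hmem
    linarith
  · have hmem : (s+i)/2 ∈ S2 := ⟨hm, by constructor <;> linarith⟩
    have : i ≤ (s+i)/2 := csInf_le hc2.bddBelow hmem
    linarith

/-- Analytic core of the paper's Lemma 2: a continuous, monotonic function on
the unit cube such that the midpoint of any two points on a common level set is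
weakly above that level is quasiconcave; equivalently, its upper contour sets
are convex. -/
theorem stmt_3 {n : ℕ} (hn : 1 ≤ n) (ψ : (Fin n → ℝ) → ℝ)
    (hcont : ContinuousOn ψ (Set.Icc (0 : Fin n → ℝ) 1))
    (hmono : ∀ u v : Fin n → ℝ, u ∈ Set.Icc (0 : Fin n → ℝ) 1 →
      v ∈ Set.Icc (0 : Fin n → ℝ) 1 → (∀ i, v i < u i) → ψ v < ψ u)
    (hmid : ∀ u v : Fin n → ℝ, u ∈ Set.Icc (0 : Fin n → ℝ) 1 →
      v ∈ Set.Icc (0 : Fin n → ℝ) 1 → ψ u = ψ v →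
      ψ u ≤ ψ ((1 / 2 : ℝ) • (u + v))) :
    (∀ u v : Fin n → ℝ, u ∈ Set.Icc (0 : Fin n → ℝ) 1 →
      v ∈ Set.Icc (0 : Fin n → ℝ) 1 → ∀ α : ℝ, α ∈ Set.Icc (0 : ℝ) 1 →
      min (ψ u) (ψ v) ≤ ψ (α • u + (1 - α) • v)) ∧
    (∀ u : Fin n → ℝ, u ∈ Set.Icc (0 : Fin n → ℝ) 1 →
      Convex ℝ {v : Fin n → ℝ | v ∈ Set.Icc (0 : Fin n → ℝ) 1 ∧ ψ u ≤ ψ v}) := by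
  set C : Set (Fin n → ℝ) := Set.Icc 0 1 with hCdef
  have memC : ∀ z : Fin n → ℝ, (∀ i, 0 ≤ z i ∧ z i ≤ 1) → z ∈ C := by
    intro z hz
    exact ⟨fun i => (hz i).1, fun i => (hz i).2⟩
  have memC' : ∀ z : Fin n → ℝ, z ∈ C → ∀ i, 0 ≤ z i ∧ z i ≤ 1 := by
    intro z hz i
    exact ⟨hz.1 i, hz.2 i⟩
  have h0C : (0 : Fin n → ℝ) ∈ C := memC _ (fun i => by norm_num)
  -- weak monotonicity
  have wm : ∀ x ∈ C, ∀ y ∈ C, x ≤ y → ψ x ≤ ψ y := by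
    intro x hx y hy hxy
    set F : ℝ → (Fin n → ℝ) := fun t => (1-t) • x with hF
    set G : ℝ → (Fin n → ℝ) := fun t => (1-t) • y + t • (1 : Fin n → ℝ) with hG
    have hFcont : Continuous F := (continuous_const.sub continuous_id).smul continuous_const
    have hGcont : Continuous G :=
      ((continuous_const.sub continuous_id).smul continuous_const).add
        (continuous_id.smul continuous_const)
    have hFmem : ∀ t ∈ Set.Icc (0:ℝ) 1, F t ∈ C := by
      intro t ht
      refine memC _ (fun i => ?_)
      have h1 := (memC' x hx i).1
      have h2 := (memC' x hx i).2
      simp only [hF, Pi.smul_apply, smul_eq_mul]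
      constructor
      · exact mul_nonneg (by linarith [ht.2]) h1
      · nlinarith [ht.1, ht.2]
    have hGmem : ∀ t ∈ Set.Icc (0:ℝ) 1, G t ∈ C := by
      intro t ht
      refine memC _ (fun i => ?_)
      have h1 := (memC' y hy i).1
      have h2 := (memC' y hy i).2
      simp only [hG, Pi.smul_apply, Pi.add_apply, Pi.one_apply, smul_eq_mul, mul_one]
      constructor
      · nlinarith [ht.1, ht.2]
      · nlinarith [ht.1, ht.2]
    have hF0 : F 0 = x := by simp [hF]
    have hG0 : G 0 = y := by simp [hG]
    have hNB : (𝓝[Set.Ioc (0:ℝ) 1] 0).NeBot := by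
      rw [← mem_closure_iff_nhdsWithin_neBot, closure_Ioc (one_ne_zero).symm]
      exact ⟨le_refl 0, zero_le_one⟩
    have hFt : Tendsto (fun t => ψ (F t)) (𝓝[Set.Ioc (0:ℝ) 1] 0) (𝓝 (ψ x)) := by
      have : ContinuousWithinAt (fun t => ψ (F t)) (Set.Icc (0:ℝ) 1) 0 := by
        have h1 : ContinuousWithinAt ψ C (F 0) := by rw [hF0]; exact hcont x hx
        exact h1.comp hFcont.continuousWithinAt hFmem
      have := this.mono (Set.Ioc_subset_Icc_self)
      rw [ContinuousWithinAt, hF0] at this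
      exact this
    have hGt : Tendsto (fun t => ψ (G t)) (𝓝[Set.Ioc (0:ℝ) 1] 0) (𝓝 (ψ y)) := by
      have : ContinuousWithinAt (fun t => ψ (G t)) (Set.Icc (0:ℝ) 1) 0 := by
        have h1 : ContinuousWithinAt ψ C (G 0) := by rw [hG0]; exact hcont y hy
        exact h1.comp hGcont.continuousWithinAt hGmem
      have := this.mono (Set.Ioc_subset_Icc_self)
      rw [ContinuousWithinAt, hG0] at this
      exact this
    refine le_of_tendsto_of_tendsto hFt hGt ?_
    filter_upwards [eventually_mem_nhdsWithin] with t ht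
    refine le_of_lt (hmono (G t) (F t) (hGmem t (Set.Ioc_subset_Icc_self ht))
      (hFmem t (Set.Ioc_subset_Icc_self ht)) (fun i => ?_))
    have h1 := (memC' x hx i).1
    have h2 := (memC' y hy i).1
    have hxyi := hxy i
    simp only [hF, hG, Pi.smul_apply, Pi.add_apply, Pi.one_apply, smul_eq_mul, mul_one]
    nlinarith [ht.1, ht.2]
  -- projection to a level set by scaling towards 0
  have hproj : ∀ w ∈ C, ∀ c : ℝ, ψ 0 ≤ c → c ≤ ψ w →
      ∃ w', w' ∈ C ∧ w' ≤ w ∧ ψ w' = c := by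
    intro w hw c hc0 hcw
    set g : ℝ → ℝ := fun t => ψ ((1-t) • w) with hg
    have hmemg : ∀ t ∈ Set.Icc (0:ℝ) 1, (1-t) • w ∈ C := by
      intro t ht
      refine memC _ (fun i => ?_)
      have h1 := (memC' w hw i).1
      have h2 := (memC' w hw i).2
      simp only [Pi.smul_apply, smul_eq_mul]
      constructor
      · exact mul_nonneg (by linarith [ht.2]) h1
      · nlinarith [ht.1, ht.2]
    have hgcont : ContinuousOn g (Set.Icc 0 1) := by
      refine hcont.comp (Continuous.continuousOn ?_) hmemg
      exact (continuous_const.sub continuous_id).smul continuous_const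
    have hkey : c ∈ Set.Icc (g 1) (g 0) := by
      constructor
      · simpa [hg] using hc0
      · simpa [hg] using hcw
    obtain ⟨t, ht, hgt⟩ := intermediate_value_Icc' zero_le_one hgcont hkey
    refine ⟨(1-t) • w, hmemg t ht, fun i => ?_, hgt⟩
    have h1 := (memC' w hw i).1
    simp only [Pi.smul_apply, smul_eq_mul]
    nlinarith [ht.1, ht.2]
  -- convexity of upper contour sets
  have hTconv : ∀ c : ℝ, ψ 0 ≤ c → Convex ℝ {v | v ∈ C ∧ c ≤ ψ v} := by
    intro c hc0
    set T : Set (Fin n → ℝ) := {v | v ∈ C ∧ c ≤ ψ v} with hT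
    have hTclosed : IsClosed T := by
      have : T = C ∩ ψ ⁻¹' Set.Ici c := by
        ext v; simp [hT, Set.mem_Ici, and_comm]
      rw [this]
      exact hcont.preimage_isClosed_of_isClosed isClosed_Icc isClosed_Ici
    have hTmid : ∀ w1 ∈ T, ∀ w2 ∈ T, (1/2 : ℝ) • (w1 + w2) ∈ T := by
      intro w1 hw1 w2 hw2
      obtain ⟨w1', hw1'C, hw1'le, hw1'ψ⟩ := hproj w1 hw1.1 c hc0 hw1.2
      obtain ⟨w2', hw2'C, hw2'le, hw2'ψ⟩ := hproj w2 hw2.1 c hc0 hw2.2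
      have heq : ψ w1' = ψ w2' := by rw [hw1'ψ, hw2'ψ]
      have hmid' := hmid w1' w2' hw1'C hw2'C heq
      have hmidC' : (1/2 : ℝ) • (w1' + w2') ∈ C := by
        refine memC _ (fun i => ?_)
        have h1 := memC' _ hw1'C i
        have h2 := memC' _ hw2'C i
        simp only [Pi.smul_apply, Pi.add_apply, smul_eq_mul]
        constructor <;> nlinarith [h1.1, h1.2, h2.1, h2.2]
      have hmidC : (1/2 : ℝ) • (w1 + w2) ∈ C := by
        refine memC _ (fun i => ?_)
        have h1 := memC' _ hw1.1 i
        have h2 := memC' _ hw2.1 i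
        simp only [Pi.smul_apply, Pi.add_apply, smul_eq_mul]
        constructor <;> nlinarith [h1.1, h1.2, h2.1, h2.2]
      have hle : (1/2 : ℝ) • (w1' + w2') ≤ (1/2 : ℝ) • (w1 + w2) := by
        intro i
        have := hw1'le i
        have := hw2'le i
        simp only [Pi.smul_apply, Pi.add_apply, smul_eq_mul]
        linarith
      have := wm _ hmidC' _ hmidC hle
      exact ⟨hmidC, by rw [hw1'ψ] at hmid'; linarith⟩
    intro x hx y hy a b ha hb hab
    have hb' : b = 1 - a := by linarith
    subst hb'
    set f : ℝ → (Fin n → ℝ) := fun α => α • x + (1-α) • y with hf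
    have hfcont : Continuous f :=
      (continuous_id.smul continuous_const).add
        ((continuous_const.sub continuous_id).smul continuous_const)
    set A : Set ℝ := Set.Icc 0 1 ∩ f ⁻¹' T with hA
    have hAclosed : IsClosed A := isClosed_Icc.inter (hTclosed.preimage hfcont)
    have h0A : (0:ℝ) ∈ A := by
      refine ⟨⟨le_refl 0, zero_le_one⟩, ?_⟩
      have : f 0 = y := by simp [hf]
      simp only [Set.mem_preimage, this]
      exact hy
    have h1A : (1:ℝ) ∈ A := by
      refine ⟨⟨zero_le_one, le_refl 1⟩, ?_⟩
      have : f 1 = x := by simp [hf]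
      simp only [Set.mem_preimage, this]
      exact hx
    have hAmid : ∀ p ∈ A, ∀ q ∈ A, (p+q)/2 ∈ A := by
      intro p hp q hq
      have hmem : ((p+q)/2 : ℝ) ∈ Set.Icc (0:ℝ) 1 := by
        constructor <;> [linarith [hp.1.1, hq.1.1]; linarith [hp.1.2, hq.1.2]]
      refine ⟨hmem, ?_⟩
      have heq : f ((p+q)/2) = (1/2 : ℝ) • (f p + f q) := by
        funext i
        simp only [hf, Pi.smul_apply, Pi.add_apply, smul_eq_mul]
        ring
      simp only [Set.mem_preimage, heq]
      exact hTmid _ hp.2 _ hq.2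
    have hsubA : Set.Icc (0:ℝ) 1 ⊆ A :=
      aux_closed_midpoint_icc A hAclosed Set.inter_subset_left h0A h1A hAmid
    have haA : a ∈ A := hsubA ⟨ha, by linarith⟩
    exact haA.2
  constructor
  · intro u v hu hv α hα
    set c : ℝ := min (ψ u) (ψ v) with hc
    have hc0 : ψ 0 ≤ c :=
      le_min (wm 0 h0C u hu (fun i => (memC' u hu i).1))
        (wm 0 h0C v hv (fun i => (memC' v hv i).1))
    have := hTconv c hc0 (x := u) ⟨hu, min_le_left _ _⟩ (y := v) ⟨hv, min_le_right _ _⟩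
      (a := α) (b := 1 - α) hα.1 (by linarith [hα.2]) (by ring)
    exact this.2
  · intro u hu
    exact hTconv (ψ u) (wm 0 h0C u hu (fun i => (memC' u hu i).1))
end

section
/- Let n ≥ 1 and let ψ : [0,1]^n → ℝ be continuous and monotonic with ψ(c·1) = c for all c ∈ [0,1], where 1 = (1,…,1). Suppose that for all u, v ∈ [0,1]^n, all c ∈ [0,1], and all α ∈ (0,1): ψ(u) ≥ ψ(v) if and only if ψ(αu + (1−α)c·1) ≥ ψ(αv + (1−α)c·1). Then ψ is homogeneous and translation-invariant. -/
/-!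
Mixing `u` and the constant vector `ψ(u)·1` with the same constant `c·1` yields vectors of equal
value, so invariance under such mixtures together with `ψ(c·1) = c` forces
`ψ(αu + (1-α)c·1) = αψ(u) + (1-α)c`. Taking `c = 0` gives homogeneity, and
`½(u + c·1) = ½u + ½c·1` reduces translation invariance to homogeneity.
The prerequisite `ψ(u) ∈ [0,1]` comes from monotonicity after one mixing step: if, say,
`ψ(u) > 1 = ψ(1)`, then mixing with `0` makes `αu` beat the constant `α·1`, which dominates it.
-/

open Set

namespace UnitCube

variable {ι : Type*} {ψ : (ι → ℝ) → ℝ}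

def Monotonic (ψ : (ι → ℝ) → ℝ) : Prop :=
  ∀ u v : ι → ℝ, u ∈ Icc (0 : ι → ℝ) 1 → v ∈ Icc (0 : ι → ℝ) 1 → (∀ i, v i < u i) → ψ v < ψ u

def FixesDiagonal (ψ : (ι → ℝ) → ℝ) : Prop :=
  ∀ c ∈ Icc (0 : ℝ) 1, ψ (fun _ => c) = c

def MixtureInvariant (ψ : (ι → ℝ) → ℝ) : Prop :=
  ∀ u v : ι → ℝ, u ∈ Icc (0 : ι → ℝ) 1 → v ∈ Icc (0 : ι → ℝ) 1 → ∀ c ∈ Icc (0 : ℝ) 1,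
    ∀ α ∈ Ioo (0 : ℝ) 1,
    (ψ v ≤ ψ u ↔ ψ (α • v + (1 - α) • fun _ => c) ≤ ψ (α • u + (1 - α) • fun _ => c))

lemma const_mem_Icc {c : ℝ} (hc : c ∈ Icc (0 : ℝ) 1) :
    (fun _ => c : ι → ℝ) ∈ Icc (0 : ι → ℝ) 1 :=
  ⟨fun _ => hc.1, fun _ => hc.2⟩

lemma smul_const_add_smul_const (α a c : ℝ) :
    α • (fun _ => a : ι → ℝ) + (1 - α) • (fun _ => c) = fun _ => α * a + (1 - α) * c := by
  ext; simp

lemma mix_mem_Icc {u v : ι → ℝ} (hu : u ∈ Icc (0 : ι → ℝ) 1) (hv : v ∈ Icc (0 : ι → ℝ) 1)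
    {α : ℝ} (hα : α ∈ Icc (0 : ℝ) 1) : α • u + (1 - α) • v ∈ Icc (0 : ι → ℝ) 1 :=
  convex_Icc 0 1 hu hv hα.1 (sub_nonneg.2 hα.2) (add_sub_cancel _ _)

lemma FixesDiagonal.nonempty (hdiag : FixesDiagonal ψ) : Nonempty ι := by
  by_contra h
  rw [not_nonempty_iff] at h
  have h0 := hdiag 0 ⟨le_rfl, zero_le_one⟩
  rw [Subsingleton.elim (fun _ => (0 : ℝ)) (fun _ => 1), hdiag 1 ⟨zero_le_one, le_rfl⟩] at h0
  exact one_ne_zero h0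

lemma FixesDiagonal.apply_mix_const_const (hdiag : FixesDiagonal ψ) {a c α : ℝ}
    (ha : a ∈ Icc (0 : ℝ) 1) (hc : c ∈ Icc (0 : ℝ) 1) (hα : α ∈ Icc (0 : ℝ) 1) :
    ψ (α • (fun _ => a) + (1 - α) • fun _ => c) = α * a + (1 - α) * c := by
  rw [smul_const_add_smul_const]
  exact hdiag _ (convex_Icc 0 1 ha hc hα.1 (sub_nonneg.2 hα.2) (add_sub_cancel _ _))

lemma Monotonic.apply_le_of_le_const (hmono : Monotonic ψ) (hdiag : FixesDiagonal ψ)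
    {u : ι → ℝ} (hu : u ∈ Icc 0 1) {c : ℝ} (hc : c ∈ Ico (0 : ℝ) 1) (h : ∀ i, u i ≤ c) :
    ψ u ≤ c := by
  refine le_of_forall_gt_imp_ge_of_dense fun d hd => ?_
  have hcd : c < min d 1 := lt_min hd hc.2
  have hd1 : min d 1 ∈ Icc (0 : ℝ) 1 := ⟨hc.1.trans hcd.le, min_le_right _ _⟩
  calc ψ u ≤ ψ (fun _ => min d 1) :=
        (hmono _ _ (const_mem_Icc hd1) hu fun i => (h i).trans_lt hcd).le
    _ = min d 1 := hdiag _ hd1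
    _ ≤ d := min_le_left _ _

lemma Monotonic.le_apply_of_const_le (hmono : Monotonic ψ) (hdiag : FixesDiagonal ψ)
    {u : ι → ℝ} (hu : u ∈ Icc 0 1) {c : ℝ} (hc : c ∈ Ioc (0 : ℝ) 1) (h : ∀ i, c ≤ u i) :
    c ≤ ψ u := by
  refine le_of_forall_lt_imp_le_of_dense fun d hd => ?_
  have hcd : max d 0 < c := max_lt hd hc.1
  have hd0 : max d 0 ∈ Icc (0 : ℝ) 1 := ⟨le_max_right _ _, hcd.le.trans hc.2⟩
  calc d ≤ max d 0 := le_max_left _ _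
    _ = ψ (fun _ => max d 0) := (hdiag _ hd0).symm
    _ ≤ ψ u := (hmono _ _ hu (const_mem_Icc hd0) fun i => hcd.trans_le (h i)).le

lemma apply_mem_Icc (hmono : Monotonic ψ) (hdiag : FixesDiagonal ψ) (hmix : MixtureInvariant ψ)
    {u : ι → ℝ} (hu : u ∈ Icc 0 1) : ψ u ∈ Icc (0 : ℝ) 1 := by
  obtain ⟨α, hα⟩ : (Ioo (0 : ℝ) 1).Nonempty := nonempty_Ioo.2 zero_lt_one
  have h0 : (0 : ℝ) ∈ Icc 0 1 := ⟨le_rfl, zero_le_one⟩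
  have h1 : (1 : ℝ) ∈ Icc 0 1 := ⟨zero_le_one, le_rfl⟩
  have hα' : α ∈ Icc (0 : ℝ) 1 := Ioo_subset_Icc_self hα
  constructor
  · by_contra! hneg
    have key := (hmix u _ hu (const_mem_Icc h0) 1 h1 α hα).not.1 (by rw [hdiag 0 h0]; simpa)
    rw [hdiag.apply_mix_const_const h0 h1 hα', not_le] at key
    refine key.not_ge ((hmono.le_apply_of_const_le hdiag (mix_mem_Icc hu (const_mem_Icc h1) hα')
      ⟨sub_pos.2 hα.2, sub_le_self _ hα.1.le⟩ fun i => ?_).trans_eq' (by ring))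
    have := hu.1 i
    simp only [Pi.add_apply, Pi.smul_apply, Pi.zero_apply, smul_eq_mul] at this ⊢
    nlinarith [hα.1]
  · by_contra! hbig
    have key := (hmix _ u (const_mem_Icc h1) hu 0 h0 α hα).not.1 (by rw [hdiag 1 h1]; simpa)
    rw [hdiag.apply_mix_const_const h1 h0 hα', not_le] at key
    refine key.not_ge ((hmono.apply_le_of_le_const hdiag (mix_mem_Icc hu (const_mem_Icc h0) hα')
      ⟨hα.1.le, hα.2⟩ fun i => ?_).trans_eq (by ring))
    have := hu.2 i
    simp only [Pi.add_apply, Pi.smul_apply, Pi.one_apply, smul_eq_mul] at this ⊢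
    nlinarith [hα.1]

theorem apply_mix_const (hmono : Monotonic ψ) (hdiag : FixesDiagonal ψ)
    (hmix : MixtureInvariant ψ) {u : ι → ℝ} (hu : u ∈ Icc 0 1) {c α : ℝ}
    (hc : c ∈ Icc (0 : ℝ) 1) (hα : α ∈ Ioo (0 : ℝ) 1) :
    ψ (α • u + (1 - α) • fun _ => c) = α * ψ u + (1 - α) * c := by
  have hψu := apply_mem_Icc hmono hdiag hmix hu
  have hsame : ψ (fun _ => ψ u) = ψ u := hdiag _ hψu
  rw [← hdiag.apply_mix_const_const hψu hc (Ioo_subset_Icc_self hα)]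
  exact le_antisymm ((hmix _ _ (const_mem_Icc hψu) hu c hc α hα).1 hsame.ge)
    ((hmix _ _ hu (const_mem_Icc hψu) c hc α hα).1 hsame.le)

lemma apply_smul_of_mem_Ioo (hmono : Monotonic ψ) (hdiag : FixesDiagonal ψ)
    (hmix : MixtureInvariant ψ) {u : ι → ℝ} (hu : u ∈ Icc 0 1) {α : ℝ}
    (hα : α ∈ Ioo (0 : ℝ) 1) : ψ (α • u) = α * ψ u := by
  simpa [← Pi.zero_def] using apply_mix_const hmono hdiag hmix hu ⟨le_rfl, zero_le_one⟩ hα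

theorem apply_smul (hmono : Monotonic ψ) (hdiag : FixesDiagonal ψ)
    (hmix : MixtureInvariant ψ) {u : ι → ℝ} (hu : u ∈ Icc 0 1) {α : ℝ} (hα : 0 < α)
    (hαu : α • u ∈ Icc 0 1) : ψ (α • u) = α * ψ u := by
  rcases lt_trichotomy α 1 with hα1 | rfl | hα1
  · exact apply_smul_of_mem_Ioo hmono hdiag hmix hu ⟨hα, hα1⟩
  · simp
  · have h := apply_smul_of_mem_Ioo hmono hdiag hmix hαu ⟨inv_pos.2 hα, inv_lt_one_of_one_lt₀ hα1⟩
    rw [inv_smul_smul₀ hα.ne'] at h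
    rw [h, mul_inv_cancel_left₀ hα.ne']

lemma apply_add_const_of_nonneg [Nonempty ι] (hmono : Monotonic ψ) (hdiag : FixesDiagonal ψ)
    (hmix : MixtureInvariant ψ) {u : ι → ℝ} (hu : u ∈ Icc 0 1) {c : ℝ} (hc : 0 ≤ c)
    (huc : (u + fun _ => c) ∈ Icc 0 1) : ψ (u + fun _ => c) = ψ u + c := by
  obtain ⟨i⟩ := ‹Nonempty ι›
  have hc1 : c ≤ 1 := by
    have h0 := hu.1 i
    have h1 := huc.2 i
    simp only [Pi.zero_apply, Pi.add_apply, Pi.one_apply] at h0 h1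
    linarith
  have half : (2⁻¹ : ℝ) ∈ Ioo 0 1 := by norm_num
  have hsplit : (2⁻¹ : ℝ) • (u + fun _ => c) = (2⁻¹ : ℝ) • u + (1 - 2⁻¹ : ℝ) • fun _ => c := by
    norm_num
  have h := apply_smul_of_mem_Ioo hmono hdiag hmix huc half
  rw [hsplit, apply_mix_const hmono hdiag hmix hu ⟨hc, hc1⟩ half] at h
  linarith

theorem apply_add_const [Nonempty ι] (hmono : Monotonic ψ) (hdiag : FixesDiagonal ψ)
    (hmix : MixtureInvariant ψ) {u : ι → ℝ} (hu : u ∈ Icc 0 1) {c : ℝ}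
    (huc : (u + fun _ => c) ∈ Icc 0 1) : ψ (u + fun _ => c) = ψ u + c := by
  rcases le_total 0 c with hc | hc
  · exact apply_add_const_of_nonneg hmono hdiag hmix hu hc huc
  · have hback : ((u + fun _ => c) + fun _ => -c) = u := by ext; simp
    have h := apply_add_const_of_nonneg hmono hdiag hmix huc (neg_nonneg.2 hc)
      (by rwa [hback])
    rw [hback] at h
    linarith

end UnitCube

theorem stmt_4_general {n : ℕ} (ψ : (Fin n → ℝ) → ℝ)
    (hmono : ∀ u v : Fin n → ℝ, u ∈ Set.Icc (0 : Fin n → ℝ) 1 →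
      v ∈ Set.Icc (0 : Fin n → ℝ) 1 → (∀ i, v i < u i) → ψ v < ψ u)
    (hdiag : ∀ c : ℝ, c ∈ Set.Icc (0 : ℝ) 1 → ψ (fun _ => c) = c)
    (hmix : ∀ u v : Fin n → ℝ, u ∈ Set.Icc (0 : Fin n → ℝ) 1 →
      v ∈ Set.Icc (0 : Fin n → ℝ) 1 → ∀ c ∈ Set.Icc (0 : ℝ) 1,
      ∀ α ∈ Set.Ioo (0 : ℝ) 1,
      (ψ v ≤ ψ u ↔
        ψ (α • v + (1 - α) • (fun _ => c : Fin n → ℝ)) ≤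
          ψ (α • u + (1 - α) • (fun _ => c : Fin n → ℝ)))) :
    (∀ u : Fin n → ℝ, u ∈ Set.Icc (0 : Fin n → ℝ) 1 → ∀ α : ℝ, 0 < α →
      α • u ∈ Set.Icc (0 : Fin n → ℝ) 1 → ψ (α • u) = α * ψ u) ∧
    (∀ u : Fin n → ℝ, u ∈ Set.Icc (0 : Fin n → ℝ) 1 → ∀ c : ℝ,
      (u + fun _ => c) ∈ Set.Icc (0 : Fin n → ℝ) 1 →
      ψ (u + fun _ => c) = ψ u + c) := by
  have := UnitCube.FixesDiagonal.nonempty hdiag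
  exact ⟨fun u hu α hα hαu => UnitCube.apply_smul hmono hdiag hmix hu hα hαu,
    fun u hu c huc => UnitCube.apply_add_const hmono hdiag hmix hu huc⟩

/-- Analytic core of the paper's Lemma 4: a continuous, monotonic function on
the unit cube with `ψ(c·1) = c`, whose ranking is invariant under mixing with
constant vectors, is homogeneous and translation-invariant. -/
theorem stmt_4 {n : ℕ} (hn : 1 ≤ n) (ψ : (Fin n → ℝ) → ℝ)
    (hcont : ContinuousOn ψ (Set.Icc (0 : Fin n → ℝ) 1))
    (hmono : ∀ u v : Fin n → ℝ, u ∈ Set.Icc (0 : Fin n → ℝ) 1 →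
      v ∈ Set.Icc (0 : Fin n → ℝ) 1 → (∀ i, v i < u i) → ψ v < ψ u)
    (hdiag : ∀ c : ℝ, c ∈ Set.Icc (0 : ℝ) 1 → ψ (fun _ => c) = c)
    (hmix : ∀ u v : Fin n → ℝ, u ∈ Set.Icc (0 : Fin n → ℝ) 1 →
      v ∈ Set.Icc (0 : Fin n → ℝ) 1 → ∀ c ∈ Set.Icc (0 : ℝ) 1,
      ∀ α ∈ Set.Ioo (0 : ℝ) 1,
      (ψ v ≤ ψ u ↔
        ψ (α • v + (1 - α) • (fun _ => c : Fin n → ℝ)) ≤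
          ψ (α • u + (1 - α) • (fun _ => c : Fin n → ℝ)))) :
    (∀ u : Fin n → ℝ, u ∈ Set.Icc (0 : Fin n → ℝ) 1 → ∀ α : ℝ, 0 < α →
      α • u ∈ Set.Icc (0 : Fin n → ℝ) 1 → ψ (α • u) = α * ψ u) ∧
    (∀ u : Fin n → ℝ, u ∈ Set.Icc (0 : Fin n → ℝ) 1 → ∀ c : ℝ,
      (u + fun _ => c) ∈ Set.Icc (0 : Fin n → ℝ) 1 →
      ψ (u + fun _ => c) = ψ u + c) :=
  stmt_4_general ψ hmono hdiag hmix
end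

section
/- Let n ≥ 1 and let ψ : [0,1]^n → ℝ be monotonic, continuous, quasiconcave, homogeneous, and translation-invariant. Then there exists a nonempty closed convex set M ⊆ Δ_n such that for all u ∈ [0,1]^n, ψ(u) = min_{μ ∈ M} Σ_{i=1}^n μ_i u_i. -/
/-!
Homogeneity and translation invariance determine `ψ` off the cube: the value
`Ψ x = l⁻¹ ψ (l • (x + c • 1)) - c` does not depend on the choice of `l > 0` and `c` putting
`l • (x + c • 1)` in the cube. The extension `Ψ` is monotone, homogeneous, translation invariant
and quasiconcave on all of `ℝⁿ`, and translation invariance upgrades quasiconcavity to concavity,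
hence to continuity. Separating a point of the graph from the open strict hypograph gives a
supergradient there, which homogeneity turns into a linear functional `ℓ ≥ Ψ` touching `Ψ` at
that point; monotonicity and translation invariance put the coefficients of `ℓ` in the simplex.
So `M` can be taken to be the set of all weights in the simplex that dominate `ψ` on the cube.
-/

open Set

section Concave

variable {E : Type*} [AddCommGroup E] [Module ℝ E]

/-- Translation invariance moves `x` and `y` to level `0`, where quasiconcavity applies. -/
theorem concaveOn_univ_of_quasiconcaveOn_of_add_smul {Φ : E → ℝ} {e : E}
    (hqc : QuasiconcaveOn ℝ univ Φ) (hti : ∀ x (t : ℝ), Φ (x + t • e) = Φ x + t) :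
    ConcaveOn ℝ univ Φ := by
  refine ⟨convex_univ, fun x _ y _ a b ha hb hab => ?_⟩
  have hx : Φ (x + (-Φ x) • e) = 0 := by rw [hti]; ring
  have hy : Φ (y + (-Φ y) • e) = 0 := by rw [hti]; ring
  have hmin := (quasiconcaveOn_iff_min_le.mp hqc).2 (mem_univ (x + (-Φ x) • e))
    (mem_univ (y + (-Φ y) • e)) ha hb hab
  have hcomb : a • (x + (-Φ x) • e) + b • (y + (-Φ y) • e)
      = (a • x + b • y) + (-(a * Φ x + b * Φ y)) • e := by module
  rw [hx, hy, min_self, hcomb, hti] at hmin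
  simp only [smul_eq_mul]
  linarith

variable [TopologicalSpace E] [IsTopologicalAddGroup E] [ContinuousSMul ℝ E]

/-- Separate the point `(x₀, Φ x₀)` from the open convex strict hypograph of `Φ`; the
separating functional is not vertical because its value grows along the `ℝ` axis. -/
theorem ConcaveOn.exists_supergradient {Φ : E → ℝ} (hΦ : ConcaveOn ℝ univ Φ)
    (hcont : Continuous Φ) (x₀ : E) : ∃ ℓ : E →L[ℝ] ℝ, ∀ x, Φ x ≤ Φ x₀ + ℓ (x - x₀) := by
  have hO : IsOpen {p : E × ℝ | p.1 ∈ univ ∧ p.2 < Φ p.1} := by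
    simpa using isOpen_lt continuous_snd (hcont.comp continuous_fst)
  obtain ⟨f, hf⟩ := geometric_hahn_banach_open_point hΦ.convex_strict_hypograph hO
    (x := (x₀, Φ x₀)) (by simp)
  set r := f (0, 1)
  have hsplit : ∀ x t, f (x, t) = f (x, 0) + t * r := fun x t => by
    rw [← smul_eq_mul, ← map_smul, ← map_add]; simp
  have hsep : ∀ x t, t < Φ x → f (x, 0) + t * r < f (x₀, 0) + Φ x₀ * r := fun x t ht => by
    rw [← hsplit, ← hsplit]; exact hf (x, t) ⟨mem_univ x, ht⟩
  have hr : 0 < r := by nlinarith [hsep x₀ (Φ x₀ - 1) (by linarith)]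
  refine ⟨-r⁻¹ • f.comp (ContinuousLinearMap.inl ℝ E ℝ), fun x => le_of_forall_lt fun t ht => ?_⟩
  have hxt := hsep x t ht
  have hsub : f (x - x₀, 0) = f (x, 0) - f (x₀, 0) := by
    rw [← map_sub]; simp
  have hquot : r⁻¹ * (f (x, 0) - f (x₀, 0)) < Φ x₀ - t := by
    rw [inv_mul_lt_iff₀ hr]; linarith
  simp only [smul_apply, ContinuousLinearMap.comp_apply, ContinuousLinearMap.inl_apply, hsub,
    smul_eq_mul]
  linarith

/-- At `x = 0` and `x = 2 • x₀` the supergradient inequality pins `ℓ x₀` to `Φ x₀`. -/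
theorem ConcaveOn.exists_clm_ge_and_eq_of_homogeneous {Φ : E → ℝ} (hΦ : ConcaveOn ℝ univ Φ)
    (hcont : Continuous Φ) (hhom : ∀ x, ∀ α : ℝ, 0 < α → Φ (α • x) = α * Φ x) (x₀ : E) :
    ∃ ℓ : E →L[ℝ] ℝ, (∀ x, Φ x ≤ ℓ x) ∧ ℓ x₀ = Φ x₀ := by
  obtain ⟨ℓ, hℓ⟩ := hΦ.exists_supergradient hcont x₀
  have hzero : Φ 0 = 0 := by
    have h := hhom 0 2 two_pos
    rw [smul_zero] at h
    linarith
  have hdouble := hℓ ((2 : ℝ) • x₀)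
  rw [hhom x₀ 2 two_pos, show (2 : ℝ) • x₀ - x₀ = x₀ by module] at hdouble
  have horigin := hℓ 0
  rw [hzero, zero_sub, map_neg] at horigin
  have heq : ℓ x₀ = Φ x₀ := by linarith
  refine ⟨ℓ, fun x => ?_, heq⟩
  linarith [hℓ x, map_sub ℓ x x₀]

end Concave

section Simplex

variable {ι : Type*}

theorem monotone_of_lt_of_add_smul_one {Φ : (ι → ℝ) → ℝ}
    (hlt : ∀ x y : ι → ℝ, (∀ i, x i < y i) → Φ x < Φ y)
    (hti : ∀ x (t : ℝ), Φ (x + t • 1) = Φ x + t) : Monotone Φ := fun x y hxy =>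
  le_of_forall_pos_lt_add fun ε hε => by
    rw [← hti]
    exact hlt _ _ fun i => by simpa using lt_add_of_le_of_pos (hxy i) hε

variable [Fintype ι]

theorem ContinuousLinearMap.apply_eq_sum_mul_single [DecidableEq ι] (ℓ : (ι → ℝ) →L[ℝ] ℝ)
    (x : ι → ℝ) :
    ℓ x = ∑ i, ℓ (Pi.single i 1) * x i := by
  conv_lhs => rw [← LinearMap.sum_single_apply _ x, map_sum]
  refine Finset.sum_congr rfl fun i _ => ?_
  rw [mul_comm, ← smul_eq_mul, ← map_smul, ← Pi.single_smul, smul_eq_mul, mul_one]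

theorem ContinuousLinearMap.coeffs_mem_stdSimplex [DecidableEq ι] {Φ : (ι → ℝ) → ℝ}
    (hmono : Monotone Φ) (hti : ∀ x (t : ℝ), Φ (x + t • 1) = Φ x + t) {ℓ : (ι → ℝ) →L[ℝ] ℝ}
    (hle : ∀ x, Φ x ≤ ℓ x) {x₀ : ι → ℝ} (heq : ℓ x₀ = Φ x₀) :
    (fun i => ℓ (Pi.single i 1)) ∈ stdSimplex ℝ ι := by
  refine ⟨fun i => ?_, ?_⟩
  · have hup := hmono (le_add_of_nonneg_right (Pi.single_nonneg.mpr zero_le_one) :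
      x₀ ≤ x₀ + Pi.single i 1)
    linarith [hle (x₀ + Pi.single i 1), map_add ℓ x₀ (Pi.single i 1)]
  · have hone : ℓ 1 = 1 := by
      have hplus := hle (x₀ + (1 : ℝ) • 1)
      have hminus := hle (x₀ + (-1 : ℝ) • 1)
      rw [hti, map_add, map_smul, heq] at hplus hminus
      simp only [smul_eq_mul] at hplus hminus
      linarith
    simpa using (ℓ.apply_eq_sum_mul_single 1).symm.trans hone

theorem exists_mem_stdSimplex_le_of_quasiconcaveOn {Φ : (ι → ℝ) → ℝ} (hmono : Monotone Φ)
    (hti : ∀ x (t : ℝ), Φ (x + t • 1) = Φ x + t)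
    (hhom : ∀ x, ∀ α : ℝ, 0 < α → Φ (α • x) = α * Φ x) (hqc : QuasiconcaveOn ℝ univ Φ)
    (x₀ : ι → ℝ) :
    ∃ μ ∈ stdSimplex ℝ ι, (∀ x, Φ x ≤ ∑ i, μ i * x i) ∧ ∑ i, μ i * x₀ i = Φ x₀ := by
  classical
  have hconc := concaveOn_univ_of_quasiconcaveOn_of_add_smul hqc hti
  have hcont : Continuous Φ := continuousOn_univ.mp (hconc.continuousOn isOpen_univ)
  obtain ⟨ℓ, hle, heq⟩ := hconc.exists_clm_ge_and_eq_of_homogeneous hcont hhom x₀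
  refine ⟨_, ℓ.coeffs_mem_stdSimplex hmono hti hle heq, fun x => ?_, ?_⟩
  · rw [← ℓ.apply_eq_sum_mul_single]
    exact hle x
  · rw [← ℓ.apply_eq_sum_mul_single, heq]

theorem exists_weight_set_isLeast {S : Set (ι → ℝ)} (hS : S.Nonempty) {φ : (ι → ℝ) → ℝ}
    (h : ∀ u ∈ S, ∃ μ ∈ stdSimplex ℝ ι, (∀ v ∈ S, φ v ≤ ∑ i, μ i * v i) ∧
      ∑ i, μ i * u i = φ u) :
    ∃ M : Set (ι → ℝ), M.Nonempty ∧ IsClosed M ∧ Convex ℝ M ∧ M ⊆ stdSimplex ℝ ι ∧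
      ∀ u ∈ S, IsLeast ((fun μ : ι → ℝ => ∑ i, μ i * u i) '' M) (φ u) := by
  set M := stdSimplex ℝ ι ∩ ⋂ v ∈ S, {μ : ι → ℝ | φ v ≤ ∑ i, μ i * v i}
  have hmem : ∀ μ ∈ stdSimplex ℝ ι, (∀ v ∈ S, φ v ≤ ∑ i, μ i * v i) → μ ∈ M :=
    fun μ hμ hle => ⟨hμ, mem_iInter₂.mpr hle⟩
  refine ⟨M, ?_, ?_, ?_, inter_subset_left, fun u hu => ⟨?_, ?_⟩⟩
  · obtain ⟨u, hu⟩ := hS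
    obtain ⟨μ, hμ, hle, -⟩ := h u hu
    exact ⟨μ, hmem μ hμ hle⟩
  · exact (isClosed_stdSimplex ℝ ι).inter <| isClosed_biInter fun v _ =>
      isClosed_le continuous_const (by fun_prop)
  · refine (convex_stdSimplex ℝ ι).inter <| convex_iInter₂ fun v _ => ?_
    exact convex_halfSpace_ge ⟨fun μ ν => by simp [add_mul, Finset.sum_add_distrib],
      fun c μ => by simp [Finset.mul_sum, mul_assoc]⟩ _
  · obtain ⟨μ, hμ, hle, heq⟩ := h u hu
    exact ⟨μ, hmem μ hμ hle, heq⟩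
  · rintro _ ⟨μ, hμ, rfl⟩
    exact mem_iInter₂.mp hμ.2 u hu

end Simplex

namespace GilboaSchmeidler

variable {ι : Type*} {ψ : (ι → ℝ) → ℝ}

def CubeHomogeneous (ψ : (ι → ℝ) → ℝ) : Prop :=
  ∀ u ∈ Icc (0 : ι → ℝ) 1, ∀ α : ℝ, 0 < α → α • u ∈ Icc (0 : ι → ℝ) 1 → ψ (α • u) = α * ψ u

def CubeTranslationInvariant (ψ : (ι → ℝ) → ℝ) : Prop :=
  ∀ u ∈ Icc (0 : ι → ℝ) 1, ∀ c : ℝ, u + c • 1 ∈ Icc (0 : ι → ℝ) 1 → ψ (u + c • 1) = ψ u + c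

/-- The value that homogeneity and translation invariance force at `x` when `0 < l` and
`l • (x + c • 1)` lies in the cube. -/
noncomputable def rescaledValue (ψ : (ι → ℝ) → ℝ) (x : ι → ℝ) (l c : ℝ) : ℝ :=
  l⁻¹ * ψ (l • (x + c • 1)) - c

theorem rescaledValue_eq_of_le (hhom : CubeHomogeneous ψ) (hti : CubeTranslationInvariant ψ)
    {x : ι → ℝ} {l c l' c' : ℝ} (hl' : 0 < l') (hle : l' ≤ l)
    (hx : l • (x + c • 1) ∈ Icc (0 : ι → ℝ) 1) (hx' : l' • (x + c' • 1) ∈ Icc (0 : ι → ℝ) 1) :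
    rescaledValue ψ x l' c' = rescaledValue ψ x l c := by
  have hl : 0 < l := hl'.trans_le hle
  set u := l • (x + c • 1)
  have hv : (l' / l) • u ∈ Icc (0 : ι → ℝ) 1 :=
    (convex_Icc 0 1).smul_mem_of_zero_mem (left_mem_Icc.mpr zero_le_one) hx
      ⟨(div_pos hl' hl).le, (div_le_one hl).mpr hle⟩
  have hshift : l' • (x + c' • 1) = (l' / l) • u + (l' * (c' - c)) • 1 := by
    rw [smul_smul, div_mul_cancel₀ _ hl.ne']
    module
  unfold rescaledValue
  rw [hshift, hti _ hv _ (hshift ▸ hx'), hhom u hx _ (div_pos hl' hl) hv]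
  field_simp
  ring

theorem rescaledValue_eq (hhom : CubeHomogeneous ψ) (hti : CubeTranslationInvariant ψ)
    {x : ι → ℝ} {l c l' c' : ℝ} (hl : 0 < l) (hl' : 0 < l')
    (hx : l • (x + c • 1) ∈ Icc (0 : ι → ℝ) 1) (hx' : l' • (x + c' • 1) ∈ Icc (0 : ι → ℝ) 1) :
    rescaledValue ψ x l' c' = rescaledValue ψ x l c := by
  rcases le_total l' l with hle | hle
  · exact rescaledValue_eq_of_le hhom hti hl' hle hx hx'
  · exact (rescaledValue_eq_of_le hhom hti hl hle hx' hx).symm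

variable [Fintype ι]

noncomputable def cubeExtension (ψ : (ι → ℝ) → ℝ) (x : ι → ℝ) : ℝ :=
  rescaledValue ψ x (2 * ‖x‖ + 1)⁻¹ ‖x‖

theorem inv_smul_add_smul_one_mem_Icc {x : ι → ℝ} {c : ℝ} (h : ‖x‖ ≤ c) :
    (2 * c + 1)⁻¹ • (x + c • 1) ∈ Icc (0 : ι → ℝ) 1 := by
  have hc : 0 < 2 * c + 1 := by linarith [norm_nonneg x]
  have hx : ∀ i, -c ≤ x i ∧ x i ≤ c := fun i =>
    abs_le.mp ((Real.norm_eq_abs (x i)).symm.trans_le ((norm_le_pi_norm x i).trans h))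
  refine ⟨fun i => ?_, fun i => ?_⟩ <;>
    simp only [Pi.smul_apply, Pi.add_apply, Pi.one_apply, Pi.zero_apply, smul_eq_mul, mul_one]
  · have : 0 ≤ x i + c := by linarith [(hx i).1]
    positivity
  · rw [inv_mul_le_iff₀ hc]
    linarith [(hx i).2]

theorem cubeExtension_eq_rescaledValue (hhom : CubeHomogeneous ψ)
    (hti : CubeTranslationInvariant ψ) {x : ι → ℝ} {l c : ℝ} (hl : 0 < l)
    (hx : l • (x + c • 1) ∈ Icc (0 : ι → ℝ) 1) :
    cubeExtension ψ x = rescaledValue ψ x l c :=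
  rescaledValue_eq hhom hti hl (by positivity) hx (inv_smul_add_smul_one_mem_Icc le_rfl)

theorem cubeExtension_eq_of_mem (hhom : CubeHomogeneous ψ) (hti : CubeTranslationInvariant ψ)
    {u : ι → ℝ} (hu : u ∈ Icc (0 : ι → ℝ) 1) : cubeExtension ψ u = ψ u := by
  rw [cubeExtension_eq_rescaledValue hhom hti one_pos (c := 0) (by simpa using hu)]
  simp [rescaledValue]

theorem cubeExtension_smul (hhom : CubeHomogeneous ψ) (hti : CubeTranslationInvariant ψ)
    (x : ι → ℝ) {α : ℝ} (hα : 0 < α) : cubeExtension ψ (α • x) = α * cubeExtension ψ x := by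
  set l := (2 * ‖x‖ + 1)⁻¹
  set c := ‖x‖
  have hl : 0 < l := by positivity
  have hpt : (l / α) • (α • x + (α * c) • 1) = l • (x + c • 1) := by
    rw [show α • x + (α * c) • (1 : ι → ℝ) = α • (x + c • 1) by module, smul_smul,
      div_mul_cancel₀ _ hα.ne']
  have hx : l • (x + c • 1) ∈ Icc (0 : ι → ℝ) 1 := inv_smul_add_smul_one_mem_Icc le_rfl
  rw [cubeExtension_eq_rescaledValue hhom hti (div_pos hl hα) (hpt ▸ hx)]
  simp only [rescaledValue, hpt, cubeExtension, inv_div]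
  ring

theorem cubeExtension_add_smul_one (hhom : CubeHomogeneous ψ)
    (hti : CubeTranslationInvariant ψ) (x : ι → ℝ) (t : ℝ) :
    cubeExtension ψ (x + t • 1) = cubeExtension ψ x + t := by
  set l := (2 * ‖x‖ + 1)⁻¹
  set c := ‖x‖
  have hpt : l • (x + t • 1 + (c - t) • 1) = l • (x + c • 1) := by module
  have hx : l • (x + c • 1) ∈ Icc (0 : ι → ℝ) 1 := inv_smul_add_smul_one_mem_Icc le_rfl
  rw [cubeExtension_eq_rescaledValue hhom hti (by positivity) (hpt ▸ hx)]
  simp only [rescaledValue, hpt, cubeExtension]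
  ring

theorem exists_common_rescaling (x y : ι → ℝ) : ∃ l c : ℝ, 0 < l ∧
    l • (x + c • 1) ∈ Icc (0 : ι → ℝ) 1 ∧ l • (y + c • 1) ∈ Icc (0 : ι → ℝ) 1 :=
  ⟨_, ‖x‖ + ‖y‖, by positivity,
    inv_smul_add_smul_one_mem_Icc (le_add_of_nonneg_right (norm_nonneg y)),
    inv_smul_add_smul_one_mem_Icc (le_add_of_nonneg_left (norm_nonneg x))⟩

theorem cubeExtension_lt (hhom : CubeHomogeneous ψ) (hti : CubeTranslationInvariant ψ)
    (hmono : ∀ u v : ι → ℝ, u ∈ Icc (0 : ι → ℝ) 1 → v ∈ Icc (0 : ι → ℝ) 1 →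
      (∀ i, v i < u i) → ψ v < ψ u)
    {x y : ι → ℝ} (hxy : ∀ i, x i < y i) : cubeExtension ψ x < cubeExtension ψ y := by
  obtain ⟨l, c, hl, hx, hy⟩ := exists_common_rescaling x y
  rw [cubeExtension_eq_rescaledValue hhom hti hl hx,
    cubeExtension_eq_rescaledValue hhom hti hl hy]
  have hψ : ψ (l • (x + c • 1)) < ψ (l • (y + c • 1)) :=
    hmono _ _ hy hx fun i => by
      simpa using mul_lt_mul_of_pos_left (add_lt_add_left (hxy i) c) hl
  unfold rescaledValue
  gcongr

theorem quasiconcaveOn_cubeExtension (hhom : CubeHomogeneous ψ)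
    (hti : CubeTranslationInvariant ψ)
    (hqc : ∀ u v : ι → ℝ, u ∈ Icc (0 : ι → ℝ) 1 → v ∈ Icc (0 : ι → ℝ) 1 →
      ∀ α : ℝ, α ∈ Icc (0 : ℝ) 1 → min (ψ u) (ψ v) ≤ ψ (α • u + (1 - α) • v)) :
    QuasiconcaveOn ℝ univ (cubeExtension ψ) := by
  refine quasiconcaveOn_iff_min_le.mpr ⟨convex_univ, fun x _ y _ a b ha hb hab => ?_⟩
  obtain rfl : b = 1 - a := by linarith
  obtain ⟨l, c, hl, hx, hy⟩ := exists_common_rescaling x y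
  have hpt : l • (a • x + (1 - a) • y + c • 1)
      = a • (l • (x + c • 1)) + (1 - a) • (l • (y + c • 1)) := by module
  have hz := (convex_Icc (0 : ι → ℝ) 1) hx hy ha hb hab
  rw [← hpt] at hz
  rw [cubeExtension_eq_rescaledValue hhom hti hl hx,
    cubeExtension_eq_rescaledValue hhom hti hl hy,
    cubeExtension_eq_rescaledValue hhom hti hl hz]
  have hread : Monotone fun v : ℝ => l⁻¹ * v - c := fun v w hvw => by
    dsimp only
    gcongr
  unfold rescaledValue
  rw [← hread.map_min, hpt]
  exact hread (hqc _ _ hx hy a ⟨ha, by linarith⟩)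

end GilboaSchmeidler

open GilboaSchmeidler

theorem stmt_6_general {n : ℕ} (ψ : (Fin n → ℝ) → ℝ)
    (hmono : ∀ u v : Fin n → ℝ, u ∈ Set.Icc (0 : Fin n → ℝ) 1 →
      v ∈ Set.Icc (0 : Fin n → ℝ) 1 → (∀ i, v i < u i) → ψ v < ψ u)
    (hqc : ∀ u v : Fin n → ℝ, u ∈ Set.Icc (0 : Fin n → ℝ) 1 →
      v ∈ Set.Icc (0 : Fin n → ℝ) 1 → ∀ α : ℝ, α ∈ Set.Icc (0 : ℝ) 1 →
      min (ψ u) (ψ v) ≤ ψ (α • u + (1 - α) • v))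
    (hhom : ∀ u : Fin n → ℝ, u ∈ Set.Icc (0 : Fin n → ℝ) 1 → ∀ α : ℝ, 0 < α →
      α • u ∈ Set.Icc (0 : Fin n → ℝ) 1 → ψ (α • u) = α * ψ u)
    (hti : ∀ u : Fin n → ℝ, u ∈ Set.Icc (0 : Fin n → ℝ) 1 → ∀ c : ℝ,
      (u + fun _ => c) ∈ Set.Icc (0 : Fin n → ℝ) 1 →
      ψ (u + fun _ => c) = ψ u + c) :
    ∃ M : Set (Fin n → ℝ), M.Nonempty ∧ IsClosed M ∧ Convex ℝ M ∧
      M ⊆ {μ : Fin n → ℝ | (∀ i, 0 ≤ μ i) ∧ ∑ i, μ i = 1} ∧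
      ∀ u ∈ Set.Icc (0 : Fin n → ℝ) 1,
        IsLeast ((fun μ : Fin n → ℝ => ∑ i, μ i * u i) '' M) (ψ u) := by
  have hconst : ∀ c : ℝ, c • (1 : Fin n → ℝ) = fun _ => c := fun c => by ext; simp
  have hti' : CubeTranslationInvariant ψ := fun u hu c => by
    simpa only [hconst] using hti u hu c
  have hΨti := cubeExtension_add_smul_one hhom hti'
  have hΨmono := monotone_of_lt_of_add_smul_one
    (fun _ _ => cubeExtension_lt hhom hti' hmono) hΨti
  have hrep := exists_mem_stdSimplex_le_of_quasiconcaveOn hΨmono hΨti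
    (fun x _ => cubeExtension_smul hhom hti' x) (quasiconcaveOn_cubeExtension hhom hti' hqc)
  refine exists_weight_set_isLeast ⟨0, left_mem_Icc.mpr zero_le_one⟩ fun u hu => ?_
  obtain ⟨μ, hμ, hle, heq⟩ := hrep u
  refine ⟨μ, hμ, fun v hv => ?_, ?_⟩
  · rw [← cubeExtension_eq_of_mem hhom hti' hv]
    exact hle v
  · rw [heq, cubeExtension_eq_of_mem hhom hti' hu]

/-- Analytic core of the paper's Theorem 1 (Gilboa–Schmeidler-type
representation): a monotonic, continuous, quasiconcave, homogeneous and
translation-invariant function on the unit cube is the minimum of weighted sums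
over a nonempty closed convex set of weights in the probability simplex. -/
theorem stmt_6 {n : ℕ} (hn : 1 ≤ n) (ψ : (Fin n → ℝ) → ℝ)
    (hmono : ∀ u v : Fin n → ℝ, u ∈ Set.Icc (0 : Fin n → ℝ) 1 →
      v ∈ Set.Icc (0 : Fin n → ℝ) 1 → (∀ i, v i < u i) → ψ v < ψ u)
    (hcont : ContinuousOn ψ (Set.Icc (0 : Fin n → ℝ) 1))
    (hqc : ∀ u v : Fin n → ℝ, u ∈ Set.Icc (0 : Fin n → ℝ) 1 →
      v ∈ Set.Icc (0 : Fin n → ℝ) 1 → ∀ α : ℝ, α ∈ Set.Icc (0 : ℝ) 1 →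
      min (ψ u) (ψ v) ≤ ψ (α • u + (1 - α) • v))
    (hhom : ∀ u : Fin n → ℝ, u ∈ Set.Icc (0 : Fin n → ℝ) 1 → ∀ α : ℝ, 0 < α →
      α • u ∈ Set.Icc (0 : Fin n → ℝ) 1 → ψ (α • u) = α * ψ u)
    (hti : ∀ u : Fin n → ℝ, u ∈ Set.Icc (0 : Fin n → ℝ) 1 → ∀ c : ℝ,
      (u + fun _ => c) ∈ Set.Icc (0 : Fin n → ℝ) 1 →
      ψ (u + fun _ => c) = ψ u + c) :
    ∃ M : Set (Fin n → ℝ), M.Nonempty ∧ IsClosed M ∧ Convex ℝ M ∧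
      M ⊆ {μ : Fin n → ℝ | (∀ i, 0 ≤ μ i) ∧ ∑ i, μ i = 1} ∧
      ∀ u ∈ Set.Icc (0 : Fin n → ℝ) 1,
        IsLeast ((fun μ : Fin n → ℝ => ∑ i, μ i * u i) '' M) (ψ u) :=
  stmt_6_general ψ hmono hqc hhom hti
end

section
/- Let n ≥ 1 and let ψ : [0,1]^n → ℝ be monotonic and continuous with ψ(c·1) = c for all c ∈ [0,1]. Suppose that for all u, v, w ∈ [0,1]^n and all α ∈ (0,1): ψ(u) ≥ ψ(v) if and only if ψ(αu + (1−α)w) ≥ ψ(αv + (1−α)w). Then there exists μ ∈ Δ_n such that ψ(u) = Σ_{i=1}^n μ_i u_i for all u ∈ [0,1]^n. -/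
/-!
Strict monotonicity and continuity give weak monotonicity, so `ψ` maps the cube into `[0, 1]` and
each value `ψ u` is attained at the diagonal point `ψ u • 1`. Mixture independence lets one swap
`u` and `v` for these diagonal points inside a mixture, so `ψ` is affine on the cube. Being `0` at
`0`, it is then additive and positively homogeneous there, hence `ψ u = ∑ i, ψ (eᵢ) * u i` with
nonnegative weights summing to `ψ 1 = 1`.
-/

open Set

theorem ContinuousOn.monotoneOn_Icc_of_lt {ι : Type*} {ψ : (ι → ℝ) → ℝ}
    (hcont : ContinuousOn ψ (Icc 0 1))
    (hlt : ∀ u v : ι → ℝ, u ∈ Icc 0 1 → v ∈ Icc 0 1 → (∀ i, v i < u i) → ψ v < ψ u) :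
    MonotoneOn ψ (Icc 0 1) := by
  intro v hv u hu hvu
  have h0 : (0 : ι → ℝ) ∈ Icc 0 1 := left_mem_Icc.2 zero_le_one
  have h1 : (1 : ι → ℝ) ∈ Icc 0 1 := right_mem_Icc.2 zero_le_one
  -- Push `u` towards `1` and `v` towards `0`; for `t > 0` the two points are strictly ordered.
  have hpath : ∀ {a b : ι → ℝ}, a ∈ Icc 0 1 → b ∈ Icc 0 1 →
      ContinuousWithinAt (fun t : ℝ => ψ (AffineMap.lineMap a b t)) (Ioc 0 1) 0 := fun ha hb =>
    ((hcont.comp AffineMap.lineMap_continuous.continuousOn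
      fun _ ht => (convex_Icc 0 1).lineMap_mem ha hb ht) 0 (left_mem_Icc.2 zero_le_one)).mono
      Ioc_subset_Icc_self
  have hstrict : ∀ t ∈ Ioc (0 : ℝ) 1,
      ψ (AffineMap.lineMap v 0 t) ≤ ψ (AffineMap.lineMap u 1 t) := fun t ht =>
    (hlt _ _ ((convex_Icc 0 1).lineMap_mem hu h1 (Ioc_subset_Icc_self ht))
      ((convex_Icc 0 1).lineMap_mem hv h0 (Ioc_subset_Icc_self ht)) fun i => by
        simp only [AffineMap.lineMap_apply_module, Pi.add_apply, Pi.smul_apply, smul_eq_mul,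
          Pi.zero_apply, Pi.one_apply]
        nlinarith [hvu i, ht.1, ht.2]).le
  simpa using ContinuousWithinAt.closure_le (by simp [closure_Ioc zero_ne_one])
    (hpath hv h0) (hpath hu h1) hstrict

section Mixture

variable {E : Type*} [AddCommGroup E] [Module ℝ E]

def MixtureIndependentOn (ψ : E → ℝ) (K : Set E) : Prop :=
  ∀ u v w, u ∈ K → v ∈ K → w ∈ K → ∀ α ∈ Ioo (0 : ℝ) 1,
    (ψ v ≤ ψ u ↔ ψ (α • v + (1 - α) • w) ≤ ψ (α • u + (1 - α) • w))

def AffineOn (ψ : E → ℝ) (K : Set E) : Prop :=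
  ∀ ⦃u⦄, u ∈ K → ∀ ⦃v⦄, v ∈ K → ∀ ⦃α : ℝ⦄, α ∈ Icc (0 : ℝ) 1 →
    ψ (α • u + (1 - α) • v) = α * ψ u + (1 - α) * ψ v

variable {ψ : E → ℝ} {K : Set E}

theorem MixtureIndependentOn.map_mix_eq (h : MixtureIndependentOn ψ K) {u v w : E}
    (hu : u ∈ K) (hv : v ∈ K) (hw : w ∈ K) {α : ℝ} (hα : α ∈ Ioo 0 1) (huv : ψ u = ψ v) :
    ψ (α • u + (1 - α) • w) = ψ (α • v + (1 - α) • w) :=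
  le_antisymm ((h v u w hv hu hw α hα).1 huv.le) ((h u v w hu hv hw α hα).1 huv.ge)

/-- Mixing `u` and `v` is replaced, one argument at a time, by mixing the points `ψ u • e` and
`ψ v • e` of the diagonal, on which `ψ` is the identity. -/
theorem MixtureIndependentOn.affineOn (h : MixtureIndependentOn ψ K) (e : E)
    (hdiag : ∀ c ∈ Icc (0 : ℝ) 1, c • e ∈ K ∧ ψ (c • e) = c) (hrange : MapsTo ψ K (Icc 0 1)) :
    AffineOn ψ K := by
  intro u hu v hv α hα
  obtain rfl | rfl | hα := eq_endpoints_or_mem_Ioo_of_mem_Icc hα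
  · simp
  · simp
  obtain ⟨hcK, hc⟩ := hdiag (ψ u) (hrange hu)
  obtain ⟨hdK, hd⟩ := hdiag (ψ v) (hrange hv)
  have hα' : 1 - α ∈ Ioo (0 : ℝ) 1 := ⟨by linarith [hα.2], by linarith [hα.1]⟩
  have hmid : α * ψ u + (1 - α) * ψ v ∈ Icc (0 : ℝ) 1 := by
    simpa using (convex_Icc (0 : ℝ) 1) (hrange hu) (hrange hv) hα.1.le hα'.1.le (by ring)
  calc ψ (α • u + (1 - α) • v)
      = ψ (α • (ψ u • e) + (1 - α) • v) := h.map_mix_eq hu hcK hv hα hc.symm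
    _ = ψ ((1 - α) • v + (1 - (1 - α)) • (ψ u • e)) := by rw [sub_sub_cancel, add_comm]
    _ = ψ ((1 - α) • (ψ v • e) + (1 - (1 - α)) • (ψ u • e)) :=
      h.map_mix_eq hv hdK hcK hα' hd.symm
    _ = ψ ((α * ψ u + (1 - α) * ψ v) • e) := by congr 1; module
    _ = α * ψ u + (1 - α) * ψ v := (hdiag _ hmid).2

theorem AffineOn.map_smul (h : AffineOn ψ K) (h0 : (0 : E) ∈ K) (hψ0 : ψ 0 = 0) {u : E}
    (hu : u ∈ K) {t : ℝ} (ht : t ∈ Icc (0 : ℝ) 1) : ψ (t • u) = t * ψ u := by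
  simpa [hψ0] using h hu h0 ht

theorem AffineOn.map_add (h : AffineOn ψ K) (h0 : (0 : E) ∈ K) (hψ0 : ψ 0 = 0) {u v : E}
    (hu : u ∈ K) (hv : v ∈ K) (huv : u + v ∈ K) : ψ (u + v) = ψ u + ψ v := by
  have hhalf : (2⁻¹ : ℝ) ∈ Icc (0 : ℝ) 1 := by norm_num
  have hmid := h hu hv hhalf
  rw [show (2⁻¹ : ℝ) • u + (1 - (2⁻¹ : ℝ)) • v = (2⁻¹ : ℝ) • (u + v) by module,
    h.map_smul h0 hψ0 huv hhalf] at hmid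
  linarith

end Mixture

section UnitCube

variable {ι : Type*} [DecidableEq ι]

theorem Pi.single_mem_Icc_zero_one (i : ι) {t : ℝ} (ht : t ∈ Icc (0 : ℝ) 1) :
    Pi.single i t ∈ Icc (0 : ι → ℝ) 1 :=
  ⟨Pi.single_nonneg.2 ht.1, fun j => by
    rcases eq_or_ne j i with rfl | hj <;> simp [*, ht.2]⟩

theorem sum_single_mem_Icc_zero_one {u : ι → ℝ} (hu : u ∈ Icc (0 : ι → ℝ) 1) (s : Finset ι) :
    ∑ i ∈ s, Pi.single i (u i) ∈ Icc (0 : ι → ℝ) 1 := by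
  have hcoord : ∀ j, (∑ i ∈ s, Pi.single i (u i)) j = if j ∈ s then u j else 0 := fun j => by
    simp [Finset.sum_apply, Pi.single_apply]
  refine ⟨fun j => ?_, fun j => ?_⟩ <;> rw [hcoord] <;> split_ifs
  · exact hu.1 j
  · exact le_rfl
  · exact hu.2 j
  · exact zero_le_one

theorem AffineOn.eq_sum_mul [Fintype ι] {ψ : (ι → ℝ) → ℝ} (h : AffineOn ψ (Icc 0 1))
    (hψ0 : ψ 0 = 0) {u : ι → ℝ} (hu : u ∈ Icc 0 1) : ψ u = ∑ i, ψ (Pi.single i 1) * u i := by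
  have h0 : (0 : ι → ℝ) ∈ Icc 0 1 := left_mem_Icc.2 zero_le_one
  have hsingle : ∀ i, ψ (Pi.single i (u i)) = ψ (Pi.single i 1) * u i := fun i => by
    rw [show Pi.single i (u i) = u i • Pi.single i (1 : ℝ) by
      rw [← Pi.single_smul', smul_eq_mul, mul_one], h.map_smul h0 hψ0
      (Pi.single_mem_Icc_zero_one i ⟨zero_le_one, le_rfl⟩) ⟨hu.1 i, hu.2 i⟩, mul_comm]
  have hpartial : ∀ s : Finset ι,
      ψ (∑ i ∈ s, Pi.single i (u i)) = ∑ i ∈ s, ψ (Pi.single i 1) * u i := by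
    intro s
    induction s using Finset.induction with
    | empty => simpa using hψ0
    | insert a s ha ih =>
      have hsum := sum_single_mem_Icc_zero_one hu (insert a s)
      rw [Finset.sum_insert ha] at hsum ⊢
      rw [Finset.sum_insert ha, h.map_add h0 hψ0 (Pi.single_mem_Icc_zero_one a ⟨hu.1 a, hu.2 a⟩)
        (sum_single_mem_Icc_zero_one hu s) hsum, ih, hsingle]
  simpa [Finset.univ_sum_single] using hpartial Finset.univ

end UnitCube

theorem stmt_8_general {n : ℕ} (ψ : (Fin n → ℝ) → ℝ)
    (hmono : ∀ u v : Fin n → ℝ, u ∈ Set.Icc (0 : Fin n → ℝ) 1 →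
      v ∈ Set.Icc (0 : Fin n → ℝ) 1 → (∀ i, v i < u i) → ψ v < ψ u)
    (hcont : ContinuousOn ψ (Set.Icc (0 : Fin n → ℝ) 1))
    (hdiag : ∀ c : ℝ, c ∈ Set.Icc (0 : ℝ) 1 → ψ (fun _ => c) = c)
    (hmix : ∀ u v w : Fin n → ℝ, u ∈ Set.Icc (0 : Fin n → ℝ) 1 →
      v ∈ Set.Icc (0 : Fin n → ℝ) 1 → w ∈ Set.Icc (0 : Fin n → ℝ) 1 →
      ∀ α ∈ Set.Ioo (0 : ℝ) 1,
      (ψ v ≤ ψ u ↔ ψ (α • v + (1 - α) • w) ≤ ψ (α • u + (1 - α) • w))) :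
    ∃ μ : Fin n → ℝ, (∀ i, 0 ≤ μ i) ∧ (∑ i, μ i) = 1 ∧
      ∀ u ∈ Set.Icc (0 : Fin n → ℝ) 1, ψ u = ∑ i, μ i * u i := by
  have hconst : ∀ c ∈ Icc (0 : ℝ) 1, c • (1 : Fin n → ℝ) ∈ Icc 0 1 ∧ ψ (c • 1) = c :=
    fun c hc => ⟨⟨fun _ => by simpa using hc.1, fun _ => by simpa using hc.2⟩,
      by convert hdiag c hc using 2; ext; simp⟩
  have hψ0 : ψ 0 = 0 := by simpa using (hconst 0 (left_mem_Icc.2 zero_le_one)).2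
  have hψ1 : ψ 1 = 1 := by simpa using (hconst 1 (right_mem_Icc.2 zero_le_one)).2
  have hmonoOn := hcont.monotoneOn_Icc_of_lt hmono
  have hrange : MapsTo ψ (Icc 0 1) (Icc 0 1) := hψ0 ▸ hψ1 ▸ hmonoOn.mapsTo_Icc
  have haff : AffineOn ψ (Icc 0 1) := MixtureIndependentOn.affineOn hmix 1 hconst hrange
  refine ⟨fun i => ψ (Pi.single i 1), fun i => ?_, ?_, fun u hu => haff.eq_sum_mul hψ0 hu⟩
  · exact hψ0 ▸ (hrange (Pi.single_mem_Icc_zero_one i (right_mem_Icc.2 zero_le_one))).1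
  · simpa [hψ1] using (haff.eq_sum_mul hψ0 (right_mem_Icc.2 zero_le_one)).symm

/-- Analytic core of the paper's Theorem 2 (relative utilitarianism): a
monotonic, continuous function on the unit cube with `ψ(c·1) = c` whose ranking
is invariant under mixtures with arbitrary common vectors is a weighted sum
with weights in the probability simplex. -/
theorem stmt_8 {n : ℕ} (hn : 1 ≤ n) (ψ : (Fin n → ℝ) → ℝ)
    (hmono : ∀ u v : Fin n → ℝ, u ∈ Set.Icc (0 : Fin n → ℝ) 1 →
      v ∈ Set.Icc (0 : Fin n → ℝ) 1 → (∀ i, v i < u i) → ψ v < ψ u)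
    (hcont : ContinuousOn ψ (Set.Icc (0 : Fin n → ℝ) 1))
    (hdiag : ∀ c : ℝ, c ∈ Set.Icc (0 : ℝ) 1 → ψ (fun _ => c) = c)
    (hmix : ∀ u v w : Fin n → ℝ, u ∈ Set.Icc (0 : Fin n → ℝ) 1 →
      v ∈ Set.Icc (0 : Fin n → ℝ) 1 → w ∈ Set.Icc (0 : Fin n → ℝ) 1 →
      ∀ α ∈ Set.Ioo (0 : ℝ) 1,
      (ψ v ≤ ψ u ↔ ψ (α • v + (1 - α) • w) ≤ ψ (α • u + (1 - α) • w))) :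
    ∃ μ : Fin n → ℝ, (∀ i, 0 ≤ μ i) ∧ (∑ i, μ i) = 1 ∧
      ∀ u ∈ Set.Icc (0 : Fin n → ℝ) 1, ψ u = ∑ i, μ i * u i :=
  stmt_8_general ψ hmono hcont hdiag hmix
end

section
/- Let n ≥ 2 and let ≿ be a complete and transitive binary relation on [0,1]^n satisfying: (i) u ≿ v whenever u ≥ v; (ii) u ≻ v whenever u ≫ v; (iii) ≿ is symmetric; and (iv) ≿ is compromising. Then for all u, v ∈ [0,1]^n with min_{1 ≤ i ≤ n} u_i > min_{1 ≤ i ≤ n} v_i, one has u ≻ v. -/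
lemma stmt10_cube_iff {n : ℕ} {x : Fin n → ℝ} :
    x ∈ Set.Icc (0 : Fin n → ℝ) 1 ↔ ∀ i, 0 ≤ x i ∧ x i ≤ 1 := by
  simp [Set.mem_Icc, Pi.le_def, forall_and]

/-- Main inductive lemma: if all coords of `v` are `< 1` and some coord is `< t`,
then there is `z ≿ v` with all coords `< t`. -/
lemma stmt10_auxM {n : ℕ}
    (R : (Fin n → ℝ) → (Fin n → ℝ) → Prop)
    (htrans : ∀ u v w : Fin n → ℝ, u ∈ Set.Icc (0 : Fin n → ℝ) 1 →
      v ∈ Set.Icc (0 : Fin n → ℝ) 1 → w ∈ Set.Icc (0 : Fin n → ℝ) 1 →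
      R u v → R v w → R u w)
    (hpareto : ∀ u v : Fin n → ℝ, u ∈ Set.Icc (0 : Fin n → ℝ) 1 →
      v ∈ Set.Icc (0 : Fin n → ℝ) 1 → (∀ i, v i ≤ u i) → R u v)
    (hsymm : ∀ u : Fin n → ℝ, u ∈ Set.Icc (0 : Fin n → ℝ) 1 →
      ∀ π : Equiv.Perm (Fin n), R u (u ∘ π) ∧ R (u ∘ π) u)
    (hcompro : ∀ u v w : Fin n → ℝ, u ∈ Set.Icc (0 : Fin n → ℝ) 1 →
      v ∈ Set.Icc (0 : Fin n → ℝ) 1 → w ∈ Set.Icc (0 : Fin n → ℝ) 1 →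
      (∀ i, u i ≠ v i) →
      (∀ i, min (u i) (v i) < w i ∧ w i < max (u i) (v i)) →
      R w u ∨ R w v)
    (t : ℝ) (ht0 : 0 < t) (ht1 : t < 1) :
    ∀ k : ℕ, ∀ v : Fin n → ℝ, v ∈ Set.Icc (0 : Fin n → ℝ) 1 → (∀ i, v i < 1) →
      (∃ s, v s < t) →
      (Finset.univ.filter (fun i => t ≤ v i)).card ≤ k →
      ∃ z, z ∈ Set.Icc (0 : Fin n → ℝ) 1 ∧ R z v ∧ ∀ i, z i < t := by
  intro k
  induction k with
  | zero =>
    intro v hv hv1 _ hcard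
    refine ⟨v, hv, hpareto v v hv hv (fun i => le_rfl), fun i => ?_⟩
    by_contra h
    push_neg at h
    have : i ∈ Finset.univ.filter (fun i => t ≤ v i) := by
      simp [h]
    simpa [Finset.card_eq_zero.mp (Nat.le_zero.mp hcard)] using this
  | succ k ih =>
    intro v hv hv1 hsm hcard
    by_cases hle : (Finset.univ.filter (fun i => t ≤ v i)).card ≤ k
    · exact ih v hv hv1 hsm hle
    -- there is a big coordinate b
    have hne : (Finset.univ.filter (fun i => t ≤ v i)).Nonempty := by
      rw [Finset.nonempty_iff_ne_empty]
      intro h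
      simp [h] at hle
    obtain ⟨b, hb⟩ := hne
    have hvb : t ≤ v b := by simpa using hb
    obtain ⟨s, hvs⟩ := hsm
    have hbs : b ≠ s := by
      intro h; rw [h] at hvb; linarith
    have hv' := stmt10_cube_iff.mp hv
    set σ : Equiv.Perm (Fin n) := Equiv.swap b s with hσ
    set y : Fin n → ℝ := fun i =>
      if i = b then v s else if i = s then v b
      else if v i < t then (v i + t)/2 else (v i + 1)/2 with hy
    set w : Fin n → ℝ := fun i =>
      if i = b then (v s + t)/2 else if i = s then (v s + t)/2
      else (v i + y i)/2 with hw
    have hyb : y b = v s := by simp [hy]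
    have hys : y s = v b := by simp [hy, hbs.symm, hbs]
    have hyo : ∀ i, i ≠ b → i ≠ s → y i = if v i < t then (v i + t)/2 else (v i + 1)/2 := by
      intro i h1 h2; simp [hy, h1, h2]
    have hwb : w b = (v s + t)/2 := by simp [hw]
    have hws : w s = (v s + t)/2 := by simp [hw, hbs.symm, hbs]
    have hwo : ∀ i, i ≠ b → i ≠ s → w i = (v i + y i)/2 := by
      intro i h1 h2; simp [hw, h1, h2]
    -- basic coordinatewise facts
    have hyfacts : ∀ i, 0 ≤ y i ∧ y i < 1 ∧ v i ≠ y i := by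
      intro i
      by_cases h1 : i = b
      · rw [h1, hyb]
        exact ⟨(hv' s).1, hv1 s, by intro h; rw [← h] at hvs; linarith⟩
      by_cases h2 : i = s
      · rw [h2, hys]
        exact ⟨(hv' b).1, hv1 b, by intro h; rw [h] at hvs; linarith⟩
      rw [hyo i h1 h2]
      by_cases h3 : v i < t
      · simp only [h3, if_pos]
        have := (hv' i).1
        refine ⟨by linarith, by linarith [hv1 i], by intro h; nlinarith⟩
      · simp only [h3, if_neg, ite_false]
        have := hv1 i
        have := (hv' i).1
        constructor; · linarith
        constructor; · linarith
        intro h; nlinarith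
    have hwfacts : ∀ i, min (v i) (y i) < w i ∧ w i < max (v i) (y i) := by
      intro i
      by_cases h1 : i = b
      · rw [h1, hwb, hyb]
        rw [min_comm, min_eq_left (by linarith : v s ≤ v b),
            max_eq_left (by linarith : v s ≤ v b)]
        constructor <;> linarith
      by_cases h2 : i = s
      · rw [h2, hws, hys]
        rw [min_eq_left (by linarith : v s ≤ v b),
            max_eq_right (by linarith : v s ≤ v b)]
        constructor <;> linarith
      rw [hwo i h1 h2, hyo i h1 h2]
      by_cases h3 : v i < t
      · simp only [h3, if_pos]
        rw [min_eq_left (by linarith), max_eq_right (by linarith)]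
        constructor <;> linarith
      · push_neg at h3
        have := hv1 i
        simp only [not_lt.mpr h3, ite_false]
        rw [min_eq_left (by linarith), max_eq_right (by linarith)]
        constructor <;> linarith
    have hwcube : w ∈ Set.Icc (0 : Fin n → ℝ) 1 := by
      rw [stmt10_cube_iff]
      intro i
      have h1 := (hwfacts i).1
      have h2 := (hwfacts i).2
      have h3 := (hv' i)
      have h4 := (hyfacts i)
      constructor
      · have : (0:ℝ) ≤ min (v i) (y i) := le_min h3.1 h4.1
        linarith
      · have : max (v i) (y i) ≤ 1 := max_le h3.2 (le_of_lt h4.2.1)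
        linarith
    have hw1 : ∀ i, w i < 1 := by
      intro i
      have h2 := (hwfacts i).2
      have : max (v i) (y i) ≤ 1 := max_le (hv' i).2 (le_of_lt (hyfacts i).2.1)
      linarith
    have hycube : y ∈ Set.Icc (0 : Fin n → ℝ) 1 := by
      rw [stmt10_cube_iff]
      intro i
      exact ⟨(hyfacts i).1, le_of_lt (hyfacts i).2.1⟩
    have hvσcube : (v ∘ σ) ∈ Set.Icc (0 : Fin n → ℝ) 1 := by
      rw [stmt10_cube_iff]
      intro i
      exact hv' (σ i)
    -- y dominates v ∘ σ
    have hdom : ∀ i, (v ∘ σ) i ≤ y i := by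
      intro i
      by_cases h1 : i = b
      · subst h1
        simp only [Function.comp_apply, hσ, Equiv.swap_apply_left]
        rw [hyb]
      by_cases h2 : i = s
      · subst h2
        simp only [Function.comp_apply, hσ, Equiv.swap_apply_right]
        rw [hys]
      · simp only [Function.comp_apply, hσ, Equiv.swap_apply_of_ne_of_ne h1 h2]
        rw [hyo i h1 h2]
        by_cases h3 : v i < t
        · simp only [h3, if_pos]; linarith
        · push_neg at h3
          simp only [not_lt.mpr h3, ite_false]
          linarith [hv1 i]
    have hyv : R y v := by
      have h1 : R y (v ∘ σ) := hpareto y (v ∘ σ) hycube hvσcube hdom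
      have h2 : R (v ∘ σ) v := (hsymm v hv σ).2
      exact htrans y (v ∘ σ) v hycube hvσcube hv h1 h2
    have hwv : R w v := by
      rcases hcompro v y w hv hycube hwcube (fun i => (hyfacts i).2.2) hwfacts with h | h
      · exact h
      · exact htrans w y v hwcube hycube hv h hyv
    -- the filter shrank
    have hsub : Finset.univ.filter (fun i => t ≤ w i) ⊆
        (Finset.univ.filter (fun i => t ≤ v i)).erase b := by
      intro i hi
      have hwi : t ≤ w i := by simpa using hi
      have h1 : i ≠ b := by
        intro h; subst h; rw [hwb] at hwi; linarith
      have h2 : i ≠ s := by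
        intro h; subst h; rw [hws] at hwi; linarith
      rw [Finset.mem_erase]
      refine ⟨h1, ?_⟩
      simp only [Finset.mem_filter, Finset.mem_univ, true_and]
      by_contra h3
      push_neg at h3
      rw [hwo i h1 h2, hyo i h1 h2] at hwi
      simp only [h3, if_pos] at hwi
      linarith
    have hcard' : (Finset.univ.filter (fun i => t ≤ w i)).card ≤ k := by
      have h1 := Finset.card_le_card hsub
      rw [Finset.card_erase_of_mem hb] at h1
      omega
    obtain ⟨z, hz, hzw, hzt⟩ := ih w hwcube hw1 ⟨s, by rw [hws]; linarith⟩ hcard'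
    exact ⟨z, hz, htrans z w v hz hwcube hv hzw hwv, hzt⟩

/-- First step: drop the assumption that coordinates are `< 1`. -/
lemma stmt10_auxF {n : ℕ}
    (R : (Fin n → ℝ) → (Fin n → ℝ) → Prop)
    (htrans : ∀ u v w : Fin n → ℝ, u ∈ Set.Icc (0 : Fin n → ℝ) 1 →
      v ∈ Set.Icc (0 : Fin n → ℝ) 1 → w ∈ Set.Icc (0 : Fin n → ℝ) 1 →
      R u v → R v w → R u w)
    (hpareto : ∀ u v : Fin n → ℝ, u ∈ Set.Icc (0 : Fin n → ℝ) 1 →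
      v ∈ Set.Icc (0 : Fin n → ℝ) 1 → (∀ i, v i ≤ u i) → R u v)
    (hstrict : ∀ u v : Fin n → ℝ, u ∈ Set.Icc (0 : Fin n → ℝ) 1 →
      v ∈ Set.Icc (0 : Fin n → ℝ) 1 → (∀ i, v i < u i) → R u v ∧ ¬ R v u)
    (hsymm : ∀ u : Fin n → ℝ, u ∈ Set.Icc (0 : Fin n → ℝ) 1 →
      ∀ π : Equiv.Perm (Fin n), R u (u ∘ π) ∧ R (u ∘ π) u)
    (hcompro : ∀ u v w : Fin n → ℝ, u ∈ Set.Icc (0 : Fin n → ℝ) 1 →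
      v ∈ Set.Icc (0 : Fin n → ℝ) 1 → w ∈ Set.Icc (0 : Fin n → ℝ) 1 →
      (∀ i, u i ≠ v i) →
      (∀ i, min (u i) (v i) < w i ∧ w i < max (u i) (v i)) →
      R w u ∨ R w v)
    (t : ℝ) (ht0 : 0 < t) (ht1 : t < 1)
    (v : Fin n → ℝ) (hv : v ∈ Set.Icc (0 : Fin n → ℝ) 1) (hsm : ∃ s, v s < t) :
    ∃ z, z ∈ Set.Icc (0 : Fin n → ℝ) 1 ∧ R z v ∧ ∀ i, z i < t := by
  obtain ⟨s, hvs⟩ := hsm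
  have hv' := stmt10_cube_iff.mp hv
  set t' : ℝ := (t + 1) / 2 with ht'
  have htt' : t < t' := by rw [ht']; linarith
  have ht'1 : t' < 1 := by rw [ht']; linarith
  set p : ℝ := (2 * t' + 1) / 3 with hp
  set q : ℝ := (t' + 2) / 3 with hq
  have hpq : p < q := by rw [hp, hq]; linarith
  have ht'p : t' < p := by rw [hp]; linarith
  have hq1 : q < 1 := by rw [hq]; linarith
  set y : Fin n → ℝ := fun i => if v i = p then q else p with hy
  have hyfacts : ∀ i, t' < y i ∧ y i < 1 ∧ v i ≠ y i := by
    intro i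
    rw [hy]
    by_cases h : v i = p
    · simp only [h, if_pos]
      exact ⟨by linarith, hq1, by exact ne_of_lt hpq⟩
    · simp only [h, if_neg, ite_false]
      exact ⟨ht'p, by linarith, h⟩
  set w : Fin n → ℝ := fun i => if v i < t then (v i + t)/2 else (v i + y i)/2 with hw
  have hwfacts : ∀ i, min (v i) (y i) < w i ∧ w i < max (v i) (y i) := by
    intro i
    obtain ⟨hy1, hy2, hy3⟩ := hyfacts i
    rw [hw]
    by_cases h : v i < t
    · simp only [h, if_pos]
      rw [min_eq_left (by linarith), max_eq_right (by linarith)]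
      constructor <;> linarith
    · push_neg at h
      simp only [not_lt.mpr h, ite_false]
      rcases lt_or_gt_of_ne hy3 with h2 | h2
      · rw [min_eq_left (le_of_lt h2), max_eq_right (le_of_lt h2)]
        constructor <;> linarith
      · rw [min_eq_right (le_of_lt h2), max_eq_left (le_of_lt h2)]
        constructor <;> linarith
  have hycube : y ∈ Set.Icc (0 : Fin n → ℝ) 1 := by
    rw [stmt10_cube_iff]
    intro i
    obtain ⟨hy1, hy2, _⟩ := hyfacts i
    exact ⟨by linarith, le_of_lt hy2⟩
  have hwcube : w ∈ Set.Icc (0 : Fin n → ℝ) 1 := by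
    rw [stmt10_cube_iff]
    intro i
    obtain ⟨h1, h2⟩ := hwfacts i
    obtain ⟨hy1, hy2, _⟩ := hyfacts i
    obtain ⟨h3, h4⟩ := hv' i
    constructor
    · have : (0:ℝ) ≤ min (v i) (y i) := le_min h3 (by linarith)
      linarith
    · have : max (v i) (y i) ≤ 1 := max_le h4 (le_of_lt hy2)
      linarith
  have hw1 : ∀ i, w i < 1 := by
    intro i
    have h2 := (hwfacts i).2
    have : max (v i) (y i) ≤ 1 := max_le (hv' i).2 (le_of_lt (hyfacts i).2.1)
    linarith
  have hwsm : ∃ i, w i < t := by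
    refine ⟨s, ?_⟩
    rw [hw]
    simp only [hvs, if_pos]
    linarith
  obtain ⟨z, hz, hzw, hzt⟩ := stmt10_auxM R htrans hpareto hsymm hcompro t ht0 ht1
    Finset.univ.card w hwcube hw1 hwsm (Finset.card_le_univ _)
  rcases hcompro v y w hv hycube hwcube (fun i => (hyfacts i).2.2) hwfacts with h | h
  · exact ⟨z, hz, htrans z w v hz hwcube hv hzw h, hzt⟩
  · exfalso
    have hzy : R z y := htrans z w y hz hwcube hycube hzw h
    have := (hstrict y z hycube hz (fun i => by
      have := (hyfacts i).1
      have := hzt i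
      linarith)).2
    exact this hzy

/-- Claim 2 in the paper's proof of Theorem 5 (adapted from Sprumont 2013): a
complete, transitive, monotone, strictly monotone, symmetric and compromising
relation on the unit cube strictly ranks any vector whose minimum coordinate is
larger. -/
theorem stmt_10 {n : ℕ} (hn : 2 ≤ n)
    (R : (Fin n → ℝ) → (Fin n → ℝ) → Prop)
    (hcomplete : ∀ u v : Fin n → ℝ, u ∈ Set.Icc (0 : Fin n → ℝ) 1 →
      v ∈ Set.Icc (0 : Fin n → ℝ) 1 → R u v ∨ R v u)
    (htrans : ∀ u v w : Fin n → ℝ, u ∈ Set.Icc (0 : Fin n → ℝ) 1 →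
      v ∈ Set.Icc (0 : Fin n → ℝ) 1 → w ∈ Set.Icc (0 : Fin n → ℝ) 1 →
      R u v → R v w → R u w)
    (hpareto : ∀ u v : Fin n → ℝ, u ∈ Set.Icc (0 : Fin n → ℝ) 1 →
      v ∈ Set.Icc (0 : Fin n → ℝ) 1 → (∀ i, v i ≤ u i) → R u v)
    (hstrict : ∀ u v : Fin n → ℝ, u ∈ Set.Icc (0 : Fin n → ℝ) 1 →
      v ∈ Set.Icc (0 : Fin n → ℝ) 1 → (∀ i, v i < u i) → R u v ∧ ¬ R v u)
    (hsymm : ∀ u : Fin n → ℝ, u ∈ Set.Icc (0 : Fin n → ℝ) 1 →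
      ∀ π : Equiv.Perm (Fin n), R u (u ∘ π) ∧ R (u ∘ π) u)
    (hcompro : ∀ u v w : Fin n → ℝ, u ∈ Set.Icc (0 : Fin n → ℝ) 1 →
      v ∈ Set.Icc (0 : Fin n → ℝ) 1 → w ∈ Set.Icc (0 : Fin n → ℝ) 1 →
      (∀ i, u i ≠ v i) →
      (∀ i, min (u i) (v i) < w i ∧ w i < max (u i) (v i)) →
      R w u ∨ R w v) :
    ∀ u v : Fin n → ℝ, u ∈ Set.Icc (0 : Fin n → ℝ) 1 →
      v ∈ Set.Icc (0 : Fin n → ℝ) 1 → (⨅ i, v i) < (⨅ i, u i) →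
      R u v ∧ ¬ R v u := by
  intro u v hu hv hlt
  haveI : Nonempty (Fin n) := ⟨⟨0, by omega⟩⟩
  have hu' := stmt10_cube_iff.mp hu
  have hv' := stmt10_cube_iff.mp hv
  set β : ℝ := ⨅ i, v i with hβ
  set a : ℝ := ⨅ i, u i with ha
  have hβ0 : 0 ≤ β := le_ciInf (fun i => (hv' i).1)
  have hau : ∀ i, a ≤ u i := fun i =>
    ciInf_le (Set.Finite.bddBelow (Set.finite_range u)) i
  have ha1 : a ≤ 1 := le_trans (hau ⟨0, by omega⟩) (hu' ⟨0, by omega⟩).2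
  set t : ℝ := (β + a) / 2 with ht
  have ht0 : 0 < t := by rw [ht]; linarith
  have htβ : β < t := by rw [ht]; linarith
  have hta : t < a := by rw [ht]; linarith
  have ht1 : t < 1 := by linarith
  have hsm : ∃ s, v s < t := by
    by_contra h
    push_neg at h
    have : t ≤ β := le_ciInf h
    linarith
  obtain ⟨z, hz, hzv, hzt⟩ := stmt10_auxF R htrans hpareto hstrict hsymm hcompro
    t ht0 ht1 v hv hsm
  have huz := hstrict u z hu hz (fun i => by have := hau i; have := hzt i; linarith)
  refine ⟨htrans u z v hu hz hv huz.1 hzv, fun h => ?_⟩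
  exact huz.2 (htrans z v u hz hv hu hzv h)
end

section
/- Let n ≥ 2 and let ≿ be a complete and transitive binary relation on [0,1]^n satisfying: (i) u ≻ v whenever u ≥ v and u ≠ v; (ii) ≿ is symmetric; (iii) ≿ is compromising; and (iv) ≿ is separable. Then ≿ coincides with the leximin relation: for all u, v ∈ [0,1]^n, u ≿ v if and only if u ≥_lex v. -/
/-!
The key consequence of the axioms is *Hammond equity*: if `x` and `y` differ only in coordinates
`i ≠ j` with `y i < x i < x j < y j`, then `x ≻ y`. By separability the common coordinates may be
replaced by a strictly decreasing staircase lying between `y i` and `x j`; then `x` lies strictly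
between `(y i, y j, y j, …, y j) ≥ y` and a cyclic rotation of `y`, so compromise (made strict by
strong Pareto) gives `x ≻ y`.

Repeated Hammond transfers show that `x ≻ y` as soon as some coordinate of `y` lies below every
coordinate of `x`. If the sorted vectors of `u` and `v` first differ at position `j`, separability
replaces their common first `j` entries by `1`, after which `v`'s `j`-th entry lies below all of
`u`'s. Symmetry reduces everything to sorted vectors and settles the ties.
-/

/-- The nondecreasing rearrangement of a vector. -/
noncomputable def sortedVec {n : ℕ} (u : Fin n → ℝ) : Fin n → ℝ :=
  u ∘ Tuple.sort u

/-- The leximin relation `u ≥_lex v` on vectors, comparing nondecreasing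
rearrangements lexicographically. -/
noncomputable def LeximinGe {n : ℕ} (u v : Fin n → ℝ) : Prop :=
  (∀ i, sortedVec u i = sortedVec v i) ∨
  ∃ j : Fin n, (∀ i, i < j → sortedVec u i = sortedVec v i) ∧
    sortedVec v j < sortedVec u j

open Function Set

namespace Leximin

section Relation

variable {α : Type*} (R : α → α → Prop)

def Strict (u v : α) : Prop := R u v ∧ ¬ R v u

def TransOn (s : Set α) : Prop :=
  ∀ u v w, u ∈ s → v ∈ s → w ∈ s → R u v → R v w → R u w

variable {R} {s : Set α} {u v w : α}

theorem TransOn.strict_of_strict_of_rel (h : TransOn R s) (hu : u ∈ s) (hv : v ∈ s)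
    (hw : w ∈ s) (huv : Strict R u v) (hvw : R v w) : Strict R u w :=
  ⟨h u v w hu hv hw huv.1 hvw, fun hwu => huv.2 (h v w u hv hw hu hvw hwu)⟩

end Relation

theorem exists_perm_apply_eq_apply_eq {α : Type*} [DecidableEq α] {a b i j : α} (hab : a ≠ b)
    (hij : i ≠ j) : ∃ σ : Equiv.Perm α, σ a = i ∧ σ b = j := by
  refine ⟨Equiv.swap (Equiv.swap a i b) j * Equiv.swap a i, ?_, by simp⟩
  have hb : Equiv.swap a i b ≠ i := by
    rw [Ne, Equiv.swap_apply_eq_iff, Equiv.swap_apply_right]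
    exact hab.symm
  simp [Equiv.swap_apply_of_ne_of_ne hb.symm hij]

theorem update_mem_Icc {ι : Type*} [DecidableEq ι] {β : ι → Type*} [∀ i, Preorder (β i)]
    {a b f : ∀ i, β i} {i : ι} {t : β i} (ht : t ∈ Icc (a i) (b i))
    (hf : ∀ j, j ≠ i → f j ∈ Icc (a j) (b j)) : update f i t ∈ Icc a b :=
  ⟨le_update_iff.2 ⟨ht.1, fun j hj => (hf j hj).1⟩, update_le_iff.2 ⟨ht.2, fun j hj => (hf j hj).2⟩⟩

variable {n : ℕ}

theorem comp_perm_mem_Icc {u : Fin n → ℝ} (hu : u ∈ Icc 0 1) (π : Equiv.Perm (Fin n)) :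
    u ∘ π ∈ Icc 0 1 :=
  ⟨fun i => hu.1 (π i), fun i => hu.2 (π i)⟩

section Axioms

variable (R : (Fin n → ℝ) → (Fin n → ℝ) → Prop)

def StrongPareto : Prop :=
  ∀ u v : Fin n → ℝ, u ∈ Icc 0 1 → v ∈ Icc 0 1 → (∀ i, v i ≤ u i) → u ≠ v → Strict R u v

/-- The paper's *symmetry* axiom. -/
def PermInvariant : Prop :=
  ∀ u : Fin n → ℝ, u ∈ Icc 0 1 → ∀ π : Equiv.Perm (Fin n), R u (u ∘ π) ∧ R (u ∘ π) u

def Compromising : Prop :=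
  ∀ u v w : Fin n → ℝ, u ∈ Icc 0 1 → v ∈ Icc 0 1 → w ∈ Icc 0 1 → (∀ i, u i ≠ v i) →
    (∀ i, min (u i) (v i) < w i ∧ w i < max (u i) (v i)) → R w u ∨ R w v

def Separable : Prop :=
  ∀ S : Set (Fin n), ∀ u u' v v' : Fin n → ℝ,
    u ∈ Icc 0 1 → u' ∈ Icc 0 1 → v ∈ Icc 0 1 → v' ∈ Icc 0 1 →
    (∀ i ∈ S, u i = u' i) → (∀ i ∈ S, v i = v' i) →
    (∀ j ∉ S, u j = v j) → (∀ j ∉ S, u' j = v' j) → (R u v ↔ R u' v')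

structure Axioms : Prop where
  trans : TransOn R (Icc 0 1)
  pareto : StrongPareto R
  perm : PermInvariant R
  compromising : Compromising R
  separable : Separable R

variable {R} {u v w : Fin n → ℝ}

theorem PermInvariant.refl (h : PermInvariant R) (hu : u ∈ Icc 0 1) : R u u := by
  simpa using (h u hu 1).1

theorem PermInvariant.rel_comp_perm_iff (h : PermInvariant R) (htrans : TransOn R (Icc 0 1))
    (hu : u ∈ Icc 0 1) (hv : v ∈ Icc 0 1) (σ τ : Equiv.Perm (Fin n)) :
    R (u ∘ σ) (v ∘ τ) ↔ R u v := by
  have huσ := comp_perm_mem_Icc hu σ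
  have hvτ := comp_perm_mem_Icc hv τ
  constructor
  · intro hr
    exact htrans _ _ _ hu hvτ hv (htrans _ _ _ hu huσ hvτ (h u hu σ).1 hr) (h v hv τ).2
  · intro hr
    exact htrans _ _ _ huσ hv hvτ (htrans _ _ _ huσ hu hv (h u hu σ).2 hr) (h v hv τ).1

theorem PermInvariant.strict_comp_perm_iff (h : PermInvariant R) (htrans : TransOn R (Icc 0 1))
    (hu : u ∈ Icc 0 1) (hv : v ∈ Icc 0 1) (σ τ : Equiv.Perm (Fin n)) :
    Strict R (u ∘ σ) (v ∘ τ) ↔ Strict R u v :=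
  and_congr (h.rel_comp_perm_iff htrans hu hv σ τ)
    (not_congr (h.rel_comp_perm_iff htrans hv hu τ σ))

theorem StrongPareto.rel_of_le (h : StrongPareto R) (hperm : PermInvariant R) (hu : u ∈ Icc 0 1)
    (hv : v ∈ Icc 0 1) (hle : ∀ i, v i ≤ u i) : R u v := by
  by_cases huv : u = v
  · exact huv ▸ hperm.refl hu
  · exact (h u v hu hv hle huv).1

theorem Separable.strict_iff (h : Separable R) (S : Set (Fin n)) {u' v' : Fin n → ℝ}
    (hu : u ∈ Icc 0 1) (hu' : u' ∈ Icc 0 1) (hv : v ∈ Icc 0 1) (hv' : v' ∈ Icc 0 1)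
    (hS₁ : ∀ i ∈ S, u i = u' i) (hS₂ : ∀ i ∈ S, v i = v' i)
    (hSc₁ : ∀ j ∉ S, u j = v j) (hSc₂ : ∀ j ∉ S, u' j = v' j) :
    Strict R u v ↔ Strict R u' v' :=
  and_congr (h S u u' v v' hu hu' hv hv' hS₁ hS₂ hSc₁ hSc₂)
    (not_congr (h S v v' u u' hv hv' hu hu' hS₂ hS₁ (fun j hj => (hSc₁ j hj).symm)
      (fun j hj => (hSc₂ j hj).symm)))

/-- Compromise made strict: pushing `w` slightly down keeps it between `u` and `v`, and by strong
Pareto the original `w` strictly beats the pushed one. -/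
theorem strict_or_strict_of_between [NeZero n] (htrans : TransOn R (Icc 0 1))
    (hpareto : StrongPareto R) (hcompro : Compromising R) (hu : u ∈ Icc 0 1) (hv : v ∈ Icc 0 1)
    (hw : w ∈ Icc 0 1) (hbetween : ∀ i, u i < w i ∧ w i < v i ∨ v i < w i ∧ w i < u i) :
    Strict R w u ∨ Strict R w v := by
  have hmin : ∀ i, min (u i) (v i) < w i ∧ w i < max (u i) (v i) ∧ u i ≠ v i := fun i => by
    rcases hbetween i with ⟨h₁, h₂⟩ | ⟨h₁, h₂⟩ <;>
      exact ⟨by simp [h₁], by simp [h₂], by intro; linarith⟩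
  set w' : Fin n → ℝ := fun i => (min (u i) (v i) + w i) / 2
  have hw'w : ∀ i, min (u i) (v i) < w' i ∧ w' i < w i := fun i => by
    constructor <;> simp only [w'] <;> linarith [(hmin i).1]
  have hw' : w' ∈ Icc 0 1 :=
    ⟨fun i => (le_min (hu.1 i) (hv.1 i)).trans (hw'w i).1.le,
      fun i => ((hw'w i).2.trans_le (hw.2 i)).le⟩
  have hww' : Strict R w w' :=
    hpareto w w' hw hw' (fun i => (hw'w i).2.le) fun h => (hw'w 0).2.ne (congrFun h 0).symm
  have hcomp := hcompro u v w' hu hv hw' (fun i => (hmin i).2.2)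
    fun i => ⟨(hw'w i).1, (hw'w i).2.trans (hmin i).2.1⟩
  exact hcomp.imp (htrans.strict_of_strict_of_rel hw hw' hu hww')
    (htrans.strict_of_strict_of_rel hw hw' hv hww')

end Axioms

theorem Axioms.strict_of_staircase {m : ℕ} {R : (Fin (m + 2) → ℝ) → (Fin (m + 2) → ℝ) → Prop}
    (hR : Axioms R) {b : Fin (m + 2) → ℝ} {p q r : ℝ} (hb : ∀ k, k ≠ 0 → b k ∈ Icc (0 : ℝ) 1)
    (hp : p ∈ Icc (0 : ℝ) 1) (hr : r ∈ Icc (0 : ℝ) 1) (hb_gt : ∀ k, k ≠ 0 → p < b k)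
    (hb_anti : StrictAntiOn b {k | k ≠ 0}) (hpq : p < q) (hq : q < b 1) (hbr : b 1 < r) :
    Strict R (update b 0 q) (update (update b 0 p) 1 r) := by
  set x := update b 0 q
  set y := update (update b 0 p) 1 r
  set u : Fin (m + 2) → ℝ := update (fun _ => r) 0 p
  set v := y ∘ finRotate (m + 2)
  have hb_le : ∀ k, k ≠ 0 → b k ≤ b 1 := fun k hk =>
    hb_anti.antitoneOn (Fin.one_pos'.ne') hk (Fin.one_le_of_ne_zero hk)
  have hx : x ∈ Icc 0 1 := update_mem_Icc ⟨hp.1.trans hpq.le, hq.le.trans (hb 1 one_ne_zero).2⟩ hb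
  have hy : y ∈ Icc 0 1 := update_mem_Icc hr fun k _ => by
    rcases eq_or_ne k 0 with rfl | hk
    · simpa using hp
    · simpa [hk] using hb k hk
  have hu : u ∈ Icc 0 1 := update_mem_Icc hp fun _ _ => hr
  have hv : v ∈ Icc 0 1 := comp_perm_mem_Icc hy _
  have hv_lt : ∀ k, k ≠ 0 → v k < b k := fun k hk => by
    rcases eq_or_ne k (Fin.last _) with rfl | hlast
    · simpa [v, y, finRotate_last] using hb_gt _ hk
    have hlt := (lt_finRotate_iff_ne_last k).2 hlast
    have h0 : finRotate _ k ≠ 0 := (lt_of_le_of_lt (Fin.zero_le k) hlt).ne'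
    have h1 : finRotate _ k ≠ 1 := fun h => hk ((Fin.lt_one_iff k).1 (h ▸ hlt))
    simpa only [v, y, comp_apply, update_of_ne h0, update_of_ne h1] using hb_anti hk h0 hlt
  have hbetween : ∀ k, u k < x k ∧ x k < v k ∨ v k < x k ∧ x k < u k := fun k => by
    rcases eq_or_ne k 0 with rfl | hk
    · left
      simpa [u, x, v, y, finRotate_apply_zero] using ⟨hpq, hq.trans hbr⟩
    · right
      simpa [u, x, hk] using ⟨hv_lt k hk, (hb_le k hk).trans_lt hbr⟩
  have huy : R u y := hR.pareto.rel_of_le hR.perm hu hy fun k => by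
    rcases eq_or_ne k 0 with rfl | hk0
    · simp [u, y]
    rcases eq_or_ne k 1 with rfl | hk1
    · simp [u, y]
    simpa [u, y, hk0, hk1] using (hb_le k hk0).trans hbr.le
  have hvy : R v y := (hR.perm y hy _).2
  exact (strict_or_strict_of_between hR.trans hR.pareto hR.compromising hu hv hx hbetween).elim
    (fun h => hR.trans.strict_of_strict_of_rel hx hu hy h huy)
    (fun h => hR.trans.strict_of_strict_of_rel hx hv hy h hvy)

theorem Axioms.strict_of_hammond_zero_one {m : ℕ}
    {R : (Fin (m + 2) → ℝ) → (Fin (m + 2) → ℝ) → Prop} (hR : Axioms R)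
    {x y : Fin (m + 2) → ℝ} (hx : x ∈ Icc 0 1) (hy : y ∈ Icc 0 1)
    (hagree : ∀ k, k ≠ 0 → k ≠ 1 → x k = y k) (h₀ : y 0 < x 0) (h₀₁ : x 0 < x 1)
    (h₁ : x 1 < y 1) : Strict R x y := by
  set b : Fin (m + 2) → ℝ := fun k => y 0 + (x 1 - y 0) / (k : ℕ)
  have hd : 0 < x 1 - y 0 := sub_pos.2 (h₀.trans h₀₁)
  have hk_pos : ∀ k : Fin (m + 2), k ≠ 0 → (0 : ℝ) < (k : ℕ) := fun k hk => by
    exact_mod_cast Nat.pos_of_ne_zero (Fin.val_ne_zero_iff.2 hk)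
  have hb_gt : ∀ k, k ≠ 0 → y 0 < b k := fun k hk =>
    lt_add_of_pos_right _ (div_pos hd (hk_pos k hk))
  have hb_anti : StrictAntiOn b {k | k ≠ 0} := fun k hk l _ hkl =>
    add_lt_add_right (div_lt_div_of_pos_left hd (hk_pos k hk) (by exact_mod_cast hkl)) _
  have hb_one : b 1 = x 1 := by simp [b]
  have hb : ∀ k, k ≠ 0 → b k ∈ Icc (0 : ℝ) 1 := fun k hk =>
    ⟨(hy.1 0).trans (hb_gt k hk).le,
      (hb_anti.antitoneOn Fin.one_pos'.ne' hk (Fin.one_le_of_ne_zero hk)).trans (hb_one ▸ hx.2 1)⟩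
  have hy₀ : y 0 ∈ Icc (0 : ℝ) 1 := ⟨hy.1 0, hy.2 0⟩
  have hy₁ : y 1 ∈ Icc (0 : ℝ) 1 := ⟨hy.1 1, hy.2 1⟩
  have hx' : update b 0 (x 0) ∈ Icc 0 1 := update_mem_Icc ⟨hx.1 0, hx.2 0⟩ hb
  have hy' : update (update b 0 (y 0)) 1 (y 1) ∈ Icc 0 1 := update_mem_Icc hy₁ fun k _ => by
    rcases eq_or_ne k 0 with rfl | hk
    · simpa using hy₀
    · simpa [hk] using hb k hk
  refine (hR.separable.strict_iff {0, 1} hx hx' hy hy' ?_ ?_ ?_ ?_).2 <|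
    hR.strict_of_staircase hb hy₀ hy₁ hb_gt hb_anti h₀ (hb_one ▸ h₀₁) (hb_one ▸ h₁)
  · rintro k (rfl | rfl) <;> simp [hb_one]
  · rintro k (rfl | rfl) <;> simp
  · intro k hk
    simp only [mem_insert_iff, mem_singleton_iff, not_or] at hk
    exact hagree k hk.1 hk.2
  · intro k hk
    simp only [mem_insert_iff, mem_singleton_iff, not_or] at hk
    simp [hk.1, hk.2]

theorem Axioms.strict_of_hammond {R : (Fin n → ℝ) → (Fin n → ℝ) → Prop} (hR : Axioms R)
    {x y : Fin n → ℝ} (hx : x ∈ Icc 0 1) (hy : y ∈ Icc 0 1) {i j : Fin n} (hij : i ≠ j)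
    (hagree : ∀ k, k ≠ i → k ≠ j → x k = y k) (hi : y i < x i) (hxij : x i < x j)
    (hj : x j < y j) : Strict R x y := by
  obtain ⟨m, rfl⟩ : ∃ m, n = m + 2 := ⟨n - 2, by have := Fin.val_ne_of_ne hij; omega⟩
  obtain ⟨τ, hτ₀, hτ₁⟩ := exists_perm_apply_eq_apply_eq (zero_ne_one' (Fin (m + 2))) hij
  rw [← hR.perm.strict_comp_perm_iff hR.trans hx hy τ τ]
  refine hR.strict_of_hammond_zero_one (comp_perm_mem_Icc hx τ) (comp_perm_mem_Icc hy τ)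
    (fun k hk₀ hk₁ => hagree (τ k) ?_ ?_) ?_ ?_ ?_
  · exact fun h => hk₀ (τ.injective (h.trans hτ₀.symm))
  · exact fun h => hk₁ (τ.injective (h.trans hτ₁.symm))
  all_goals simpa [hτ₀, hτ₁]

/-- Each step raises `y i` towards `μ` and lowers one coordinate `y k > x k` to `x k`, a Hammond
transfer; after finitely many steps `x` dominates. -/
theorem Axioms.strict_of_lt_of_forall_le {R : (Fin n → ℝ) → (Fin n → ℝ) → Prop} (hR : Axioms R)
    {x y : Fin n → ℝ} (hx : x ∈ Icc 0 1) (hy : y ∈ Icc 0 1) {i : Fin n} {μ : ℝ}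
    (hμ : ∀ k, μ ≤ x k) (hyμ : y i < μ) : Strict R x y := by
  suffices ∀ B : Finset (Fin n), ∀ y ∈ Icc (0 : Fin n → ℝ) 1, y i < μ → (∀ k ∉ B, y k ≤ x k) →
      Strict R x y from this Finset.univ y hy hyμ (by simp)
  intro B
  induction B using Finset.induction_on with
  | empty =>
    intro y hy hyμ hle
    exact hR.pareto x y hx hy (fun k => hle k (Finset.notMem_empty k))
      fun h => (hyμ.trans_le (hμ i)).ne (congrFun h i).symm
  | insert k B hkB ih =>
    intro y hy hyμ hle
    by_cases hk : y k ≤ x k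
    · refine ih y hy hyμ fun l hl => ?_
      rcases eq_or_ne l k with rfl | hlk
      · exact hk
      · exact hle l (by simp [hlk, hl])
    rw [not_le] at hk
    have hki : k ≠ i := by rintro rfl; linarith [hμ k]
    set t := (y i + μ) / 2
    have ht : y i < t ∧ t < μ := by constructor <;> simp only [t] <;> linarith
    set y' := update (update y i t) k (x k)
    have hyt : update y i t ∈ Icc 0 1 := update_mem_Icc
      ⟨(hy.1 i).trans ht.1.le, ht.2.le.trans ((hμ i).trans (hx.2 i))⟩ fun l _ => ⟨hy.1 l, hy.2 l⟩
    have hy' : y' ∈ Icc 0 1 := update_mem_Icc ⟨hx.1 k, hx.2 k⟩ fun l _ => ⟨hyt.1 l, hyt.2 l⟩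
    have hxy' : Strict R x y' := by
      refine ih y' hy' (by simpa [y', hki.symm] using ht.2) fun l hl => ?_
      rcases eq_or_ne l k with rfl | hlk
      · simp [y']
      rcases eq_or_ne l i with rfl | hli
      · simpa [y', hlk] using ht.2.le.trans (hμ l)
      · simpa [y', hlk, hli] using hle l (by simp [hlk, hl])
    have hy'y : Strict R y' y := by
      refine hR.strict_of_hammond hy' hy hki.symm (fun l hli hlk => by simp [y', hli, hlk]) ?_ ?_ ?_
      · simpa [y', hki.symm] using ht.1
      · simpa [y', hki.symm] using ht.2.trans_le (hμ k)
      · simpa [y'] using hk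
    exact hR.trans.strict_of_strict_of_rel hx hy' hy hxy' hy'y.1

theorem Axioms.strict_of_lex {R : (Fin n → ℝ) → (Fin n → ℝ) → Prop} (hR : Axioms R)
    {a b : Fin n → ℝ} (ha : a ∈ Icc 0 1) (hb : b ∈ Icc 0 1) {j : Fin n}
    (hagree : ∀ k < j, a k = b k) (hlt : b j < a j) (hmono : ∀ k, j ≤ k → a j ≤ a k) :
    Strict R a b := by
  set S : Set (Fin n) := Ici j
  have h1 : (1 : Fin n → ℝ) ∈ Icc 0 1 := right_mem_Icc.2 zero_le_one
  rw [hR.separable.strict_iff S ha (piecewise_mem_Icc' ha h1) hb (piecewise_mem_Icc' hb h1)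
    (fun k hk => (S.piecewise_eq_of_mem _ _ hk).symm)
    (fun k hk => (S.piecewise_eq_of_mem _ _ hk).symm)
    (fun k hk => hagree k (not_le.1 hk)) (fun k hk => by simp [S.piecewise_eq_of_notMem _ _ hk])]
  refine hR.strict_of_lt_of_forall_le (piecewise_mem_Icc' ha h1) (piecewise_mem_Icc' hb h1)
    (i := j) (μ := a j) (fun k => ?_) (by simpa [S] using hlt)
  by_cases hk : j ≤ k
  · simpa [S, hk] using hmono k hk
  · simpa [S, hk] using ha.2 j

theorem Axioms.strict_of_toLex_lt {R : (Fin n → ℝ) → (Fin n → ℝ) → Prop} (hR : Axioms R)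
    {u v : Fin n → ℝ} (hu : u ∈ Icc 0 1) (hv : v ∈ Icc 0 1)
    (h : toLex (sortedVec v) < toLex (sortedVec u)) : Strict R u v := by
  obtain ⟨j, hagree, hlt⟩ := h
  rw [← hR.perm.strict_comp_perm_iff hR.trans hu hv (Tuple.sort u) (Tuple.sort v)]
  exact hR.strict_of_lex (comp_perm_mem_Icc hu _) (comp_perm_mem_Icc hv _)
    (fun k hk => (hagree k hk).symm) hlt fun k hk => Tuple.monotone_sort u hk

theorem PermInvariant.rel_of_sortedVec_eq {R : (Fin n → ℝ) → (Fin n → ℝ) → Prop}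
    (h : PermInvariant R) (htrans : TransOn R (Icc 0 1)) {u v : Fin n → ℝ} (hu : u ∈ Icc 0 1)
    (hv : v ∈ Icc 0 1) (heq : sortedVec u = sortedVec v) : R u v :=
  (h.rel_comp_perm_iff htrans hu hv (Tuple.sort u) (Tuple.sort v)).1 <| by
    change R (sortedVec u) (sortedVec v)
    exact heq ▸ h.refl (comp_perm_mem_Icc hu _)

theorem leximinGe_iff_toLex_le {u v : Fin n → ℝ} :
    LeximinGe u v ↔ toLex (sortedVec v) ≤ toLex (sortedVec u) := by
  rw [le_iff_eq_or_lt, toLex_inj, funext_iff, LeximinGe]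
  exact or_congr (forall_congr' fun _ => eq_comm)
    (exists_congr fun _ => and_congr_left' (forall₂_congr fun _ _ => eq_comm))

end Leximin

theorem stmt_12_general {n : ℕ}
    (R : (Fin n → ℝ) → (Fin n → ℝ) → Prop)
    (htrans : ∀ u v w : Fin n → ℝ, u ∈ Set.Icc (0 : Fin n → ℝ) 1 →
      v ∈ Set.Icc (0 : Fin n → ℝ) 1 → w ∈ Set.Icc (0 : Fin n → ℝ) 1 →
      R u v → R v w → R u w)
    (hstrongpareto : ∀ u v : Fin n → ℝ, u ∈ Set.Icc (0 : Fin n → ℝ) 1 →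
      v ∈ Set.Icc (0 : Fin n → ℝ) 1 → (∀ i, v i ≤ u i) → u ≠ v →
      R u v ∧ ¬ R v u)
    (hsymm : ∀ u : Fin n → ℝ, u ∈ Set.Icc (0 : Fin n → ℝ) 1 →
      ∀ π : Equiv.Perm (Fin n), R u (u ∘ π) ∧ R (u ∘ π) u)
    (hcompro : ∀ u v w : Fin n → ℝ, u ∈ Set.Icc (0 : Fin n → ℝ) 1 →
      v ∈ Set.Icc (0 : Fin n → ℝ) 1 → w ∈ Set.Icc (0 : Fin n → ℝ) 1 →
      (∀ i, u i ≠ v i) →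
      (∀ i, min (u i) (v i) < w i ∧ w i < max (u i) (v i)) →
      R w u ∨ R w v)
    (hsep : ∀ S : Set (Fin n), ∀ u u' v v' : Fin n → ℝ,
      u ∈ Set.Icc (0 : Fin n → ℝ) 1 → u' ∈ Set.Icc (0 : Fin n → ℝ) 1 →
      v ∈ Set.Icc (0 : Fin n → ℝ) 1 → v' ∈ Set.Icc (0 : Fin n → ℝ) 1 →
      (∀ i ∈ S, u i = u' i) → (∀ i ∈ S, v i = v' i) →
      (∀ j ∉ S, u j = v j) → (∀ j ∉ S, u' j = v' j) →
      (R u v ↔ R u' v')) :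
    ∀ u v : Fin n → ℝ, u ∈ Set.Icc (0 : Fin n → ℝ) 1 →
      v ∈ Set.Icc (0 : Fin n → ℝ) 1 → (R u v ↔ LeximinGe u v) := by
  have hR : Leximin.Axioms R := ⟨htrans, hstrongpareto, hsymm, hcompro, hsep⟩
  intro u v hu hv
  rw [Leximin.leximinGe_iff_toLex_le]
  rcases lt_trichotomy (toLex (sortedVec v)) (toLex (sortedVec u)) with h | h | h
  · exact iff_of_true (hR.strict_of_toLex_lt hu hv h).1 h.le
  · exact iff_of_true (hR.perm.rel_of_sortedVec_eq hR.trans hu hv (toLex_inj.1 h).symm) h.le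
  · exact iff_of_false (hR.strict_of_toLex_lt hv hu h).2 (not_le.2 h)

/-- Analytic core of the paper's Theorem 5 (relative leximin): a complete,
transitive, strongly Paretian, symmetric, compromising and separable relation
on the unit cube coincides with the leximin relation. -/
theorem stmt_12 {n : ℕ} (hn : 2 ≤ n)
    (R : (Fin n → ℝ) → (Fin n → ℝ) → Prop)
    (hcomplete : ∀ u v : Fin n → ℝ, u ∈ Set.Icc (0 : Fin n → ℝ) 1 →
      v ∈ Set.Icc (0 : Fin n → ℝ) 1 → R u v ∨ R v u)
    (htrans : ∀ u v w : Fin n → ℝ, u ∈ Set.Icc (0 : Fin n → ℝ) 1 →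
      v ∈ Set.Icc (0 : Fin n → ℝ) 1 → w ∈ Set.Icc (0 : Fin n → ℝ) 1 →
      R u v → R v w → R u w)
    (hstrongpareto : ∀ u v : Fin n → ℝ, u ∈ Set.Icc (0 : Fin n → ℝ) 1 →
      v ∈ Set.Icc (0 : Fin n → ℝ) 1 → (∀ i, v i ≤ u i) → u ≠ v →
      R u v ∧ ¬ R v u)
    (hsymm : ∀ u : Fin n → ℝ, u ∈ Set.Icc (0 : Fin n → ℝ) 1 →
      ∀ π : Equiv.Perm (Fin n), R u (u ∘ π) ∧ R (u ∘ π) u)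
    (hcompro : ∀ u v w : Fin n → ℝ, u ∈ Set.Icc (0 : Fin n → ℝ) 1 →
      v ∈ Set.Icc (0 : Fin n → ℝ) 1 → w ∈ Set.Icc (0 : Fin n → ℝ) 1 →
      (∀ i, u i ≠ v i) →
      (∀ i, min (u i) (v i) < w i ∧ w i < max (u i) (v i)) →
      R w u ∨ R w v)
    (hsep : ∀ S : Set (Fin n), ∀ u u' v v' : Fin n → ℝ,
      u ∈ Set.Icc (0 : Fin n → ℝ) 1 → u' ∈ Set.Icc (0 : Fin n → ℝ) 1 →
      v ∈ Set.Icc (0 : Fin n → ℝ) 1 → v' ∈ Set.Icc (0 : Fin n → ℝ) 1 →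
      (∀ i ∈ S, u i = u' i) → (∀ i ∈ S, v i = v' i) →
      (∀ j ∉ S, u j = v j) → (∀ j ∉ S, u' j = v' j) →
      (R u v ↔ R u' v')) :
    ∀ u v : Fin n → ℝ, u ∈ Set.Icc (0 : Fin n → ℝ) 1 →
      v ∈ Set.Icc (0 : Fin n → ℝ) 1 → (R u v ↔ LeximinGe u v) :=
  stmt_12_general R htrans hstrongpareto hsymm hcompro hsep
end

section
/- Let n ≥ 1 and let ψ : [0,1]^n → ℝ be monotonic, continuous, and quasiconcave with ψ(c·1) = c for all c ∈ [0,1]. Suppose that ψ(αu + (1−α)c·1) = ψ(αu) + (1−α)c for all u ∈ [0,1]^n, all c ∈ [0,1], and all α ∈ (0,1). Then ψ is translation-invariant and concave. -/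
/-!
`ψ (u + c) = ψ u + c` is the mixing identity with `α = 1 - c`, applied to `u / (1 - c)` and the
constant `1`.

Concavity is the niveloid argument: if `ψ v ≤ ψ u` and `d = ψ u - ψ v`, then `u - d` lies in the
upper level set of `ψ` at `ψ v`, hence so does `a (u - d) + b v`, and adding back `a d` gives
`a ψ u + b ψ v ≤ ψ (a u + b v)`. On the cube, `u - d` exists only when `d ≤ min u`, so on
`[η, 1]ⁿ` this gives, by uniform continuity, the midpoint inequality along each segment for
nearby points only. A continuous function on `[0, 1]` satisfying it locally lies above its chord
(look at the largest minimiser of the difference), so `ψ` is concave on `[η, 1]ⁿ`. Squeezing the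
cube towards its centre and letting `η → 0` gives concavity on the whole cube.
-/

open Set Filter Topology

theorem nonneg_of_locally_midpoint_concave {h : ℝ → ℝ} (hc : ContinuousOn h (Icc 0 1))
    (h0 : 0 ≤ h 0) (h1 : 0 ≤ h 1) {d : ℝ} (hd : 0 < d)
    (hmid : ∀ s ∈ Icc (0 : ℝ) 1, ∀ t ∈ Icc (0 : ℝ) 1, dist s t < d →
      h s + h t ≤ 2 * h ((s + t) / 2)) :
    ∀ x ∈ Icc (0 : ℝ) 1, 0 ≤ h x := by
  by_contra! ⟨x₀, hx₀, hneg⟩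
  obtain ⟨xmin, hxmin, hmin⟩ := isCompact_Icc.exists_isMinOn ⟨x₀, hx₀⟩ hc
  set μ := h xmin
  have hμ : μ < 0 := (hmin hx₀).trans_lt hneg
  -- the largest minimiser `m` lies in `(0, 1)`, and the midpoint inequality at `m` fails
  have hK : IsCompact (Icc 0 1 ∩ h ⁻¹' Iic μ) := isCompact_Icc.of_isClosed_subset
    (hc.preimage_isClosed_of_isClosed isClosed_Icc isClosed_Iic) inter_subset_left
  obtain ⟨m, ⟨hm, hmμ : h m ≤ μ⟩, hmax⟩ := hK.exists_isGreatest ⟨xmin, hxmin, le_refl μ⟩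
  have hm0 : 0 < m := hm.1.lt_of_ne (by rintro rfl; linarith)
  have hm1 : m < 1 := hm.2.lt_of_ne (by rintro rfl; linarith)
  obtain ⟨e, he, hed, hem, he1⟩ : ∃ e, 0 < e ∧ 2 * e < d ∧ e ≤ m ∧ e ≤ 1 - m :=
    ⟨min (d / 3) (min m (1 - m)), by positivity, by linarith [min_le_left (d / 3) (min m (1 - m))],
      (min_le_right _ _).trans (min_le_left _ _), (min_le_right _ _).trans (min_le_right _ _)⟩
  have hp : m - e ∈ Icc (0 : ℝ) 1 := ⟨by linarith, by linarith⟩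
  have hq : m + e ∈ Icc (0 : ℝ) 1 := ⟨by linarith, by linarith⟩
  have hhq : μ < h (m + e) := by
    by_contra! hle
    linarith [hmax ⟨hq, hle⟩]
  have := hmid (m - e) hp (m + e) hq (by rw [Real.dist_eq, abs_lt]; constructor <;> linarith)
  rw [show (m - e + (m + e)) / 2 = m by ring] at this
  linarith [isMinOn_iff.1 hmin _ hp]

theorem chord_le_of_locally_midpoint_concave {g : ℝ → ℝ} (hc : ContinuousOn g (Icc 0 1))
    {d : ℝ} (hd : 0 < d)
    (hmid : ∀ s ∈ Icc (0 : ℝ) 1, ∀ t ∈ Icc (0 : ℝ) 1, dist s t < d →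
      g s + g t ≤ 2 * g ((s + t) / 2)) :
    ∀ x ∈ Icc (0 : ℝ) 1, (1 - x) * g 0 + x * g 1 ≤ g x := by
  intro x hx
  have := nonneg_of_locally_midpoint_concave (h := fun x => g x - ((1 - x) * g 0 + x * g 1))
    (hc.sub (by fun_prop)) (by simp) (by simp) hd
    (fun s hs t ht hst => by linarith [hmid s hs t ht hst]) x hx
  linarith

section Cube

variable {ι : Type*}

def TranslationInvariantOn (S : Set (ι → ℝ)) (ψ : (ι → ℝ) → ℝ) : Prop :=
  ∀ u ∈ S, ∀ c : ℝ, (u + fun _ => c) ∈ S → ψ (u + fun _ => c) = ψ u + c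

theorem translationInvariantOn_of_nonneg {S : Set (ι → ℝ)} {ψ : (ι → ℝ) → ℝ}
    (h : ∀ u ∈ S, ∀ c : ℝ, 0 ≤ c → (u + fun _ => c) ∈ S → ψ (u + fun _ => c) = ψ u + c) :
    TranslationInvariantOn S ψ := by
  intro u hu c hc
  rcases le_total 0 c with hc0 | hc0
  · exact h u hu c hc0 hc
  · have hback : ((u + fun _ => c) + fun _ => -c) = u := by ext; simp
    have := h _ hc (-c) (neg_nonneg.2 hc0) (by rwa [hback])
    rw [hback] at this
    linarith

theorem translationInvariantOn_Icc_of_mix [Nonempty ι] {ψ : (ι → ℝ) → ℝ}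
    (hdiag : ∀ c : ℝ, c ∈ Icc (0 : ℝ) 1 → ψ (fun _ => c) = c)
    (hmix : ∀ u : ι → ℝ, u ∈ Icc (0 : ι → ℝ) 1 →
      ∀ c ∈ Icc (0 : ℝ) 1, ∀ α ∈ Ioo (0 : ℝ) 1,
      ψ (α • u + (1 - α) • (fun _ => c : ι → ℝ)) = ψ (α • u) + (1 - α) * c) :
    TranslationInvariantOn (Icc 0 1) ψ := by
  refine translationInvariantOn_of_nonneg fun u hu c hc0 hc => ?_
  obtain ⟨i⟩ := ‹Nonempty ι›
  have hc1 : c ≤ 1 := by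
    have := hc.2 i
    simp only [Pi.add_apply, Pi.one_apply] at this
    linarith [show 0 ≤ u i from hu.1 i]
  rcases hc0.eq_or_lt with rfl | hc0
  · change ψ (u + 0) = ψ u + 0
    simp
  rcases hc1.eq_or_lt with rfl | hc1
  · obtain rfl : u = 0 := le_antisymm (fun i => by simpa using hc.2 i) hu.1
    rw [zero_add, hdiag 1 ⟨zero_le_one, le_rfl⟩, show (0 : ι → ℝ) = fun _ => 0 from rfl,
      hdiag 0 ⟨le_rfl, zero_le_one⟩, zero_add]
  · have hc' : 0 < 1 - c := by linarith
    set w : ι → ℝ := (1 - c)⁻¹ • u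
    have hw : w ∈ Icc (0 : ι → ℝ) 1 := by
      refine ⟨fun i => ?_, fun i => ?_⟩
      · simpa [w] using mul_nonneg (inv_nonneg.2 hc'.le) (hu.1 i)
      · have := hc.2 i
        simp only [Pi.add_apply, Pi.one_apply] at this
        simp only [w, Pi.smul_apply, smul_eq_mul, Pi.one_apply]
        rw [inv_mul_le_iff₀ hc']; linarith
    have huw : (1 - c) • w = u := smul_inv_smul₀ hc'.ne' u
    have := hmix w hw 1 ⟨zero_le_one, le_rfl⟩ (1 - c) ⟨hc', by linarith⟩
    rw [huw, show (1 - (1 - c)) • (fun _ => (1 : ℝ) : ι → ℝ) = fun _ => c by ext; simp] at this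
    linarith

theorem TranslationInvariantOn.combo_le_of_sub_le {ψ : (ι → ℝ) → ℝ}
    (hti : TranslationInvariantOn (Icc 0 1) ψ) (hqc : QuasiconcaveOn ℝ (Icc 0 1) ψ)
    {u v : ι → ℝ} (hu : u ∈ Icc (0 : ι → ℝ) 1) (hv : v ∈ Icc (0 : ι → ℝ) 1)
    (hvu : ψ v ≤ ψ u) (hshift : ∀ i, ψ u - ψ v ≤ u i) {a b : ℝ} (ha : 0 ≤ a) (hb : 0 ≤ b)
    (hab : a + b = 1) :
    a • ψ u + b • ψ v ≤ ψ (a • u + b • v) := by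
  set d := ψ u - ψ v
  have hu' : (u + fun _ => -d) ∈ Icc (0 : ι → ℝ) 1 := by
    refine ⟨fun i => ?_, fun i => ?_⟩ <;> simp only [Pi.add_apply, Pi.zero_apply, Pi.one_apply]
    · linarith [hshift i]
    · linarith [show u i ≤ 1 from hu.2 i]
  have hlevel : ψ v ≤ ψ (u + fun _ => -d) := by rw [hti u hu (-d) hu']; linarith
  have hmixed := hqc (ψ v) ⟨hu', hlevel⟩ ⟨hv, le_rfl⟩ ha hb hab
  have hlift : (a • (u + fun _ => -d) + b • v) + (fun _ => a * d) = a • u + b • v := by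
    ext; simp only [Pi.add_apply, Pi.smul_apply, smul_eq_mul]; ring
  have hraise := hti _ hmixed.1 (a * d) (hlift ▸ convex_Icc (0 : ι → ℝ) 1 hu hv ha hb hab)
  rw [hlift] at hraise
  simp only [smul_eq_mul]
  obtain rfl : b = 1 - a := by linarith
  linarith [hmixed.2]

theorem TranslationInvariantOn.concaveOn_Icc_const {ψ : (ι → ℝ) → ℝ}
    (hti : TranslationInvariantOn (Icc 0 1) ψ) (hqc : QuasiconcaveOn ℝ (Icc 0 1) ψ)
    (hcont : ContinuousOn ψ (Icc 0 1)) {η : ℝ} (hη : 0 < η) :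
    ConcaveOn ℝ (Icc (fun _ => η : ι → ℝ) 1) ψ := by
  refine ⟨convex_Icc _ _, fun u hu v hv a b ha hb hab => ?_⟩
  obtain rfl : a = 1 - b := by linarith
  set x : ℝ → ι → ℝ := fun t => (1 - t) • u + t • v
  have hxη : ∀ t ∈ Icc (0 : ℝ) 1, x t ∈ Icc (fun _ => η : ι → ℝ) 1 := fun t ht =>
    convex_Icc _ _ hu hv (sub_nonneg.2 ht.2) ht.1 (sub_add_cancel 1 t)
  have hx : ∀ t ∈ Icc (0 : ℝ) 1, x t ∈ Icc 0 1 := fun t ht =>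
    Icc_subset_Icc_left (fun _ => hη.le) (hxη t ht)
  set g : ℝ → ℝ := fun t => ψ (x t)
  have hg : ContinuousOn g (Icc 0 1) := hcont.comp (by fun_prop : Continuous x).continuousOn hx
  obtain ⟨δ, hδ, hgδ⟩ := Metric.uniformContinuousOn_iff.1
    (isCompact_Icc.uniformContinuousOn_of_continuous hg) η hη
  -- where `g` varies by less than `η`, the larger endpoint can be lowered inside the cube
  have hmid : ∀ s ∈ Icc (0 : ℝ) 1, ∀ t ∈ Icc (0 : ℝ) 1, dist s t < δ →
      g s + g t ≤ 2 * g ((s + t) / 2) := by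
    intro s hs t ht hst
    wlog hts : g t ≤ g s generalizing s t
    · simpa only [add_comm] using this t ht s hs (by rwa [dist_comm]) (le_of_not_ge hts)
    have hshift : ∀ i, g s - g t ≤ x s i := fun i => by
      have := hgδ s hs t ht hst
      rw [Real.dist_eq] at this
      linarith [le_abs_self (g s - g t), show η ≤ x s i from (hxη s hs).1 i]
    have := hti.combo_le_of_sub_le hqc (hx s hs) (hx t ht) hts hshift (a := 1 / 2) (b := 1 / 2)
      (by norm_num) (by norm_num) (by norm_num)
    have hmidpt : (1 / 2 : ℝ) • x s + (1 / 2 : ℝ) • x t = x ((s + t) / 2) := by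
      ext; simp only [x, Pi.add_apply, Pi.smul_apply, smul_eq_mul]; ring
    rw [hmidpt, smul_eq_mul, smul_eq_mul] at this
    linarith
  have := chord_le_of_locally_midpoint_concave hg hδ hmid b ⟨hb, by linarith⟩
  simpa [g, x] using this

theorem TranslationInvariantOn.concaveOn_Icc {ψ : (ι → ℝ) → ℝ}
    (hti : TranslationInvariantOn (Icc 0 1) ψ) (hqc : QuasiconcaveOn ℝ (Icc 0 1) ψ)
    (hcont : ContinuousOn ψ (Icc 0 1)) :
    ConcaveOn ℝ (Icc 0 1) ψ := by
  refine ⟨convex_Icc _ _, fun u hu v hv a b ha hb hab => ?_⟩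
  let σ : ℝ → (ι → ℝ) → ι → ℝ := fun r x => (1 - r) • x + r • fun _ => 1 / 2
  have hσ : ∀ x ∈ Icc (0 : ι → ℝ) 1, ∀ r ∈ Icc (0 : ℝ) 1,
      σ r x ∈ Icc (fun _ => r / 2 : ι → ℝ) 1 := by
    intro x hx r hr
    refine ⟨fun i => ?_, fun i => ?_⟩ <;> simp only [σ, Pi.add_apply, Pi.smul_apply, smul_eq_mul]
    · nlinarith [show 0 ≤ x i from hx.1 i, hr.2]
    · nlinarith [show x i ≤ 1 from hx.2 i, show (1 : ι → ℝ) i = 1 from rfl, hr.1, hr.2]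
  have hlim : ∀ x ∈ Icc (0 : ι → ℝ) 1, Tendsto (fun r => ψ (σ r x)) (𝓝[>] 0) (𝓝 (ψ x)) := by
    intro x hx
    refine (hcont x hx).tendsto.comp (tendsto_nhdsWithin_iff.2 ⟨?_, ?_⟩)
    · have := ((by fun_prop : Continuous fun r => σ r x).tendsto 0).mono_left
        (nhdsWithin_le_nhds (s := Ioi 0))
      simpa [σ] using this
    · filter_upwards [Ioo_mem_nhdsGT zero_lt_one] with r hr
      exact Icc_subset_Icc_left (fun _ => (half_pos hr.1).le) (hσ x hx r (Ioo_subset_Icc_self hr))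
  have hw := convex_Icc (0 : ι → ℝ) 1 hu hv ha hb hab
  refine le_of_tendsto_of_tendsto (((hlim u hu).const_smul a).add ((hlim v hv).const_smul b))
    (hlim _ hw) ?_
  filter_upwards [Ioo_mem_nhdsGT zero_lt_one] with r hr
  have hσ_mix : σ r (a • u + b • v) = a • σ r u + b • σ r v := by
    obtain rfl : b = 1 - a := by linarith
    ext; simp only [σ, Pi.add_apply, Pi.smul_apply, smul_eq_mul]; ring
  rw [hσ_mix]
  exact (hti.concaveOn_Icc_const hqc hcont (half_pos hr.1)).2 (hσ u hu r (Ioo_subset_Icc_self hr))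
    (hσ v hv r (Ioo_subset_Icc_self hr)) ha hb hab

end Cube

theorem stmt_13_general {n : ℕ} (hn : 1 ≤ n) (ψ : (Fin n → ℝ) → ℝ)
    (hcont : ContinuousOn ψ (Set.Icc (0 : Fin n → ℝ) 1))
    (hqc : ∀ u v : Fin n → ℝ, u ∈ Set.Icc (0 : Fin n → ℝ) 1 →
      v ∈ Set.Icc (0 : Fin n → ℝ) 1 → ∀ α : ℝ, α ∈ Set.Icc (0 : ℝ) 1 →
      min (ψ u) (ψ v) ≤ ψ (α • u + (1 - α) • v))
    (hdiag : ∀ c : ℝ, c ∈ Set.Icc (0 : ℝ) 1 → ψ (fun _ => c) = c)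
    (hmix : ∀ u : Fin n → ℝ, u ∈ Set.Icc (0 : Fin n → ℝ) 1 →
      ∀ c ∈ Set.Icc (0 : ℝ) 1, ∀ α ∈ Set.Ioo (0 : ℝ) 1,
      ψ (α • u + (1 - α) • (fun _ => c : Fin n → ℝ)) =
        ψ (α • u) + (1 - α) * c) :
    (∀ u : Fin n → ℝ, u ∈ Set.Icc (0 : Fin n → ℝ) 1 → ∀ c : ℝ,
      (u + fun _ => c) ∈ Set.Icc (0 : Fin n → ℝ) 1 →
      ψ (u + fun _ => c) = ψ u + c) ∧
    (∀ u v : Fin n → ℝ, u ∈ Set.Icc (0 : Fin n → ℝ) 1 →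
      v ∈ Set.Icc (0 : Fin n → ℝ) 1 → ∀ α : ℝ, α ∈ Set.Icc (0 : ℝ) 1 →
      α * ψ u + (1 - α) * ψ v ≤ ψ (α • u + (1 - α) • v)) := by
  have : Nonempty (Fin n) := Fin.pos_iff_nonempty.1 hn
  have hti : TranslationInvariantOn (Icc 0 1) ψ := translationInvariantOn_Icc_of_mix hdiag hmix
  have hqc' : QuasiconcaveOn ℝ (Icc 0 1) ψ :=
    quasiconcaveOn_iff_min_le.2 ⟨convex_Icc 0 1, fun u hu v hv a b ha hb hab => by
      obtain rfl : b = 1 - a := by linarith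
      exact hqc u v hu hv a ⟨ha, by linarith⟩⟩
  have hconc := hti.concaveOn_Icc hqc' hcont
  exact ⟨hti, fun u v hu hv α hα => hconc.2 hu hv hα.1 (sub_nonneg.2 hα.2) (add_sub_cancel α 1)⟩

/-- Claim in the paper's proof of Theorem 6: a monotonic, continuous,
quasiconcave function on the unit cube with `ψ(c·1) = c` satisfying
`ψ(αu + (1−α)c·1) = ψ(αu) + (1−α)c` is translation-invariant and concave. -/
theorem stmt_13 {n : ℕ} (hn : 1 ≤ n) (ψ : (Fin n → ℝ) → ℝ)
    (hmono : ∀ u v : Fin n → ℝ, u ∈ Set.Icc (0 : Fin n → ℝ) 1 →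
      v ∈ Set.Icc (0 : Fin n → ℝ) 1 → (∀ i, v i < u i) → ψ v < ψ u)
    (hcont : ContinuousOn ψ (Set.Icc (0 : Fin n → ℝ) 1))
    (hqc : ∀ u v : Fin n → ℝ, u ∈ Set.Icc (0 : Fin n → ℝ) 1 →
      v ∈ Set.Icc (0 : Fin n → ℝ) 1 → ∀ α : ℝ, α ∈ Set.Icc (0 : ℝ) 1 →
      min (ψ u) (ψ v) ≤ ψ (α • u + (1 - α) • v))
    (hdiag : ∀ c : ℝ, c ∈ Set.Icc (0 : ℝ) 1 → ψ (fun _ => c) = c)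
    (hmix : ∀ u : Fin n → ℝ, u ∈ Set.Icc (0 : Fin n → ℝ) 1 →
      ∀ c ∈ Set.Icc (0 : ℝ) 1, ∀ α ∈ Set.Ioo (0 : ℝ) 1,
      ψ (α • u + (1 - α) • (fun _ => c : Fin n → ℝ)) =
        ψ (α • u) + (1 - α) * c) :
    (∀ u : Fin n → ℝ, u ∈ Set.Icc (0 : Fin n → ℝ) 1 → ∀ c : ℝ,
      (u + fun _ => c) ∈ Set.Icc (0 : Fin n → ℝ) 1 →
      ψ (u + fun _ => c) = ψ u + c) ∧
    (∀ u v : Fin n → ℝ, u ∈ Set.Icc (0 : Fin n → ℝ) 1 →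
      v ∈ Set.Icc (0 : Fin n → ℝ) 1 → ∀ α : ℝ, α ∈ Set.Icc (0 : ℝ) 1 →
      α * ψ u + (1 - α) * ψ v ≤ ψ (α • u + (1 - α) • v)) :=
  stmt_13_general hn ψ hcont hqc hdiag hmix
end

section
/- Let n ≥ 1 and let ψ : (0,1)^n → ℝ be nondecreasing (ψ(u) ≤ ψ(v) whenever u ≤ v componentwise) and translation-invariant (ψ(u + c·1) = ψ(u) + c whenever c ∈ ℝ and u, u + c·1 ∈ (0,1)^n). Let u ∈ (0,1)^n and let μ* ∈ ℝ^n satisfy ψ(v) ≤ ψ(u) + Σ_{i=1}^n μ*_i (v_i − u_i) for all v ∈ (0,1)^n. Then μ* ∈ Δ_n, i.e., μ*_i ≥ 0 for all i and Σ_{i=1}^n μ*_i = 1. -/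
/-- Claim 4 in the paper's proof of Theorem 6: every supergradient at an
interior point of a nondecreasing, translation-invariant function on the open
unit cube lies in the probability simplex. -/
theorem stmt_14 {n : ℕ} (hn : 1 ≤ n) (ψ : (Fin n → ℝ) → ℝ)
    (hmono : ∀ u v : Fin n → ℝ, (∀ i, u i ∈ Set.Ioo (0 : ℝ) 1) →
      (∀ i, v i ∈ Set.Ioo (0 : ℝ) 1) → u ≤ v → ψ u ≤ ψ v)
    (hti : ∀ u : Fin n → ℝ, (∀ i, u i ∈ Set.Ioo (0 : ℝ) 1) → ∀ c : ℝ,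
      (∀ i, ((u + fun _ => c : Fin n → ℝ)) i ∈ Set.Ioo (0 : ℝ) 1) →
      ψ (u + fun _ => c) = ψ u + c)
    (u : Fin n → ℝ) (hu : ∀ i, u i ∈ Set.Ioo (0 : ℝ) 1)
    (μ : Fin n → ℝ)
    (hsupergrad : ∀ v : Fin n → ℝ, (∀ i, v i ∈ Set.Ioo (0 : ℝ) 1) →
      ψ v ≤ ψ u + ∑ i, μ i * (v i - u i)) :
    (∀ i, 0 ≤ μ i) ∧ (∑ i, μ i) = 1 := by
  have hne : (Finset.univ : Finset (Fin n)).Nonempty := by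
    simpa [Finset.univ_nonempty_iff] using (Fin.pos_iff_nonempty.mp hn)
  -- Part 1: nonnegativity
  have h1 : ∀ i, 0 ≤ μ i := by
    intro i
    set t : ℝ := (1 - u i) / 2 with ht
    have hui := hu i
    have htpos : 0 < t := by
      have := hui.2; simp only [ht]; linarith
    set v : Fin n → ℝ := Function.update u i (u i + t) with hv
    have hvIoo : ∀ j, v j ∈ Set.Ioo (0 : ℝ) 1 := by
      intro j
      by_cases hj : j = i
      · subst hj
        simp only [hv, Function.update_self]
        constructor
        · linarith [hui.1]
        · simp only [ht]; linarith [hui.2]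
      · simpa [hv, Function.update_of_ne hj] using hu j
    have hle : u ≤ v := by
      intro j
      by_cases hj : j = i
      · subst hj; simp [hv, htpos.le]
      · simp [hv, Function.update_of_ne hj]
    have hm := hmono u v hu hvIoo hle
    have hs := hsupergrad v hvIoo
    have hsum : ∑ j, μ j * (v j - u j) = μ i * t := by
      rw [Finset.sum_eq_single i]
      · simp [hv]
      · intro j _ hj; simp [hv, Function.update_of_ne hj]
      · intro h; exact absurd (Finset.mem_univ i) h
    rw [hsum] at hs
    nlinarith
  refine ⟨h1, ?_⟩
  -- Part 2: sum equals one, via translations by ±ε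
  set ε : ℝ := (Finset.univ.inf' hne fun i => min (u i) (1 - u i)) / 2 with hε
  have hεpos : 0 < ε := by
    have : ∀ i ∈ Finset.univ, (0:ℝ) < min (u i) (1 - u i) := by
      intro i _
      exact lt_min (hu i).1 (by linarith [(hu i).2])
    have := (Finset.lt_inf'_iff hne).mpr this
    simp only [hε]; linarith
  have hεle : ∀ i, ε ≤ min (u i) (1 - u i) / 2 := by
    intro i
    have := Finset.inf'_le (fun i => min (u i) (1 - u i)) (Finset.mem_univ i)
    simp only [hε]; linarith
  have key : ∀ c : ℝ, c = ε ∨ c = -ε →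
      ψ u + c ≤ ψ u + c * ∑ i, μ i := by
    intro c hc
    have hcε : |c| ≤ ε := by rcases hc with h | h <;> simp [h, abs_of_pos hεpos]
    have hIoo : ∀ i, ((u + fun _ => c : Fin n → ℝ)) i ∈ Set.Ioo (0 : ℝ) 1 := by
      intro i
      have h1 := hεle i
      have h2 : min (u i) (1 - u i) ≤ u i := min_le_left _ _
      have h3 : min (u i) (1 - u i) ≤ 1 - u i := min_le_right _ _
      have habs := abs_le.mp hcε
      constructor
      · simp only [Pi.add_apply]; linarith
      · simp only [Pi.add_apply]; linarith
    have hti' := hti u hu c hIoo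
    have hs := hsupergrad (u + fun _ => c) hIoo
    rw [hti'] at hs
    have hsum : ∑ i, μ i * ((u + fun _ => c : Fin n → ℝ) i - u i) = c * ∑ i, μ i := by
      simp [Pi.add_apply, mul_comm, Finset.mul_sum]
    rw [hsum] at hs
    exact hs
  have hplus := key ε (Or.inl rfl)
  have hminus := key (-ε) (Or.inr rfl)
  nlinarith [hplus, hminus, hεpos]
end

section
/- Let n ≥ 1 and let ψ : [0,1]^n → ℝ be monotonic, continuous, concave, and translation-invariant with ψ(c·1) = c for all c ∈ [0,1]. Then there exists a function φ : Δ_n → [0, +∞] that is convex, lower semicontinuous, and grounded (inf_{μ ∈ Δ_n} φ(μ) = 0), such that for all u ∈ [0,1]^n, ψ(u) = min_{μ ∈ Δ_n} ( Σ_{i=1}^n μ_i u_i + φ(μ) ), the minimum being attained. -/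
/-!
Take for `φ` minus the concave conjugate of `ψ`, `φ μ = sup_{v ∈ [0,1]^n} (ψ v - μ ⬝ᵥ v)`; it is
convex and continuous, and `ψ u ≤ μ ⬝ᵥ u + φ μ` by definition. At an interior point `u`,
separating `(u, ψ u)` from the open strict hypograph of `ψ` gives a supergradient `g`, for which
equality holds; monotonicity forces `g ≥ 0` and translation invariance forces `∑ g = 1`, so
`g ∈ Δ_n`. The minimum over the compact simplex is continuous in `u`, so equality extends from
the dense interior to the whole cube. At `u = ½·1` every `μ ∈ Δ_n` has `μ ⬝ᵥ u = ½ = ψ u`, so the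
minimiser there has `φ μ = 0`.
-/

open scoped ENNReal
open Filter Topology Set

section Supergradient

variable {E : Type*} [NormedAddCommGroup E] [NormedSpace ℝ E] {s : Set E} {f : E → ℝ} {x : E}

theorem ConcaveOn.exists_supergradient_of_isOpen (hf : ConcaveOn ℝ s f) (hs : IsOpen s)
    (hfc : ContinuousOn f s) (hx : x ∈ s) :
    ∃ ℓ : StrongDual ℝ E, ∀ y ∈ s, f y ≤ f x + ℓ (y - x) := by
  set A : Set (E × ℝ) := {p | p.1 ∈ s ∧ p.2 < f p.1}
  have hA_open : IsOpen A := by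
    have := (hfc.comp continuousOn_fst fun p hp => hp.1).sub continuousOn_snd
      |>.isOpen_inter_preimage (hs.prod isOpen_univ) (isOpen_Ioi (a := (0 : ℝ)))
    convert this using 1
    ext p
    simp [A, sub_pos]
  obtain ⟨L, hL⟩ := geometric_hahn_banach_open_point hf.convex_strict_hypograph hA_open
    (fun h : (x, f x) ∈ A => h.2.false)
  set c := L (0, 1)
  have hL_apply : ∀ y t, L (y, t) = L (y, 0) + t * c := fun y t => by
    rw [← smul_eq_mul, ← map_smul, ← map_add, Prod.smul_mk, smul_zero, smul_eq_mul, mul_one,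
      Prod.mk_add_mk, add_zero, zero_add]
  have hc : 0 < c := by
    have := hL (x, f x - 1) ⟨hx, by linarith⟩
    rw [hL_apply x (f x - 1), hL_apply x (f x)] at this
    linarith
  refine ⟨-c⁻¹ • L.comp (ContinuousLinearMap.inl ℝ E ℝ), fun y hy => le_of_forall_lt fun t ht => ?_⟩
  have := hL (y, t) ⟨hy, ht⟩
  rw [hL_apply y t, hL_apply x (f x)] at this
  have hsub : L (y - x, 0) = L (y, 0) - L (x, 0) := by
    rw [← map_sub, Prod.mk_sub_mk, sub_zero]
  simp only [smul_apply, ContinuousLinearMap.comp_apply,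
    ContinuousLinearMap.inl_apply, smul_eq_mul, hsub]
  rw [← sub_lt_iff_lt_add', neg_mul, ← mul_neg, lt_inv_mul_iff₀ hc]
  linarith

theorem ConcaveOn.exists_supergradient_s15 (hf : ConcaveOn ℝ s f)
    (hfc : ContinuousOn f (interior s)) (hx : x ∈ interior s) :
    ∃ ℓ : StrongDual ℝ E, ∀ y ∈ s, f y ≤ f x + ℓ (y - x) := by
  obtain ⟨ℓ, hℓ⟩ := (hf.subset interior_subset hf.1.interior).exists_supergradient_of_isOpen
    isOpen_interior hfc hx
  refine ⟨ℓ, fun y hy => ?_⟩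
  -- compare `f` with `ℓ` at the midpoint of `x` and `y`, which lies in the interior
  have hmid := hℓ _ (hf.1.combo_interior_self_mem_interior hx hy (a := 1 / 2) (b := 1 / 2)
    (by norm_num) (by norm_num) (by norm_num))
  have hconc := hf.2 (interior_subset hx) hy (by norm_num : (0 : ℝ) ≤ 1 / 2)
    (by norm_num : (0 : ℝ) ≤ 1 / 2) (by norm_num)
  have hℓmid : ℓ ((1 / 2 : ℝ) • x + (1 / 2 : ℝ) • y - x) = 1 / 2 * ℓ (y - x) := by
    rw [← smul_eq_mul, ← map_smul]
    congr 1
    module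
  rw [hℓmid] at hmid
  simp only [smul_eq_mul] at hconc
  linarith

end Supergradient

theorem eventually_add_smul_mem_of_mem_interior {E : Type*} [TopologicalSpace E] [AddCommGroup E]
    [Module ℝ E] [ContinuousAdd E] [ContinuousSMul ℝ E] {s : Set E} {u : E}
    (hu : u ∈ interior s) (d : E) : ∀ᶠ t : ℝ in 𝓝 0, u + t • d ∈ s := by
  have : Tendsto (fun t : ℝ => u + t • d) (𝓝 0) (𝓝 u) := by
    simpa using (Continuous.tendsto (f := fun t : ℝ => u + t • d) (by fun_prop) 0)
  exact this (mem_interior_iff_mem_nhds.1 hu)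

theorem ConvexOn.ofReal_combo_le {E : Type*} [AddCommMonoid E] [Module ℝ E] {s : Set E} {f : E → ℝ}
    (hf : ConvexOn ℝ s f) {x y : E} (hx : x ∈ s) (hy : y ∈ s) {a : ℝ} (ha : a ∈ Icc 0 1) :
    ENNReal.ofReal (f (a • x + (1 - a) • y)) ≤
      ENNReal.ofReal a * ENNReal.ofReal (f x) + ENNReal.ofReal (1 - a) * ENNReal.ofReal (f y) :=
  calc ENNReal.ofReal (f (a • x + (1 - a) • y))
      ≤ ENNReal.ofReal (a * f x + (1 - a) * f y) :=
        ENNReal.ofReal_le_ofReal (hf.2 hx hy ha.1 (sub_nonneg.2 ha.2) (by ring))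
    _ ≤ ENNReal.ofReal (a * f x) + ENNReal.ofReal ((1 - a) * f y) := ENNReal.ofReal_add_le
    _ = _ := by rw [ENNReal.ofReal_mul ha.1, ENNReal.ofReal_mul (sub_nonneg.2 ha.2)]

theorem StrongDual.apply_eq_dotProduct {ι : Type*} [Fintype ι] [DecidableEq ι]
    (ℓ : StrongDual ℝ (ι → ℝ)) (v : ι → ℝ) : ℓ v = (fun i => ℓ (Pi.single i 1)) ⬝ᵥ v := by
  conv_lhs => rw [pi_eq_sum_univ' v, map_sum]
  simp [dotProduct, mul_comm]

section Penalty

variable {ι : Type*} [Fintype ι] {K : Set (ι → ℝ)} {ψ : (ι → ℝ) → ℝ}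

/-- Minus the concave conjugate of `ψ` on `K`; `⨆` over an empty or unbounded family is junk,
so every lemma assumes `K` compact. -/
noncomputable def penalty (K : Set (ι → ℝ)) (ψ : (ι → ℝ) → ℝ) (μ : ι → ℝ) : ℝ :=
  ⨆ v : K, ψ v - μ ⬝ᵥ v

theorem continuous_uncurry_sub_dotProduct (hψ : ContinuousOn ψ K) :
    Continuous fun p : (ι → ℝ) × K => ψ p.2 - p.1 ⬝ᵥ (p.2 : ι → ℝ) :=
  (hψ.domRestrict.comp continuous_snd).sub
    (continuous_fst.dotProduct (continuous_subtype_val.comp continuous_snd))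

theorem le_penalty (hK : IsCompact K) (hψ : ContinuousOn ψ K) {v : ι → ℝ} (hv : v ∈ K)
    (μ : ι → ℝ) : ψ v - μ ⬝ᵥ v ≤ penalty K ψ μ := by
  have := isCompact_iff_compactSpace.mp hK
  exact le_ciSup (isCompact_range ((continuous_uncurry_sub_dotProduct hψ).comp
    (Continuous.prodMk_right μ))).bddAbove (⟨v, hv⟩ : K)

theorem penalty_le (hK : K.Nonempty) {μ : ι → ℝ} {B : ℝ} (h : ∀ v ∈ K, ψ v - μ ⬝ᵥ v ≤ B) :
    penalty K ψ μ ≤ B :=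
  have := hK.to_subtype
  ciSup_le fun v => h v v.2

theorem penalty_eq_of_supergradient (hK : IsCompact K) (hψ : ContinuousOn ψ K) {u g : ι → ℝ}
    (hu : u ∈ K) (hg : ∀ v ∈ K, ψ v ≤ ψ u + g ⬝ᵥ (v - u)) :
    penalty K ψ g = ψ u - g ⬝ᵥ u :=
  le_antisymm (penalty_le ⟨u, hu⟩ fun v hv => by linarith [hg v hv, dotProduct_sub g v u])
    (le_penalty hK hψ hu g)

theorem convexOn_penalty (hK : IsCompact K) (hK' : K.Nonempty) (hψ : ContinuousOn ψ K) :
    ConvexOn ℝ univ (penalty K ψ) := by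
  refine ⟨convex_univ, fun μ _ ν _ a b ha hb hab => penalty_le hK' fun v hv => ?_⟩
  have hμ := le_penalty hK hψ hv μ
  have hν := le_penalty hK hψ hv ν
  have hψv : ψ v = a * ψ v + b * ψ v := by rw [← add_mul, hab, one_mul]
  simp only [add_dotProduct, smul_dotProduct, smul_eq_mul]
  nlinarith [mul_le_mul_of_nonneg_left hμ ha, mul_le_mul_of_nonneg_left hν hb]

theorem continuous_penalty (hK : IsCompact K) (hψ : ContinuousOn ψ K) :
    Continuous (penalty K ψ) := by
  have := isCompact_iff_compactSpace.mp hK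
  have := isCompact_univ.continuous_sSup
    (f := fun μ (v : K) => ψ v - μ ⬝ᵥ (v : ι → ℝ)) (continuous_uncurry_sub_dotProduct hψ)
  simp only [image_univ] at this
  exact this

end Penalty

/-- The paper's monotonicity (`u ≫ v → ψ u > ψ v`); unlike `StrictMonoOn`, it compares only
points that differ strictly in every coordinate. -/
def IsMonotonicOn {ι : Type*} (s : Set (ι → ℝ)) (ψ : (ι → ℝ) → ℝ) : Prop :=
  ∀ u v : ι → ℝ, u ∈ s → v ∈ s → (∀ i, v i < u i) → ψ v < ψ u

def IsTranslationInvariantOn {ι : Type*} (s : Set (ι → ℝ)) (ψ : (ι → ℝ) → ℝ) : Prop :=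
  ∀ u : ι → ℝ, u ∈ s → ∀ c : ℝ, (u + fun _ => c) ∈ s → ψ (u + fun _ => c) = ψ u + c

section Cube

variable {ι : Type*} {ψ : (ι → ℝ) → ℝ}

theorem half_mem_interior_cube [Finite ι] :
    (fun _ => 1 / 2 : ι → ℝ) ∈ interior (Icc (0 : ι → ℝ) 1) := by
  rw [← pi_univ_Icc, interior_pi_set finite_univ]
  simp [interior_Icc]
  norm_num

theorem cube_subset_closure_interior [Finite ι] :
    Icc (0 : ι → ℝ) 1 ⊆ closure (interior (Icc (0 : ι → ℝ) 1)) := by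
  rw [(convex_Icc (𝕜 := ℝ) (0 : ι → ℝ) 1).closure_interior_eq_closure_of_nonempty_interior
    ⟨_, half_mem_interior_cube⟩]
  exact subset_closure

theorem IsMonotonicOn.le_of_le_of_mem_interior (hmono : IsMonotonicOn (Icc (0 : ι → ℝ) 1) ψ)
    (hti : IsTranslationInvariantOn (Icc (0 : ι → ℝ) 1) ψ) {u v : ι → ℝ}
    (hu : u ∈ interior (Icc (0 : ι → ℝ) 1)) (hv : v ∈ Icc (0 : ι → ℝ) 1) (huv : u ≤ v) :
    ψ u ≤ ψ v := by
  have hshift : ∀ᶠ t in 𝓝[>] (0 : ℝ), (u + fun _ => -t) ∈ Icc (0 : ι → ℝ) 1 ∧ 0 < t := by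
    refine (eventually_nhdsWithin_of_eventually_nhds ?_).and self_mem_nhdsWithin
    filter_upwards [eventually_add_smul_mem_of_mem_interior hu (-1)] with t ht
    rwa [show (u + fun _ => -t) = u + t • (-1 : ι → ℝ) by ext; simp]
  refine le_of_tendsto (f := fun t => ψ u - t) (x := 𝓝[>] 0) ?_ ?_
  · simpa using (tendsto_const_nhds (x := ψ u)).sub
      (tendsto_id.mono_left (nhdsWithin_le_nhds (a := (0 : ℝ)) (s := Ioi 0)))
  filter_upwards [hshift] with t ⟨ht, htpos⟩
  have := hmono v _ hv ht fun i => by simp; linarith [huv i]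
  rw [hti u (interior_subset hu) (-t) ht] at this
  linarith

theorem mem_stdSimplex_of_supergradient [Fintype ι] (hmono : IsMonotonicOn (Icc (0 : ι → ℝ) 1) ψ)
    (hti : IsTranslationInvariantOn (Icc (0 : ι → ℝ) 1) ψ) {u g : ι → ℝ}
    (hu : u ∈ interior (Icc (0 : ι → ℝ) 1))
    (hg : ∀ v ∈ Icc (0 : ι → ℝ) 1, ψ v ≤ ψ u + g ⬝ᵥ (v - u)) : g ∈ stdSimplex ℝ ι := by
  classical
  refine ⟨fun i => ?_, ?_⟩
  · obtain ⟨t, ht, htpos⟩ := ((eventually_nhdsWithin_of_eventually_nhds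
      (eventually_add_smul_mem_of_mem_interior hu (Pi.single i 1))).and
      (self_mem_nhdsWithin (s := Ioi (0 : ℝ)))).exists
    have hle := (hg _ ht).trans' (hmono.le_of_le_of_mem_interior hti hu ht
      (le_add_of_nonneg_right (smul_nonneg htpos.le (Pi.single_nonneg.2 zero_le_one))))
    rw [add_sub_cancel_left, dotProduct_smul, dotProduct_single, smul_eq_mul, mul_one] at hle
    exact nonneg_of_mul_nonneg_right (by linarith) htpos
  · -- along the diagonal `ψ` grows with slope `1` and its supergradient with slope `∑ g`
    obtain ⟨ε, hε, hshift⟩ := Metric.eventually_nhds_iff.1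
      (eventually_add_smul_mem_of_mem_interior hu (1 : ι → ℝ))
    have hslope : ∀ t, |t| < ε → t ≤ t * ∑ i, g i := fun t ht => by
      have hmem := hshift (by simpa using ht)
      have hdiag : u + t • (1 : ι → ℝ) = u + fun _ => t := by ext; simp
      have := hg _ hmem
      rw [add_sub_cancel_left, dotProduct_smul, dotProduct_one, smul_eq_mul, hdiag,
        hti u (interior_subset hu) t (hdiag ▸ hmem)] at this
      linarith
    have h₁ := hslope (ε / 2) (by rw [abs_of_pos (half_pos hε)]; linarith)
    have h₂ := hslope (-(ε / 2)) (by rw [abs_neg, abs_of_pos (half_pos hε)]; linarith)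
    nlinarith

variable [Fintype ι]

theorem isLeast_dotProduct_add_penalty_of_mem_interior
    (hmono : IsMonotonicOn (Icc (0 : ι → ℝ) 1) ψ) (hcont : ContinuousOn ψ (Icc (0 : ι → ℝ) 1))
    (hconc : ConcaveOn ℝ (Icc (0 : ι → ℝ) 1) ψ)
    (hti : IsTranslationInvariantOn (Icc (0 : ι → ℝ) 1) ψ) {u : ι → ℝ}
    (hu : u ∈ interior (Icc (0 : ι → ℝ) 1)) :
    IsLeast ((fun μ => μ ⬝ᵥ u + penalty (Icc 0 1) ψ μ) '' stdSimplex ℝ ι) (ψ u) := by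
  classical
  obtain ⟨ℓ, hℓ⟩ := hconc.exists_supergradient_s15 (hcont.mono interior_subset) hu
  have hg : ∀ v ∈ Icc (0 : ι → ℝ) 1, ψ v ≤ ψ u + (fun i => ℓ (Pi.single i 1)) ⬝ᵥ (v - u) :=
    fun v hv => StrongDual.apply_eq_dotProduct ℓ (v - u) ▸ hℓ v hv
  refine ⟨⟨_, mem_stdSimplex_of_supergradient hmono hti hu hg, ?_⟩, ?_⟩
  · dsimp only
    rw [penalty_eq_of_supergradient isCompact_Icc hcont (interior_subset hu) hg]
    ring
  · rintro _ ⟨μ, -, rfl⟩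
    linarith [le_penalty isCompact_Icc hcont (interior_subset hu) μ]

theorem isLeast_dotProduct_add_penalty
    (hmono : IsMonotonicOn (Icc (0 : ι → ℝ) 1) ψ) (hcont : ContinuousOn ψ (Icc (0 : ι → ℝ) 1))
    (hconc : ConcaveOn ℝ (Icc (0 : ι → ℝ) 1) ψ)
    (hti : IsTranslationInvariantOn (Icc (0 : ι → ℝ) 1) ψ) {u : ι → ℝ}
    (hu : u ∈ Icc (0 : ι → ℝ) 1) :
    IsLeast ((fun μ => μ ⬝ᵥ u + penalty (Icc 0 1) ψ μ) '' stdSimplex ℝ ι) (ψ u) := by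
  set F : (ι → ℝ) → (ι → ℝ) → ℝ := fun u μ => μ ⬝ᵥ u + penalty (Icc 0 1) ψ μ
  have hF : Continuous ↿F :=
    (continuous_snd.dotProduct continuous_fst).add
      ((continuous_penalty isCompact_Icc hcont).comp continuous_snd)
  have hinf : EqOn (fun u => sInf (F u '' stdSimplex ℝ ι)) ψ (Icc 0 1) :=
    EqOn.of_subset_closure (fun _ hv =>
        (isLeast_dotProduct_add_penalty_of_mem_interior hmono hcont hconc hti hv).csInf_eq)
      ((isCompact_stdSimplex ℝ ι).continuous_sInf hF).continuousOn hcont interior_subset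
      cube_subset_closure_interior
  obtain ⟨μ, hμ, -⟩ := (isLeast_dotProduct_add_penalty_of_mem_interior hmono hcont hconc hti
    half_mem_interior_cube).1
  rw [← hinf hu]
  exact ((isCompact_stdSimplex ℝ ι).image (hF.comp (Continuous.prodMk_right u))).isLeast_sInf
    ⟨_, μ, hμ, rfl⟩

end Cube

theorem stmt_15_general {n : ℕ} (ψ : (Fin n → ℝ) → ℝ)
    (hmono : ∀ u v : Fin n → ℝ, u ∈ Set.Icc (0 : Fin n → ℝ) 1 →
      v ∈ Set.Icc (0 : Fin n → ℝ) 1 → (∀ i, v i < u i) → ψ v < ψ u)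
    (hcont : ContinuousOn ψ (Set.Icc (0 : Fin n → ℝ) 1))
    (hconc : ∀ u v : Fin n → ℝ, u ∈ Set.Icc (0 : Fin n → ℝ) 1 →
      v ∈ Set.Icc (0 : Fin n → ℝ) 1 → ∀ α : ℝ, α ∈ Set.Icc (0 : ℝ) 1 →
      α * ψ u + (1 - α) * ψ v ≤ ψ (α • u + (1 - α) • v))
    (hti : ∀ u : Fin n → ℝ, u ∈ Set.Icc (0 : Fin n → ℝ) 1 → ∀ c : ℝ,
      (u + fun _ => c) ∈ Set.Icc (0 : Fin n → ℝ) 1 →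
      ψ (u + fun _ => c) = ψ u + c)
    (hdiag : ∀ c : ℝ, c ∈ Set.Icc (0 : ℝ) 1 → ψ (fun _ => c) = c) :
    ∃ φ : (Fin n → ℝ) → ℝ≥0∞,
      (∀ μ ν : Fin n → ℝ,
        μ ∈ {μ : Fin n → ℝ | (∀ i, 0 ≤ μ i) ∧ ∑ i, μ i = 1} →
        ν ∈ {μ : Fin n → ℝ | (∀ i, 0 ≤ μ i) ∧ ∑ i, μ i = 1} →
        ∀ α : ℝ, α ∈ Set.Icc (0 : ℝ) 1 →
        φ (α • μ + (1 - α) • ν) ≤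
          ENNReal.ofReal α * φ μ + ENNReal.ofReal (1 - α) * φ ν) ∧
      LowerSemicontinuousOn φ {μ : Fin n → ℝ | (∀ i, 0 ≤ μ i) ∧ ∑ i, μ i = 1} ∧
      (⨅ μ ∈ {μ : Fin n → ℝ | (∀ i, 0 ≤ μ i) ∧ ∑ i, μ i = 1}, φ μ) = 0 ∧
      (∀ u ∈ Set.Icc (0 : Fin n → ℝ) 1,
        IsLeast {r : EReal |
            ∃ μ ∈ {μ : Fin n → ℝ | (∀ i, 0 ≤ μ i) ∧ ∑ i, μ i = 1},
              r = ((∑ i, μ i * u i : ℝ) : EReal) + (φ μ : EReal)}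
          ((ψ u : ℝ) : EReal)) := by
  have hconcaveOn : ConcaveOn ℝ (Icc (0 : Fin n → ℝ) 1) ψ := by
    refine ⟨convex_Icc 0 1, fun u hu v hv a b ha hb hab => ?_⟩
    obtain rfl : b = 1 - a := by linarith
    exact hconc u v hu hv a ⟨ha, by linarith⟩
  have hvar (u) (hu : u ∈ Icc (0 : Fin n → ℝ) 1) :=
    isLeast_dotProduct_add_penalty hmono hcont hconcaveOn hti hu
  have hcoe (μ : Fin n → ℝ) :
      (ENNReal.ofReal (penalty (Icc 0 1) ψ μ) : EReal) = penalty (Icc 0 1) ψ μ := by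
    rw [EReal.coe_ennreal_ofReal, max_eq_left]
    have hψ0 : ψ 0 = 0 := hdiag 0 ⟨le_rfl, zero_le_one⟩
    simpa [hψ0] using le_penalty isCompact_Icc hcont ⟨le_rfl, zero_le_one⟩ μ
  refine ⟨fun μ => ENNReal.ofReal (penalty (Icc 0 1) ψ μ),
    fun μ ν _ _ α hα => (convexOn_penalty isCompact_Icc (nonempty_Icc.2 zero_le_one)
      hcont).ofReal_combo_le trivial trivial hα,
    (ENNReal.continuous_ofReal.comp (continuous_penalty isCompact_Icc hcont))
      |>.lowerSemicontinuous.lowerSemicontinuousOn _, ?_, fun u hu => ?_⟩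
  · obtain ⟨μ, hμ, hμ_eq⟩ := (hvar _ (interior_subset half_mem_interior_cube)).1
    dsimp only at hμ_eq
    rw [hdiag _ ⟨by norm_num, by norm_num⟩, show (fun _ => 1 / 2 : Fin n → ℝ) = (1 / 2 : ℝ) • 1
      by ext; simp, dotProduct_smul, dotProduct_one, hμ.2, smul_eq_mul] at hμ_eq
    refine le_antisymm ((iInf₂_le μ hμ).trans_eq (ENNReal.ofReal_eq_zero.2 ?_)) bot_le
    linarith
  · obtain ⟨⟨μ, hμ, hμ_eq⟩, hle⟩ := hvar u hu
    refine ⟨⟨μ, hμ, ?_⟩, ?_⟩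
    · rw [hcoe, ← EReal.coe_add]
      exact congrArg _ hμ_eq.symm
    · rintro _ ⟨ν, hν, rfl⟩
      rw [hcoe, ← EReal.coe_add, EReal.coe_le_coe_iff]
      exact hle ⟨ν, hν, rfl⟩

/-- Analytic core of the paper's Theorem 6 (variational representation): a
monotonic, continuous, concave, translation-invariant function on the unit
cube with `ψ(c·1) = c` admits a representation
`ψ(u) = min_{μ ∈ Δ_n} (Σ μ_i u_i + φ(μ))` for some grounded, convex, lower
semicontinuous penalty `φ : Δ_n → [0,∞]`, the minimum being attained. -/
theorem stmt_15 {n : ℕ} (hn : 1 ≤ n) (ψ : (Fin n → ℝ) → ℝ)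
    (hmono : ∀ u v : Fin n → ℝ, u ∈ Set.Icc (0 : Fin n → ℝ) 1 →
      v ∈ Set.Icc (0 : Fin n → ℝ) 1 → (∀ i, v i < u i) → ψ v < ψ u)
    (hcont : ContinuousOn ψ (Set.Icc (0 : Fin n → ℝ) 1))
    (hconc : ∀ u v : Fin n → ℝ, u ∈ Set.Icc (0 : Fin n → ℝ) 1 →
      v ∈ Set.Icc (0 : Fin n → ℝ) 1 → ∀ α : ℝ, α ∈ Set.Icc (0 : ℝ) 1 →
      α * ψ u + (1 - α) * ψ v ≤ ψ (α • u + (1 - α) • v))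
    (hti : ∀ u : Fin n → ℝ, u ∈ Set.Icc (0 : Fin n → ℝ) 1 → ∀ c : ℝ,
      (u + fun _ => c) ∈ Set.Icc (0 : Fin n → ℝ) 1 →
      ψ (u + fun _ => c) = ψ u + c)
    (hdiag : ∀ c : ℝ, c ∈ Set.Icc (0 : ℝ) 1 → ψ (fun _ => c) = c) :
    ∃ φ : (Fin n → ℝ) → ℝ≥0∞,
      (∀ μ ν : Fin n → ℝ,
        μ ∈ {μ : Fin n → ℝ | (∀ i, 0 ≤ μ i) ∧ ∑ i, μ i = 1} →
        ν ∈ {μ : Fin n → ℝ | (∀ i, 0 ≤ μ i) ∧ ∑ i, μ i = 1} →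
        ∀ α : ℝ, α ∈ Set.Icc (0 : ℝ) 1 →
        φ (α • μ + (1 - α) • ν) ≤
          ENNReal.ofReal α * φ μ + ENNReal.ofReal (1 - α) * φ ν) ∧
      LowerSemicontinuousOn φ {μ : Fin n → ℝ | (∀ i, 0 ≤ μ i) ∧ ∑ i, μ i = 1} ∧
      (⨅ μ ∈ {μ : Fin n → ℝ | (∀ i, 0 ≤ μ i) ∧ ∑ i, μ i = 1}, φ μ) = 0 ∧
      (∀ u ∈ Set.Icc (0 : Fin n → ℝ) 1,
        IsLeast {r : EReal |
            ∃ μ ∈ {μ : Fin n → ℝ | (∀ i, 0 ≤ μ i) ∧ ∑ i, μ i = 1},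
              r = ((∑ i, μ i * u i : ℝ) : EReal) + (φ μ : EReal)}
          ((ψ u : ℝ) : EReal)) :=
  stmt_15_general ψ hmono hcont hconc hti hdiag
end
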